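/- arXiv:1105.1944 — 12 statements merged into one kernel-verified Lean document; each statement's English description precedes it below -/
import Mathlib

section
/- Let f : [0,1] → ℝ be continuously differentiable, let r > 0, and suppose f(1) = 0. Then there is a constant C depending only on r such that ∫₀¹ s^{r-1} f(s)² ds ≤ C ∫₀¹ s^{r+1} f'(s)² ds. -/
open MeasureTheory intervalIntegral Set

/-!
Differentiating `s ^ r * f s ^ 2` and using `f 1 = 0` and `0 ^ r = 0` gives
`r * ∫ s ^ (r - 1) * f ^ 2 = -2 * ∫ s ^ r * f * f'`. The pointwise AM-GM bound
`-2 s^r f f' ≤ (r/2) s^(r-1) f² + (2/r) s^(r+1) f'²` lets the left-hand side absorb half of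
the right-hand side, which leaves the inequality with `C = 4 / r ^ 2`.
-/

theorem neg_two_mul_rpow_mul_le {r x : ℝ} (hr : 0 < r) (hx : 0 < x) (a b : ℝ) :
    -2 * (x ^ r * (a * b)) ≤ r / 2 * (x ^ (r - 1) * a ^ 2) + 2 / r * (x ^ (r + 1) * b ^ 2) := by
  have hxr : x ^ r = x ^ (r - 1) * x := by
    rw [← Real.rpow_add_one hx.ne', sub_add_cancel]
  have hxr1 : x ^ (r + 1) = x ^ (r - 1) * x ^ 2 := by
    rw [Real.rpow_add_one hx.ne', hxr]; ring
  rw [hxr, hxr1]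
  -- the difference of the two sides is `x ^ (r - 1) * (r * a + 2 * x * b) ^ 2 / (2 * r)`
  field_simp
  linarith [sq_nonneg (r * a + 2 * x * b)]

section

variable {r b : ℝ} {f f' : ℝ → ℝ}

theorem hasDerivAt_rpow_mul_sq {x : ℝ} (hx : 0 < x) (hf : HasDerivAt f (f' x) x) :
    HasDerivAt (fun s ↦ s ^ r * f s ^ 2)
      (r * (x ^ (r - 1) * f x ^ 2) + 2 * (x ^ r * (f x * f' x))) x :=
  ((Real.hasDerivAt_rpow_const (Or.inl hx.ne')).mul (hf.fun_pow 2)).congr_deriv (by ring)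

theorem intervalIntegrable_rpow_mul {p : ℝ} {g : ℝ → ℝ} (hp : -1 < p) (hb : 0 ≤ b)
    (hg : ContinuousOn g (Icc 0 b)) :
    IntervalIntegrable (fun s ↦ s ^ p * g s) volume 0 b :=
  (intervalIntegrable_rpow' hp).mul_continuousOn (by rwa [uIcc_of_le hb])

theorem integral_rpow_sub_one_mul_sq_eq (hr : 0 < r) (hb : 0 ≤ b)
    (hf : ∀ x ∈ Icc 0 b, HasDerivWithinAt f (f' x) (Icc 0 b) x)
    (hf' : ContinuousOn f' (Icc 0 b)) (hfb : f b = 0) :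
    r * ∫ s in 0..b, s ^ (r - 1) * f s ^ 2 = -2 * ∫ s in 0..b, s ^ r * (f s * f' s) := by
  have hcf : ContinuousOn f (Icc 0 b) := fun x hx ↦ (hf x hx).continuousWithinAt
  have hL := (intervalIntegrable_rpow_mul (p := r - 1) (by linarith) hb (hcf.fun_pow 2)).const_mul r
  have hM := (intervalIntegrable_rpow_mul (p := r) (by linarith) hb (hcf.fun_mul hf')).const_mul 2
  have hftc := integral_eq_sub_of_hasDerivAt_of_le hb
    ((Real.continuous_rpow_const hr.le).continuousOn.fun_mul (hcf.fun_pow 2))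
    (fun x hx ↦ hasDerivAt_rpow_mul_sq hx.1 ((hf x (Ioo_subset_Icc_self hx)).hasDerivAt
      (Icc_mem_nhds hx.1 hx.2))) (hL.add hM)
  rw [integral_add hL hM, intervalIntegral.integral_const_mul,
    intervalIntegral.integral_const_mul] at hftc
  simp only [hfb, Real.zero_rpow hr.ne'] at hftc
  linarith

end

theorem stmt_1 (r : ℝ) (hr : 0 < r) :
    ∃ C : ℝ, 0 < C ∧ ∀ (f f' : ℝ → ℝ),
      (∀ x ∈ Set.Icc (0:ℝ) 1, HasDerivWithinAt f (f' x) (Set.Icc 0 1) x) →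
      ContinuousOn f' (Set.Icc (0:ℝ) 1) →
      f 1 = 0 →
      ∫ s in (0:ℝ)..1, s ^ (r - 1) * (f s)^2 ≤ C * ∫ s in (0:ℝ)..1, s ^ (r + 1) * (f' s)^2 := by
  refine ⟨4 / r ^ 2, by positivity, fun f f' hf hf' hf1 ↦ ?_⟩
  have hcf : ContinuousOn f (Icc 0 1) := fun x hx ↦ (hf x hx).continuousWithinAt
  have hL := intervalIntegrable_rpow_mul (p := r - 1) (by linarith) zero_le_one (hcf.fun_pow 2)
  have hM := intervalIntegrable_rpow_mul (p := r) (by linarith) zero_le_one (hcf.fun_mul hf')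
  have hR := intervalIntegrable_rpow_mul (p := r + 1) (by linarith) zero_le_one (hf'.fun_pow 2)
  have hibp := integral_rpow_sub_one_mul_sq_eq hr zero_le_one hf hf' hf1
  have hamgm := integral_mono_on_of_le_Ioo zero_le_one (hM.const_mul (-2))
    ((hL.const_mul (r / 2)).add (hR.const_mul (2 / r)))
    fun x hx ↦ neg_two_mul_rpow_mul_le hr hx.1 (f x) (f' x)
  rw [integral_add (hL.const_mul _) (hR.const_mul _)] at hamgm
  simp only [intervalIntegral.integral_const_mul] at hamgm
  set L := ∫ s in (0:ℝ)..1, s ^ (r - 1) * f s ^ 2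
  set R := ∫ s in (0:ℝ)..1, s ^ (r + 1) * f' s ^ 2
  have hhalf : r / 2 * L ≤ 2 / r * R := by linarith
  calc L = 2 / r * (r / 2 * L) := by field_simp
    _ ≤ 2 / r * (2 / r * R) := by gcongr
    _ = 4 / r ^ 2 * R := by ring
end

section
/- Let f : [0,1] → ℝ be continuously differentiable, let r > 0, and suppose f(1) = 0. Then there is a constant C depending only on r such that sup_{0≤s≤1} s^r f(s)² ≤ C ∫₀¹ s^{r+1} f'(s)² ds. -/
open MeasureTheory intervalIntegral

open Set Real

/-!
By the fundamental theorem of calculus and `f 1 = 0`, `f s = -∫ x in s..1, f' x`. Cauchy–Schwarz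
with weight `x ^ (r + 1)` bounds its square by
`(∫ x in s..1, x ^ (-(r + 1))) * ∫ x in s..1, x ^ (r + 1) * f' x ^ 2`, and the first factor is at
most `s ^ (-r) / r`, which the factor `s ^ r` cancels; so `C = 1 / r`.
-/
theorem sq_integral_le_integral_inv_mul_integral_mul_sq {α : Type*} [MeasurableSpace α]
    {μ : Measure α} {w φ : α → ℝ} (hw : ∀ᵐ x ∂μ, 0 < w x)
    (hw_inv : Integrable (fun x => (w x)⁻¹) μ) (hφ : Integrable φ μ)
    (hwφ : Integrable (fun x => w x * φ x ^ 2) μ) :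
    (∫ x, φ x ∂μ) ^ 2 ≤ (∫ x, (w x)⁻¹ ∂μ) * ∫ x, w x * φ x ^ 2 ∂μ := by
  have hquad : ∀ t : ℝ,
      0 ≤ (∫ x, (w x)⁻¹ ∂μ) * (t * t) + 2 * (∫ x, φ x ∂μ) * t + ∫ x, w x * φ x ^ 2 ∂μ := by
    intro t
    have hlin : Integrable (fun x => t * t * (w x)⁻¹ + 2 * t * φ x) μ :=
      (hw_inv.const_mul _).add (hφ.const_mul _)
    calc 0 ≤ ∫ x, (t * t * (w x)⁻¹ + 2 * t * φ x + w x * φ x ^ 2) ∂μ := by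
          refine integral_nonneg_of_ae ?_
          filter_upwards [hw] with x hx
          have hsq : t * t * (w x)⁻¹ + 2 * t * φ x + w x * φ x ^ 2 =
              w x * (t * (w x)⁻¹ + φ x) ^ 2 := by
            field_simp
            ring
          rw [Pi.zero_apply, hsq]
          positivity
      _ = _ := by
          rw [integral_add hlin hwφ, integral_add (hw_inv.const_mul _) (hφ.const_mul _),
            MeasureTheory.integral_const_mul, MeasureTheory.integral_const_mul]
          ring
  have hdiscr := discrim_le_zero hquad
  rw [discrim] at hdiscr
  linarith

theorem integral_inv_rpow_add_one_le {r s : ℝ} (hr : 0 < r) (hs : 0 < s) :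
    ∫ x in s..1, (x ^ (r + 1))⁻¹ ≤ s ^ (-r) / r := by
  have hpos : ∀ x ∈ uIcc s 1, 0 < x := fun x hx => (lt_min hs one_pos).trans_le hx.1
  calc ∫ x in s..1, (x ^ (r + 1))⁻¹ = ∫ x in s..1, x ^ (-(r + 1)) :=
        integral_congr fun x hx => (rpow_neg (hpos x hx).le _).symm
    _ = (s ^ (-r) - 1) / r := by
        rw [integral_rpow (Or.inr ⟨by linarith, fun h => (hpos 0 h).false⟩),
          show -(r + 1) + 1 = -r by ring, one_rpow]
        field_simp
        ring
    _ ≤ s ^ (-r) / r := by gcongr; linarith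

theorem rpow_mul_sq_le_integral_rpow_mul_deriv_sq {r s : ℝ} {f f' : ℝ → ℝ} (hr : 0 < r)
    (hs : 0 < s) (hs1 : s ≤ 1) (hf : ∀ x ∈ Icc s 1, HasDerivWithinAt f (f' x) (Icc s 1) x)
    (hf' : ContinuousOn f' (Icc s 1)) (hf1 : f 1 = 0) :
    s ^ r * f s ^ 2 ≤ (∫ x in s..1, x ^ (r + 1) * f' x ^ 2) / r := by
  have hpos : ∀ x ∈ Icc s 1, 0 < x := fun x hx => hs.trans_le hx.1
  have hw : ContinuousOn (fun x : ℝ => x ^ (r + 1)) (Icc s 1) :=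
    (continuous_rpow_const (by linarith)).continuousOn
  have hFTC : ∫ x in s..1, f' x = -f s := by
    rw [integral_eq_sub_of_hasDerivAt_of_le hs1 (fun x hx => (hf x hx).continuousWithinAt)
      (fun x hx => (hf x (Ioo_subset_Icc_self hx)).hasDerivAt (Icc_mem_nhds hx.1 hx.2))
      (hf'.intervalIntegrable_of_Icc hs1), hf1, zero_sub]
  have hCS : (∫ x in s..1, f' x) ^ 2 ≤
      (∫ x in s..1, (x ^ (r + 1))⁻¹) * ∫ x in s..1, x ^ (r + 1) * f' x ^ 2 := by
    simp only [integral_of_le hs1]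
    refine sq_integral_le_integral_inv_mul_integral_mul_sq ?_
      ((hw.inv₀ fun x hx => (rpow_pos_of_pos (hpos x hx) _).ne').integrableOn_Icc.mono_set
        Ioc_subset_Icc_self)
      (hf'.integrableOn_Icc.mono_set Ioc_subset_Icc_self)
      ((hw.mul (hf'.pow 2)).integrableOn_Icc.mono_set Ioc_subset_Icc_self)
    filter_upwards [ae_restrict_mem measurableSet_Ioc] with x hx
    exact rpow_pos_of_pos (hs.trans hx.1) _
  have hsr : s ^ r * s ^ (-r) = 1 := by
    rw [rpow_neg hs.le, mul_inv_cancel₀ (rpow_pos_of_pos hs r).ne']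
  have hJ : 0 ≤ ∫ x in s..1, x ^ (r + 1) * f' x ^ 2 :=
    integral_nonneg hs1 fun x hx => mul_nonneg (rpow_pos_of_pos (hpos x hx) _).le (sq_nonneg _)
  calc s ^ r * f s ^ 2 = s ^ r * (∫ x in s..1, f' x) ^ 2 := by rw [hFTC, neg_sq]
    _ ≤ s ^ r * (s ^ (-r) / r * ∫ x in s..1, x ^ (r + 1) * f' x ^ 2) := by
        gcongr
        exact hCS.trans (mul_le_mul_of_nonneg_right (integral_inv_rpow_add_one_le hr hs) hJ)
    _ = (∫ x in s..1, x ^ (r + 1) * f' x ^ 2) / r := by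
        rw [← mul_assoc, mul_div_assoc', hsr]
        ring

theorem stmt_2 (r : ℝ) (hr : 0 < r) :
    ∃ C : ℝ, 0 < C ∧ ∀ (f f' : ℝ → ℝ),
      (∀ x ∈ Set.Icc (0:ℝ) 1, HasDerivWithinAt f (f' x) (Set.Icc 0 1) x) →
      ContinuousOn f' (Set.Icc (0:ℝ) 1) →
      f 1 = 0 →
      ∀ s ∈ Set.Icc (0:ℝ) 1,
        s ^ r * (f s)^2 ≤ C * ∫ x in (0:ℝ)..1, x ^ (r + 1) * (f' x)^2 := by
  refine ⟨1 / r, by positivity, fun f f' hf hf' hf1 s hs => ?_⟩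
  have hnonneg : ∀ x ∈ Icc (0 : ℝ) 1, 0 ≤ x ^ (r + 1) * f' x ^ 2 :=
    fun x hx => mul_nonneg (rpow_nonneg hx.1 _) (sq_nonneg _)
  rcases hs.1.eq_or_lt with rfl | hs0
  · rw [zero_rpow hr.ne', zero_mul]
    exact mul_nonneg (by positivity) (integral_nonneg zero_le_one hnonneg)
  have hsub : Icc s 1 ⊆ Icc 0 1 := Icc_subset_Icc_left hs.1
  calc s ^ r * f s ^ 2 ≤ (∫ x in s..1, x ^ (r + 1) * f' x ^ 2) / r :=
        rpow_mul_sq_le_integral_rpow_mul_deriv_sq hr hs0 hs.2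
          (fun x hx => (hf x (hsub hx)).mono hsub) (hf'.mono hsub) hf1
    _ ≤ (∫ x in (0 : ℝ)..1, x ^ (r + 1) * f' x ^ 2) / r := by
        gcongr
        have hint : ContinuousOn (fun x => x ^ (r + 1) * f' x ^ 2) (Icc 0 1) :=
          (continuous_rpow_const (by linarith)).continuousOn.mul (hf'.pow 2)
        refine integral_mono_interval hs.1 hs.2 le_rfl ?_ (hint.intervalIntegrable_of_Icc zero_le_one)
        filter_upwards [ae_restrict_mem measurableSet_Ioc] with x hx
        exact hnonneg x (Ioc_subset_Icc_self hx)
    _ = 1 / r * ∫ x in (0 : ℝ)..1, x ^ (r + 1) * f' x ^ 2 := by ring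
end

section
/- Let f : [0,1] → ℝ be continuously differentiable and let r > 0. Then there is a constant C depending only on r such that ∫₀¹ s^{r-1} f(s)² ds ≤ C ( ∫₀¹ s^r f(s)² ds + ∫₀¹ s^{r+1} f'(s)² ds ). -/
/-!
Let `w(s) = s^r - s^(r+1) = s^r (1 - s)`, which vanishes at both endpoints of `[0, 1]`.
Integrating `(w f²)' = (r s^(r-1) - (r+1) s^r) f² + 2 w f f'` over `[0, 1]` gives
`r ∫ s^(r-1) f² = (r+1) ∫ s^r f² - ∫ 2 w f f'`. Since `w² ≤ s^(2r) = s^(r-1) s^(r+1)`, AM-GM bounds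
the cross term by `(r/2) ∫ s^(r-1) f² + (2/r) ∫ s^(r+1) f'²`, and the first part is absorbed.
-/

open MeasureTheory intervalIntegral

open Set

lemma two_mul_mul_le_of_sq_le_mul {t X Y a b : ℝ} (hX : 0 ≤ X) (hY : 0 ≤ Y) (h : t ^ 2 ≤ X * Y) :
    2 * t * a * b ≤ X * a ^ 2 + Y * b ^ 2 := by
  rcases hX.eq_or_lt with rfl | hX
  · obtain rfl : t = 0 := by nlinarith
    nlinarith [sq_nonneg b]
  · have key : 0 ≤ X * (X * a ^ 2 + Y * b ^ 2 - 2 * t * a * b) := by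
      nlinarith [sq_nonneg (X * a - t * b), sq_nonneg b]
    linarith [(mul_nonneg_iff_of_pos_left hX).1 key]

lemma Real.rpow_sub_one_mul_rpow_add_one {s : ℝ} (hs : 0 < s) (r : ℝ) :
    s ^ (r - 1) * s ^ (r + 1) = (s ^ r) ^ 2 := by
  rw [← Real.rpow_add hs, ← Real.rpow_natCast, ← Real.rpow_mul hs.le]
  ring_nf

lemma hasDerivAt_rpow_sub_rpow_add_one (r : ℝ) {x : ℝ} (hx : x ≠ 0) :
    HasDerivAt (fun s : ℝ ↦ s ^ r - s ^ (r + 1)) (r * x ^ (r - 1) - (r + 1) * x ^ r) x := by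
  have h := (Real.hasDerivAt_rpow_const (p := r) (Or.inl hx)).sub
    (Real.hasDerivAt_rpow_const (p := r + 1) (Or.inl hx))
  rwa [add_sub_cancel_right] at h

lemma IntervalIntegrable.rpow_mul {a b p : ℝ} (hp : -1 < p) {g : ℝ → ℝ}
    (hg : ContinuousOn g (uIcc a b)) :
    IntervalIntegrable (fun s ↦ s ^ p * g s) volume a b :=
  (intervalIntegrable_rpow' hp).mul_continuousOn hg

noncomputable def weightedPoincareConst (r : ℝ) : ℝ := 2 * (r + 1) / r + 4 / r ^ 2

lemma weightedPoincareConst_pos {r : ℝ} (hr : 0 < r) : 0 < weightedPoincareConst r := by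
  unfold weightedPoincareConst; positivity

/-- The left side is the derivative of `-(2/r) (s^r - s^(r+1)) f(s)²` at `s`,
with `a = f s` and `b = f' s`. -/
lemma weightedPoincare_deriv_bound {r s : ℝ} (hr : 0 < r) (hs : s ∈ Ioo (0 : ℝ) 1) (a b : ℝ) :
    -(2 / r) * ((r * s ^ (r - 1) - (r + 1) * s ^ r) * a ^ 2 + (s ^ r - s ^ (r + 1)) * (2 * a * b))
      ≤ weightedPoincareConst r * (s ^ r * a ^ 2 + s ^ (r + 1) * b ^ 2) - s ^ (r - 1) * a ^ 2 := by
  obtain ⟨hs0, hs1⟩ := hs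
  have hle : s ^ (r + 1) ≤ s ^ r := Real.rpow_le_rpow_of_exponent_ge hs0 hs1.le (by linarith)
  have hX : 0 ≤ s ^ (r - 1) := Real.rpow_nonneg hs0.le _
  have hr0 : 0 ≤ s ^ r := Real.rpow_nonneg hs0.le _
  have hr1 : 0 ≤ s ^ (r + 1) := Real.rpow_nonneg hs0.le _
  have hsq : (2 / r * (s ^ r - s ^ (r + 1))) ^ 2 ≤ s ^ (r - 1) * (4 / r ^ 2 * s ^ (r + 1)) := by
    calc (2 / r * (s ^ r - s ^ (r + 1))) ^ 2 ≤ 4 / r ^ 2 * (s ^ r) ^ 2 := by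
          rw [mul_pow, div_pow]; gcongr <;> linarith
      _ = s ^ (r - 1) * (4 / r ^ 2 * s ^ (r + 1)) := by
          rw [← Real.rpow_sub_one_mul_rpow_add_one hs0]; ring
  have amgm := two_mul_mul_le_of_sq_le_mul hX (by positivity) hsq (a := -a) (b := b)
  have hC1 : 2 * (r + 1) / r ≤ weightedPoincareConst r := by
    unfold weightedPoincareConst; linarith [show 0 ≤ 4 / r ^ 2 by positivity]
  have hC2 : 4 / r ^ 2 ≤ weightedPoincareConst r := by
    unfold weightedPoincareConst; linarith [show 0 ≤ 2 * (r + 1) / r by positivity]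
  have hexp : -(2 / r) * ((r * s ^ (r - 1) - (r + 1) * s ^ r) * a ^ 2
        + (s ^ r - s ^ (r + 1)) * (2 * a * b))
      = -2 * s ^ (r - 1) * a ^ 2 + 2 * (r + 1) / r * (s ^ r * a ^ 2)
        + 2 * (2 / r * (s ^ r - s ^ (r + 1))) * (-a) * b := by
    field_simp; ring
  rw [hexp]
  nlinarith [mul_le_mul_of_nonneg_right hC1 (mul_nonneg hr0 (sq_nonneg a)),
    mul_le_mul_of_nonneg_right hC2 (mul_nonneg hr1 (sq_nonneg b))]

theorem integral_rpow_sub_one_mul_sq_le {r : ℝ} (hr : 0 < r) {f f' : ℝ → ℝ}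
    (hf : ∀ x ∈ Icc (0 : ℝ) 1, HasDerivWithinAt f (f' x) (Icc 0 1) x)
    (hf' : ContinuousOn f' (Icc (0 : ℝ) 1)) :
    ∫ s in (0 : ℝ)..1, s ^ (r - 1) * f s ^ 2 ≤ weightedPoincareConst r *
      ((∫ s in (0 : ℝ)..1, s ^ r * f s ^ 2) + ∫ s in (0 : ℝ)..1, s ^ (r + 1) * f' s ^ 2) := by
  have hfc : ContinuousOn f (Icc 0 1) := fun x hx ↦ (hf x hx).continuousWithinAt
  set g : ℝ → ℝ := fun s ↦ -(2 / r) * ((s ^ r - s ^ (r + 1)) * f s ^ 2)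
  have hg : ContinuousOn g (Icc 0 1) :=
    continuousOn_const.mul <| (((Real.continuous_rpow_const hr.le).sub
      (Real.continuous_rpow_const (by linarith))).continuousOn).mul (hfc.pow 2)
  have hg' : ∀ x ∈ Ioo (0 : ℝ) 1, HasDerivWithinAt g
      (-(2 / r) * ((r * x ^ (r - 1) - (r + 1) * x ^ r) * f x ^ 2
        + (x ^ r - x ^ (r + 1)) * (2 * f x * f' x))) (Ioi x) x := by
    intro x hx
    have hfx : HasDerivAt f (f' x) x :=
      (hf x (Ioo_subset_Icc_self hx)).hasDerivAt (Icc_mem_nhds hx.1 hx.2)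
    refine (((hasDerivAt_rpow_sub_rpow_add_one r hx.1.ne').mul (hfx.fun_pow 2)).const_mul
      (-(2 / r))).hasDerivWithinAt.congr_deriv ?_
    push_cast
    ring
  have hg0 : g 0 = 0 := by
    simp [g, Real.zero_rpow hr.ne', Real.zero_rpow (by linarith : r + 1 ≠ 0)]
  have hg1 : g 1 = 0 := by simp [g]
  rw [← uIcc_of_le zero_le_one] at hfc hf'
  have hA : IntervalIntegrable (fun s ↦ s ^ (r - 1) * f s ^ 2) volume 0 1 :=
    .rpow_mul (by linarith) (hfc.pow 2)
  have hB : IntervalIntegrable (fun s ↦ s ^ r * f s ^ 2) volume 0 1 :=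
    .rpow_mul (by linarith) (hfc.pow 2)
  have hE : IntervalIntegrable (fun s ↦ s ^ (r + 1) * f' s ^ 2) volume 0 1 :=
    .rpow_mul (by linarith) (hf'.pow 2)
  have hφ := ((hB.add hE).const_mul (weightedPoincareConst r)).sub hA
  have ftc := sub_le_integral_of_hasDeriv_right_of_le zero_le_one hg hg'
    ((intervalIntegrable_iff_integrableOn_Icc_of_le zero_le_one).1 hφ)
    fun x hx ↦ weightedPoincare_deriv_bound hr hx (f x) (f' x)
  rw [integral_sub ((hB.add hE).const_mul _) hA, intervalIntegral.integral_const_mul,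
    integral_add hB hE] at ftc
  linarith

theorem stmt_3 (r : ℝ) (hr : 0 < r) :
    ∃ C : ℝ, 0 < C ∧ ∀ (f f' : ℝ → ℝ),
      (∀ x ∈ Set.Icc (0:ℝ) 1, HasDerivWithinAt f (f' x) (Set.Icc 0 1) x) →
      ContinuousOn f' (Set.Icc (0:ℝ) 1) →
      ∫ s in (0:ℝ)..1, s ^ (r - 1) * (f s)^2 ≤
        C * ((∫ s in (0:ℝ)..1, s ^ r * (f s)^2) + ∫ s in (0:ℝ)..1, s ^ (r + 1) * (f' s)^2) :=
  ⟨weightedPoincareConst r, weightedPoincareConst_pos hr,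
    fun _ _ hf hf' ↦ integral_rpow_sub_one_mul_sq_le hr hf hf'⟩
end

section
/- Let f : [0,1] → ℝ be continuously differentiable and let r > 0. Then there is a constant C depending only on r such that sup_{0≤s≤1} s^r f(s)² ≤ C ( ∫₀¹ s^r f(s)² ds + ∫₀¹ s^{r+1} f'(s)² ds ). -/
/-!
For `0 < a ≤ b`, the Cauchy–Schwarz inequality with weight `x ^ (r + 1)` bounds `(f b - f a) ^ 2`
by `a ^ (-r) / r * ∫ x ^ (r + 1) * f' x ^ 2`. Since `s ≤ 2 * min s t` whenever `s ≤ 1 ≤ 2 * t`,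
this gives `s ^ r * f s ^ 2 ≤ 2 ^ (r + 1) * (t ^ r * f t ^ 2 + D / r)` for all `t ∈ [1/2, 1]`,
and averaging over `t` yields the claim.
-/

open MeasureTheory intervalIntegral Set

theorem sq_intervalIntegral_le_integral_inv_mul_integral_mul_sq {a b : ℝ} (hab : a ≤ b)
    {w φ : ℝ → ℝ} (hw : ∀ x ∈ Icc a b, 0 < w x) (hwc : ContinuousOn w (Icc a b))
    (hφ : ContinuousOn φ (Icc a b)) :
    (∫ x in a..b, φ x) ^ 2 ≤ (∫ x in a..b, (w x)⁻¹) * ∫ x in a..b, w x * φ x ^ 2 := by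
  have hint {g : ℝ → ℝ} (hg : ContinuousOn g (Icc a b)) : IntervalIntegrable g volume a b :=
    (uIcc_of_le hab ▸ hg).intervalIntegrable
  have hw_inv : IntervalIntegrable (fun x => (w x)⁻¹) volume a b :=
    hint (hwc.inv₀ fun x hx => (hw x hx).ne')
  -- `t ↦ ∫ w (φ - t / w)²` is a nonnegative quadratic polynomial in `t`.
  have hquad (t : ℝ) : 0 ≤ (∫ x in a..b, (w x)⁻¹) * (t * t) + (-2 * ∫ x in a..b, φ x) * t
      + ∫ x in a..b, w x * φ x ^ 2 := by
    have hexp : ∫ x in a..b, ((w x)⁻¹ * (t * t) + -2 * φ x * t + w x * φ x ^ 2) =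
        (∫ x in a..b, (w x)⁻¹) * (t * t) + (-2 * ∫ x in a..b, φ x) * t
          + ∫ x in a..b, w x * φ x ^ 2 := by
      rw [integral_add ((hw_inv.mul_const _).add ((hint hφ).const_mul _ |>.mul_const _))
          (hint (g := fun x => w x * φ x ^ 2) (hwc.mul (hφ.pow 2))),
        integral_add (hw_inv.mul_const _) ((hint hφ).const_mul _ |>.mul_const _),
        intervalIntegral.integral_mul_const, intervalIntegral.integral_mul_const,
        intervalIntegral.integral_const_mul]
    rw [← hexp]
    refine integral_nonneg hab fun x hx => ?_
    have hwx := hw x hx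
    have : (w x)⁻¹ * (t * t) + -2 * φ x * t + w x * φ x ^ 2 = w x * (φ x - t / w x) ^ 2 := by
      field_simp
      ring
    rw [this]
    positivity
  have := discrim_le_zero hquad
  rw [discrim] at this
  nlinarith

theorem integral_rpow_neg_one_sub_le {r a b : ℝ} (hr : 0 < r) (ha : 0 < a) (hab : a ≤ b) :
    ∫ x in a..b, x ^ (-r - 1) ≤ a ^ (-r) / r := by
  rw [integral_rpow (Or.inr ⟨by linarith, fun h => by linarith [(uIcc_of_le hab ▸ h).1]⟩),
    show -r - 1 + 1 = -r by ring, div_neg, ← neg_div, neg_sub]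
  gcongr
  exact sub_le_self _ (Real.rpow_nonneg (ha.le.trans hab) _)

theorem sq_sub_le_rpow_neg_div_mul_integral {r a b : ℝ} (hr : 0 < r) (ha : 0 < a) (hab : a ≤ b)
    {f f' : ℝ → ℝ} (hf : ∀ x ∈ Icc a b, HasDerivWithinAt f (f' x) (Icc a b) x)
    (hf' : ContinuousOn f' (Icc a b)) :
    (f b - f a) ^ 2 ≤ a ^ (-r) / r * ∫ x in a..b, x ^ (r + 1) * f' x ^ 2 := by
  have hpos : ∀ x ∈ Icc a b, 0 < x := fun x hx => ha.trans_le hx.1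
  have hftc : ∫ x in a..b, f' x = f b - f a :=
    integral_eq_sub_of_hasDerivAt_of_le hab (HasDerivWithinAt.continuousOn hf)
      (fun x hx => (hf x (Ioo_subset_Icc_self hx)).hasDerivAt (Icc_mem_nhds hx.1 hx.2))
      ((uIcc_of_le hab ▸ hf').intervalIntegrable)
  have hweight : ∫ x in a..b, (x ^ (r + 1))⁻¹ = ∫ x in a..b, x ^ (-r - 1) :=
    integral_congr fun x hx => by
      rw [uIcc_of_le hab] at hx
      rw [← Real.rpow_neg (hpos x hx).le, neg_add']
  calc (f b - f a) ^ 2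
      ≤ (∫ x in a..b, (x ^ (r + 1))⁻¹) * ∫ x in a..b, x ^ (r + 1) * f' x ^ 2 := by
        rw [← hftc]
        exact sq_intervalIntegral_le_integral_inv_mul_integral_mul_sq hab
          (fun x hx => Real.rpow_pos_of_pos (hpos x hx) _)
          (fun x hx => (Real.continuousAt_rpow_const x _
            (Or.inl (hpos x hx).ne')).continuousWithinAt) hf'
    _ ≤ a ^ (-r) / r * ∫ x in a..b, x ^ (r + 1) * f' x ^ 2 := by
        rw [hweight]
        gcongr
        · exact integral_nonneg hab fun x hx => by have := hpos x hx; positivity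
        · exact integral_rpow_neg_one_sub_le hr ha hab

theorem mul_le_intervalIntegral_of_forall_le {a b c : ℝ} {g : ℝ → ℝ} (hab : a ≤ b)
    (hg : IntervalIntegrable g volume a b) (h : ∀ x ∈ Icc a b, c ≤ g x) :
    (b - a) * c ≤ ∫ x in a..b, g x := by
  simpa using integral_mono_on hab intervalIntegrable_const hg h

section UnitInterval

variable {r : ℝ} {f f' : ℝ → ℝ}

theorem sq_sub_le_min_rpow_neg_div_mul_integral (hr : 0 < r)
    (hf : ∀ x ∈ Icc (0 : ℝ) 1, HasDerivWithinAt f (f' x) (Icc 0 1) x)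
    (hf' : ContinuousOn f' (Icc 0 1)) {s t : ℝ} (hs : s ∈ Ioc (0 : ℝ) 1) (ht : t ∈ Ioc (0 : ℝ) 1) :
    (f t - f s) ^ 2 ≤ min s t ^ (-r) / r * ∫ x in (0 : ℝ)..1, x ^ (r + 1) * f' x ^ 2 := by
  wlog hst : s ≤ t generalizing s t
  · rw [min_comm, ← neg_sub, neg_sq]
    exact this ht hs (le_of_not_ge hst)
  have hsub : Icc s t ⊆ Icc 0 1 := Icc_subset_Icc hs.1.le ht.2
  rw [min_eq_left hst]
  refine (sq_sub_le_rpow_neg_div_mul_integral hr hs.1 hst (fun x hx => (hf x (hsub hx)).mono hsub)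
    (hf'.mono hsub)).trans (mul_le_mul_of_nonneg_left ?_
    (div_nonneg (Real.rpow_nonneg hs.1.le _) hr.le))
  refine integral_mono_interval hs.1.le hst ht.2 ?_ ?_
  · filter_upwards [ae_restrict_mem measurableSet_Ioc] with x hx
    have := hx.1.le
    positivity
  · exact ((ContinuousOn.rpow_const continuousOn_id fun _ _ => Or.inr (by linarith)).mul
      (hf'.pow 2)).intervalIntegrable_of_Icc zero_le_one

theorem rpow_mul_sq_le_two_rpow_mul (hr : 0 < r)
    (hf : ∀ x ∈ Icc (0 : ℝ) 1, HasDerivWithinAt f (f' x) (Icc 0 1) x)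
    (hf' : ContinuousOn f' (Icc 0 1)) {s t : ℝ} (hs : s ∈ Icc (0 : ℝ) 1)
    (ht : t ∈ Icc (1 / 2 : ℝ) 1) :
    s ^ r * f s ^ 2 ≤
      2 ^ (r + 1) * (t ^ r * f t ^ 2 + (∫ x in (0 : ℝ)..1, x ^ (r + 1) * f' x ^ 2) / r) := by
  set D := ∫ x in (0 : ℝ)..1, x ^ (r + 1) * f' x ^ 2
  have ht0 : 0 < t := by linarith [ht.1]
  have hD : 0 ≤ D := integral_nonneg zero_le_one fun x hx => by have := hx.1; positivity
  rcases hs.1.eq_or_lt with rfl | hs0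
  · rw [Real.zero_rpow hr.ne', zero_mul]
    positivity
  have hmin : 0 < min s t := lt_min hs0 ht0
  have hs_le : s ≤ 2 * min s t := by
    rw [mul_min_of_nonneg _ _ zero_le_two]
    exact le_min (by linarith) (by linarith [hs.2, ht.1])
  have hst : s ^ r ≤ 2 ^ r * t ^ r := by
    rw [← Real.mul_rpow zero_le_two ht0.le]
    exact Real.rpow_le_rpow hs0.le (hs_le.trans (by gcongr; exact min_le_right _ _)) hr.le
  have hsmin : s ^ r * min s t ^ (-r) ≤ 2 ^ r := by
    rw [Real.rpow_neg hmin.le, ← div_eq_mul_inv, ← Real.div_rpow hs0.le hmin.le]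
    exact Real.rpow_le_rpow (by positivity) ((div_le_iff₀ hmin).2 hs_le) hr.le
  have hosc := sq_sub_le_min_rpow_neg_div_mul_integral hr hf hf' ⟨hs0, hs.2⟩ ⟨ht0, ht.2⟩
  calc s ^ r * f s ^ 2
      ≤ s ^ r * (2 * f t ^ 2 + 2 * (f t - f s) ^ 2) := by
        gcongr
        nlinarith [sq_nonneg (2 * f t - f s)]
    _ = 2 * (s ^ r * f t ^ 2) + 2 * (s ^ r * (f t - f s) ^ 2) := by ring
    _ ≤ 2 * (2 ^ r * t ^ r * f t ^ 2) + 2 * (s ^ r * (min s t ^ (-r) / r * D)) := by gcongr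
    _ = 2 * (2 ^ r * t ^ r * f t ^ 2) + 2 * (s ^ r * min s t ^ (-r) * (D / r)) := by ring
    _ ≤ 2 * (2 ^ r * t ^ r * f t ^ 2) + 2 * (2 ^ r * (D / r)) := by gcongr
    _ = 2 ^ (r + 1) * (t ^ r * f t ^ 2 + D / r) := by
        rw [Real.rpow_add_one two_ne_zero]
        ring

theorem rpow_mul_sq_le_two_rpow_mul_integral (hr : 0 < r)
    (hf : ∀ x ∈ Icc (0 : ℝ) 1, HasDerivWithinAt f (f' x) (Icc 0 1) x)
    (hf' : ContinuousOn f' (Icc 0 1)) {s : ℝ} (hs : s ∈ Icc (0 : ℝ) 1) :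
    s ^ r * f s ^ 2 ≤ 2 ^ (r + 1) * (2 * (∫ x in (0 : ℝ)..1, x ^ r * f x ^ 2)
      + (∫ x in (0 : ℝ)..1, x ^ (r + 1) * f' x ^ 2) / r) := by
  set D := ∫ x in (0 : ℝ)..1, x ^ (r + 1) * f' x ^ 2
  have hg : ContinuousOn (fun x : ℝ => x ^ r * f x ^ 2) (Icc 0 1) :=
    (ContinuousOn.rpow_const continuousOn_id fun _ _ => Or.inr hr.le).mul
      ((HasDerivWithinAt.continuousOn hf).pow 2)
  have hhalf : ∫ x in (1 / 2 : ℝ)..1, x ^ r * f x ^ 2 ≤ ∫ x in (0 : ℝ)..1, x ^ r * f x ^ 2 := by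
    refine integral_mono_interval (by norm_num) (by norm_num) le_rfl ?_
      (hg.intervalIntegrable_of_Icc zero_le_one)
    filter_upwards [ae_restrict_mem measurableSet_Ioc] with x hx
    have := hx.1.le
    positivity
  have h2 : (0 : ℝ) < 2 ^ (r + 1) := by positivity
  have havg := mul_le_intervalIntegral_of_forall_le (by norm_num : (1 / 2 : ℝ) ≤ 1)
    ((hg.mono (Icc_subset_Icc (by norm_num) le_rfl)).intervalIntegrable_of_Icc (by norm_num))
    (c := s ^ r * f s ^ 2 / 2 ^ (r + 1) - D / r) fun t ht => by
      have := rpow_mul_sq_le_two_rpow_mul hr hf hf' hs ht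
      rw [sub_le_iff_le_add, div_le_iff₀ h2]
      linarith
  rw [← div_le_iff₀' h2]
  linarith

end UnitInterval

theorem stmt_4 (r : ℝ) (hr : 0 < r) :
    ∃ C : ℝ, 0 < C ∧ ∀ (f f' : ℝ → ℝ),
      (∀ x ∈ Set.Icc (0:ℝ) 1, HasDerivWithinAt f (f' x) (Set.Icc 0 1) x) →
      ContinuousOn f' (Set.Icc (0:ℝ) 1) →
      ∀ s ∈ Set.Icc (0:ℝ) 1,
        s ^ r * (f s)^2 ≤
          C * ((∫ x in (0:ℝ)..1, x ^ r * (f x)^2) + ∫ x in (0:ℝ)..1, x ^ (r + 1) * (f' x)^2) := by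
  refine ⟨2 ^ (r + 1) * (2 + 1 / r), by positivity, fun f f' hf hf' s hs => ?_⟩
  set A := ∫ x in (0:ℝ)..1, x ^ r * f x ^ 2
  set D := ∫ x in (0:ℝ)..1, x ^ (r + 1) * f' x ^ 2
  have hA : 0 ≤ A := integral_nonneg zero_le_one fun x hx => by have := hx.1; positivity
  have hD : 0 ≤ D := integral_nonneg zero_le_one fun x hx => by have := hx.1; positivity
  calc s ^ r * f s ^ 2 ≤ 2 ^ (r + 1) * (2 * A + D / r) :=
        rpow_mul_sq_le_two_rpow_mul_integral hr hf hf' hs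
    _ ≤ 2 ^ (r + 1) * ((2 + 1 / r) * (A + D)) := by
        gcongr
        rw [div_eq_mul_one_div D r]
        nlinarith [div_nonneg hA hr.le, one_div_pos.2 hr]
    _ = 2 ^ (r + 1) * (2 + 1 / r) * (A + D) := by ring
end

section
/- The function f(s) = arcsinh(ln s) on (0,1], extended by f(1) = 0, satisfies ∫₀¹ f(s)² ds < ∞ and ∫₀¹ s f'(s)² ds < ∞, while ∫₀¹ f(s)²/s ds = ∞ and sup_{s∈(0,1]} |f(s)| = ∞. -/
/-! Since `|arsinh x| ≤ |x|` and `log² s = O(s^(-1/2))` at `0`, `f²` is integrable on `(0, 1]`.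
The weighted energy density `s f'(s)² = 1 / (s (1 + log² s))` is the nonnegative derivative of
`arctan (log s)`, which tends to `-π/2` at `0⁺`, so it is integrable as well. On the other hand
`|f(s)| → ∞` as `s → 0`: this makes `f` unbounded, and since `f² ≥ 1` near `0` the integral of
`f² / s` diverges like that of `1 / s`. -/

open MeasureTheory Filter Set Real Topology Asymptotics

theorem Filter.Tendsto.not_bddAbove_image {α β : Type*} [Preorder β] [NoMaxOrder β]
    {f : α → β} {l : Filter α} [l.NeBot] {s : Set α} (hf : Tendsto f l atTop) (hs : s ∈ l) :
    ¬BddAbove (f '' s) := by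
  rintro ⟨M, hM⟩
  obtain ⟨x, hxs, hMx⟩ := ((eventually_mem_set.2 hs).and (hf.eventually_gt_atTop M)).exists
  exact (hM (mem_image_of_mem f hxs)).not_gt hMx

theorem integrableOn_Ioc_deriv_of_nonneg_of_tendsto {g g' : ℝ → ℝ} {a b l : ℝ}
    (hcont : ContinuousOn g (Ioc a b)) (hlim : Tendsto g (𝓝[>] a) (𝓝 l))
    (hderiv : ∀ x ∈ Ioo a b, HasDerivAt g (g' x) x) (hpos : ∀ x ∈ Ioo a b, 0 ≤ g' x) :
    IntegrableOn g' (Ioc a b) := by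
  rcases lt_or_ge a b with hab | hba
  swap
  · simp [Ioc_eq_empty_of_le hba]
  have hcont' : ContinuousOn (Function.update g a l) (Icc a b) := by
    intro x hx
    rcases eq_or_ne x a with rfl | hxa
    · refine continuousWithinAt_update_same.2 (hlim.mono_left (nhdsWithin_mono _ ?_))
      exact fun y hy => lt_of_le_of_ne hy.1.1 (Ne.symm hy.2)
    · rw [continuousWithinAt_update_of_ne hxa, ← Ioc_insert_left hab.le,
        continuousWithinAt_insert]
      exact hcont x ⟨lt_of_le_of_ne hx.1 (Ne.symm hxa), hx.2⟩
  refine intervalIntegral.integrableOn_deriv_of_nonneg hcont' (fun x hx => ?_) hpos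
  refine (hderiv x hx).congr_of_eventuallyEq ?_
  filter_upwards [eventually_ne_nhds hx.1.ne'] with y hy
  exact Function.update_of_ne hy _ _

namespace Real

theorem abs_arsinh_le_abs (x : ℝ) : |arsinh x| ≤ |x| := by
  wlog hx : 0 ≤ x generalizing x
  · simpa [arsinh_neg] using this (-x) (by linarith)
  rw [abs_of_nonneg (arsinh_nonneg_iff.2 hx), abs_of_nonneg hx]
  simpa using arsinh_le_arsinh.2 (self_le_sinh_iff.2 hx)

theorem tendsto_arsinh_atBot : Tendsto arsinh atBot atBot :=
  arsinh_strictMono.monotone.tendsto_atBot_atBot fun b => ⟨sinh b, (arsinh_sinh b).le⟩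

theorem tendsto_abs_arsinh_log_nhdsNE_zero :
    Tendsto (fun s => |arsinh (log s)|) (𝓝[≠] 0) atTop :=
  tendsto_abs_atBot_atTop.comp (tendsto_arsinh_atBot.comp tendsto_log_nhdsNE_zero)

theorem log_sq_le_of_mem_Ioc {x : ℝ} (hx : x ∈ Ioc 0 1) :
    log x ^ 2 ≤ 16 * x ^ (-(1 / 2) : ℝ) := by
  obtain ⟨hx0, hx1⟩ := hx
  have hlt : |log x * x ^ (1 / 4 : ℝ)| < 4 := by
    simpa using abs_log_mul_self_rpow_lt x (1 / 4) hx0 hx1 (by norm_num)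
  have hsq : (log x * x ^ (1 / 4 : ℝ)) ^ 2 ≤ 16 := by
    nlinarith [abs_lt.1 hlt]
  calc log x ^ 2 = (log x * x ^ (1 / 4 : ℝ)) ^ 2 * x ^ (-(1 / 2) : ℝ) := by
        rw [mul_pow, ← rpow_natCast (x ^ _), ← rpow_mul hx0.le, mul_assoc, ← rpow_add hx0]
        norm_num
    _ ≤ 16 * x ^ (-(1 / 2) : ℝ) := by gcongr

theorem integrableOn_log_sq_Ioc : IntegrableOn (fun x => log x ^ 2) (Ioc 0 1) := by
  have hmaj : IntegrableOn (fun x : ℝ => 16 * x ^ (-(1 / 2) : ℝ)) (Ioc 0 1) := by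
    refine Integrable.const_mul ?_ 16
    rw [← IntegrableOn, integrableOn_Ioc_iff_integrableOn_Ioo,
      intervalIntegral.integrableOn_Ioo_rpow_iff one_pos]
    norm_num
  refine hmaj.mono' (by fun_prop) ?_
  filter_upwards [ae_restrict_mem measurableSet_Ioc] with x hx
  rw [norm_of_nonneg (sq_nonneg _)]
  exact log_sq_le_of_mem_Ioc hx

theorem hasDerivAt_arctan_log {x : ℝ} (hx : 0 < x) :
    HasDerivAt (fun t => arctan (log t)) ((1 + log x ^ 2)⁻¹ * x⁻¹) x :=
  (hasDerivAt_arctan' (log x)).comp x (hasDerivAt_log hx.ne')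

theorem mul_deriv_arsinh_log_sq {x : ℝ} (hx : 0 < x) :
    x * deriv (fun t => arsinh (log t)) x ^ 2 = (1 + log x ^ 2)⁻¹ * x⁻¹ := by
  rw [((hasDerivAt_log hx.ne').arsinh).deriv, smul_eq_mul, mul_pow, inv_pow,
    sq_sqrt (by positivity)]
  field_simp

end Real

theorem stmt_5 :
    MeasureTheory.IntegrableOn (fun s : ℝ => (Real.arsinh (Real.log s))^2) (Set.Ioc 0 1) ∧
    MeasureTheory.IntegrableOn
      (fun s : ℝ => s * (deriv (fun t : ℝ => Real.arsinh (Real.log t)) s)^2) (Set.Ioc 0 1) ∧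
    ¬ MeasureTheory.IntegrableOn (fun s : ℝ => (Real.arsinh (Real.log s))^2 / s) (Set.Ioc 0 1) ∧
    ¬ BddAbove ((fun s : ℝ => |Real.arsinh (Real.log s)|) '' Set.Ioc 0 1) := by
  have hf := tendsto_abs_arsinh_log_nhdsNE_zero
  refine ⟨?_, ?_, ?_, ?_⟩
  · have hmeas : Measurable fun s => arsinh (log s) ^ 2 :=
      (continuous_arsinh.measurable.comp measurable_log).pow_const 2
    refine integrableOn_log_sq_Ioc.mono' hmeas.aestronglyMeasurable (.of_forall fun x => ?_)
    simpa [sq_abs] using pow_le_pow_left₀ (abs_nonneg _) (abs_arsinh_le_abs (log x)) 2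
  · refine integrableOn_Ioc_deriv_of_nonneg_of_tendsto (l := -(π / 2)) ?_
      ((tendsto_arctan_atBot.mono_right nhdsWithin_le_nhds).comp tendsto_log_nhdsGT_zero)
      (fun x hx => by rw [mul_deriv_arsinh_log_sq hx.1]; exact hasDerivAt_arctan_log hx.1)
      (fun x hx => by have := hx.1; positivity)
    exact continuous_arctan.comp_continuousOn (continuousOn_log.mono fun x hx => hx.1.ne')
  · rw [← intervalIntegrable_iff_integrableOn_Ioc_of_le zero_le_one]
    refine not_intervalIntegrable_of_sub_inv_isBigO_punctured (c := 0) (.of_bound 1 ?_)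
      zero_ne_one (by simp)
    filter_upwards [hf.eventually_ge_atTop 1] with x hx
    rw [sub_zero, norm_inv, norm_div, norm_pow, one_mul, norm_eq_abs, inv_eq_one_div]
    gcongr
    exact one_le_pow₀ hx
  · exact (hf.mono_left (nhdsGT_le_nhdsNE 0)).not_bddAbove_image (Ioc_mem_nhdsGT one_pos)
end

section
/- For all natural numbers n, k with 1 ≤ k ≤ n and all real p, q > 0, the quantity s_k^{(p)} = Γ(k+p)/(n^p Γ(k)) satisfies s_k^{(p)} ≤ s_k^{(p+q)}/s_k^{(q)} ≤ (Γ(p+q+1)/(Γ(p+1)Γ(q+1))) · s_k^{(p)}. -/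
/-!
With `s r = risingWeight n k r` and `R = gammaRatio p q`, one has `s (p + q) / s q = R k * s p`.
Log-convexity of `Γ` gives `1 ≤ R x`, and `Γ(x + 1) = x Γ(x)` gives
`R (x + 1) = R x · x (x + p + q) / ((x + p) (x + q)) ≤ R x`, so `R k ≤ R 1`.
-/

open Real

namespace Real

noncomputable def gammaRatio (p q x : ℝ) : ℝ :=
  Gamma (x + p + q) * Gamma x / (Gamma (x + p) * Gamma (x + q))

noncomputable def risingWeight (n x r : ℝ) : ℝ :=
  Gamma (x + r) / (n ^ r * Gamma x)

variable {n x p q r : ℝ}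

theorem Gamma_add_mul_Gamma_add_le (hx : 0 < x) (hp : 0 < p) (hq : 0 < q) :
    Gamma (x + p) * Gamma (x + q) ≤ Gamma x * Gamma (x + p + q) := by
  have hpq : 0 < p + q := by positivity
  have hxpq : 0 < x + p + q := by positivity
  have hsum : q / (p + q) + p / (p + q) = 1 := by field_simp; ring
  -- `x + p` and `x + q` are the convex combinations of `x` and `x + p + q` with weights `q, p`
  -- and `p, q` (divided by `p + q`).
  have hp' : Gamma (x + p) ≤ Gamma x ^ (q / (p + q)) * Gamma (x + p + q) ^ (p / (p + q)) := by
    convert Gamma_mul_add_mul_le_rpow_Gamma_mul_rpow_Gamma hx hxpq (by positivity)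
      (by positivity) hsum using 2
    field_simp; ring
  have hq' : Gamma (x + q) ≤ Gamma x ^ (p / (p + q)) * Gamma (x + p + q) ^ (q / (p + q)) := by
    convert Gamma_mul_add_mul_le_rpow_Gamma_mul_rpow_Gamma hx hxpq (by positivity)
      (by positivity) ((add_comm _ _).trans hsum) using 2
    field_simp; ring
  have hΓx := Gamma_pos_of_pos hx
  have hΓxpq := Gamma_pos_of_pos hxpq
  calc Gamma (x + p) * Gamma (x + q)
      ≤ (Gamma x ^ (q / (p + q)) * Gamma (x + p + q) ^ (p / (p + q))) *
          (Gamma x ^ (p / (p + q)) * Gamma (x + p + q) ^ (q / (p + q))) :=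
        mul_le_mul hp' hq' (Gamma_pos_of_pos (by positivity)).le (by positivity)
    _ = Gamma x ^ (q / (p + q) + p / (p + q)) *
          Gamma (x + p + q) ^ (q / (p + q) + p / (p + q)) := by
        rw [rpow_add hΓx, rpow_add hΓxpq]; ring
    _ = Gamma x * Gamma (x + p + q) := by rw [hsum, rpow_one, rpow_one]

theorem one_le_gammaRatio (hx : 0 < x) (hp : 0 < p) (hq : 0 < q) : 1 ≤ gammaRatio p q x := by
  have : 0 < Gamma (x + p) * Gamma (x + q) :=
    mul_pos (Gamma_pos_of_pos (by positivity)) (Gamma_pos_of_pos (by positivity))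
  rw [gammaRatio, one_le_div this]
  linarith [Gamma_add_mul_Gamma_add_le hx hp hq]

theorem gammaRatio_add_one (hx : 0 < x) (hp : 0 ≤ p) (hq : 0 ≤ q) :
    gammaRatio p q (x + 1) = (x + p + q) * x / ((x + p) * (x + q)) * gammaRatio p q x := by
  have hΓp := (Gamma_pos_of_pos (show 0 < x + p by positivity)).ne'
  have hΓq := (Gamma_pos_of_pos (show 0 < x + q by positivity)).ne'
  have hxp : x + p ≠ 0 := by positivity
  have hxq : x + q ≠ 0 := by positivity
  rw [gammaRatio, gammaRatio, show x + 1 + p + q = x + p + q + 1 by ring,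
    show x + 1 + p = x + p + 1 by ring, show x + 1 + q = x + q + 1 by ring,
    Gamma_add_one (by positivity), Gamma_add_one hx.ne', Gamma_add_one hxp, Gamma_add_one hxq]
  field_simp

theorem gammaRatio_add_one_le (hx : 0 < x) (hp : 0 ≤ p) (hq : 0 ≤ q) :
    gammaRatio p q (x + 1) ≤ gammaRatio p q x := by
  have hfactor : (x + p + q) * x / ((x + p) * (x + q)) ≤ 1 := by
    rw [div_le_one (by positivity)]
    nlinarith [mul_nonneg hp hq]
  have hR : 0 ≤ gammaRatio p q x := by
    unfold gammaRatio
    have := Gamma_pos_of_pos hx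
    have := Gamma_pos_of_pos (show 0 < x + p + q by positivity)
    have := Gamma_pos_of_pos (show 0 < x + p by positivity)
    have := Gamma_pos_of_pos (show 0 < x + q by positivity)
    positivity
  rw [gammaRatio_add_one hx hp hq]
  exact mul_le_of_le_one_left hR hfactor

theorem gammaRatio_natCast_le_gammaRatio_one (hp : 0 ≤ p) (hq : 0 ≤ q) {k : ℕ}
    (hk : 1 ≤ k) :
    gammaRatio p q k ≤ gammaRatio p q 1 := by
  induction k, hk using Nat.le_induction with
  | base => simp
  | succ m hm ih =>
    push_cast
    exact (gammaRatio_add_one_le (by positivity) hp hq).trans ih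

theorem gammaRatio_one (p q : ℝ) :
    gammaRatio p q 1 = Gamma (p + q + 1) / (Gamma (p + 1) * Gamma (q + 1)) := by
  simp only [gammaRatio, Gamma_one, mul_one]
  ring_nf

theorem risingWeight_add_div_risingWeight (hn : 0 < n) (hx : 0 < x) (hp : 0 ≤ p) (hq : 0 ≤ q) :
    risingWeight n x (p + q) / risingWeight n x q = gammaRatio p q x * risingWeight n x p := by
  have := (Gamma_pos_of_pos hx).ne'
  have := (Gamma_pos_of_pos (show 0 < x + p by positivity)).ne'
  have := (Gamma_pos_of_pos (show 0 < x + q by positivity)).ne'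
  have := (rpow_pos_of_pos hn p).ne'
  have := (rpow_pos_of_pos hn q).ne'
  simp only [risingWeight, gammaRatio, rpow_add hn, ← add_assoc]
  field_simp

theorem risingWeight_nonneg (hn : 0 < n) (hx : 0 < x) (hr : 0 ≤ r) :
    0 ≤ risingWeight n x r := by
  have := Gamma_pos_of_pos hx
  have := Gamma_pos_of_pos (show 0 < x + r by positivity)
  have := rpow_pos_of_pos hn r
  unfold risingWeight
  positivity

end Real

theorem stmt_6 (n k : ℕ) (hk : 1 ≤ k) (hkn : k ≤ n) (p q : ℝ) (hp : 0 < p) (hq : 0 < q) :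
    let s : ℝ → ℝ := fun r => Real.Gamma ((k : ℝ) + r) / ((n : ℝ) ^ r * Real.Gamma k)
    s p ≤ s (p + q) / s q ∧
      s (p + q) / s q ≤
        (Real.Gamma (p + q + 1) / (Real.Gamma (p + 1) * Real.Gamma (q + 1))) * s p := by
  intro s
  have hx : 0 < (k : ℝ) := by exact_mod_cast hk
  have hn : 0 < (n : ℝ) := by exact_mod_cast hk.trans hkn
  have hs : 0 ≤ s p := risingWeight_nonneg hn hx hp.le
  rw [show s (p + q) / s q = gammaRatio p q k * s p from
    risingWeight_add_div_risingWeight hn hx hp.le hq.le]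
  refine ⟨le_mul_of_one_le_left hs (one_le_gammaRatio hx hp hq), ?_⟩
  rw [← gammaRatio_one]
  exact mul_le_mul_of_nonneg_right (gammaRatio_natCast_le_gammaRatio_one hp.le hq.le hk) hs
end

section
/- Let κ : [0,1] → ℝ be continuous and nonnegative, and let G : [0,1]×[0,1] → ℝ be the Green function for the operator σ ↦ σ'' − κ(s)² σ with boundary conditions σ(0) = 0, σ'(1) = 0 (i.e., for each x, G(·,x) solves G_ss − κ² G = −δ(s−x), G(0,x)=0, G_s(1,x)=0). Then G(s,x) > 0 whenever x > 0 and 0 < s ≤ 1, and for 0 < x < 1, ∂_s G(s,x) > 0 for 0 < s < x and ∂_s G(s,x) ≤ 0 for x < s < 1. -/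
/-!
Away from `x`, `g'' = κ² g` gives `(g g')' = g'² + κ² g² ≥ 0`, so `g g'` is nondecreasing on
each side of `x`. Since `g 0 = 0` and `g' 1 = 0`, this makes `g g' ≥ 0` on `[0, x)` and
`g g' ≤ 0` on `(x, 1]`; hence `g²` increases up to `x` and decreases after it. A zero of `g` in
`(0, 1]` thus makes `g` vanish on an interval, then (uniqueness for the linear ODE, `κ` being
continuous) on a whole side of `x`, and by continuity at `x`. But `g x = 0` forces `g ≡ 0`,
which contradicts the unit jump of `g'` at `x`. So `g` has constant sign on `(0, 1]`; were it
negative, the signs of `g g'` would make `g' ≤ 0` left and `g' ≥ 0` right of `x`, again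
contradicting the jump. Once `g > 0`, the signs of `g'` are those of `g g'`, with strictness
left of `x` from convexity of `g`.
-/

open Filter

open Set Topology

section LinearSecondOrder

variable {q g g' : ℝ → ℝ} {D : Set ℝ}

theorem monotoneOn_mul_deriv (hD : Convex ℝ D) (hc : ContinuousOn (fun t => g t * g' t) D)
    (hg : ∀ t ∈ interior D, HasDerivAt g (g' t) t)
    (hg' : ∀ t ∈ interior D, HasDerivAt g' (q t * g t) t)
    (hq : ∀ t ∈ interior D, 0 ≤ q t) :
    MonotoneOn (fun t => g t * g' t) D :=
  monotoneOn_of_hasDerivWithinAt_nonneg hD hc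
    (fun t ht => ((hg t ht).mul (hg' t ht)).hasDerivWithinAt)
    (fun t ht => add_nonneg (mul_self_nonneg _)
      (by rw [mul_left_comm]; exact mul_nonneg (hq t ht) (mul_self_nonneg _)))

theorem HasDerivAt.fun_sq {t : ℝ} (hg : HasDerivAt g (g' t) t) :
    HasDerivAt (fun s => g s ^ 2) (2 * (g t * g' t)) t := by
  simpa [mul_assoc] using hg.fun_pow 2

theorem monotoneOn_sq_of_mul_deriv_nonneg (hD : Convex ℝ D) (hc : ContinuousOn g D)
    (hg : ∀ t ∈ interior D, HasDerivAt g (g' t) t)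
    (h : ∀ t ∈ interior D, 0 ≤ g t * g' t) : MonotoneOn (fun t => g t ^ 2) D :=
  monotoneOn_of_hasDerivWithinAt_nonneg hD (hc.pow 2)
    (fun t ht => (hg t ht).fun_sq.hasDerivWithinAt)
    (fun t ht => mul_nonneg zero_le_two (h t ht))

theorem antitoneOn_sq_of_mul_deriv_nonpos (hD : Convex ℝ D) (hc : ContinuousOn g D)
    (hg : ∀ t ∈ interior D, HasDerivAt g (g' t) t)
    (h : ∀ t ∈ interior D, g t * g' t ≤ 0) : AntitoneOn (fun t => g t ^ 2) D :=
  antitoneOn_of_hasDerivWithinAt_nonpos hD (hc.pow 2)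
    (fun t ht => (hg t ht).fun_sq.hasDerivWithinAt)
    (fun t ht => mul_nonpos_of_nonneg_of_nonpos zero_le_two (h t ht))

theorem eqOn_zero_of_hasDerivWithinAt_of_eq_zero {a b t₀ : ℝ} (hq : ContinuousOn q (Icc a b))
    (hg : ∀ t ∈ Icc a b, HasDerivWithinAt g (g' t) (Icc a b) t)
    (hg' : ∀ t ∈ Icc a b, HasDerivWithinAt g' (q t * g t) (Icc a b) t)
    (ht₀ : t₀ ∈ Icc a b) (h0 : g t₀ = 0) (h0' : g' t₀ = 0) : EqOn g 0 (Icc a b) := by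
  obtain ⟨C, hC⟩ := isCompact_Icc.exists_bound_of_continuousOn hq
  let v : ℝ → ℝ × ℝ → ℝ × ℝ := fun t p => (p.2, q t • p.1)
  have hv : ∀ t ∈ Icc a b, LipschitzOnWith (max 1 C.toNNReal) (v t) univ := fun t ht =>
    (LipschitzWith.prod_snd.prodMk ((lipschitzWith_smul (q t)).comp LipschitzWith.prod_fst)
      |>.weaken (max_le_max le_rfl
        ((Real.le_toNNReal_iff_coe_le ((norm_nonneg _).trans (hC t ht))).2
          (by simpa using hC t ht)))).lipschitzOnWith
  have hsol : ∀ t ∈ Icc a b,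
      HasDerivWithinAt (fun t => (g t, g' t)) (v t (g t, g' t)) (Icc a b) t :=
    fun t ht => (hg t ht).prodMk (hg' t ht)
  have hzero : ∀ t (s : Set ℝ), HasDerivWithinAt (fun _ => (0 : ℝ × ℝ)) (v t 0) s t :=
    fun t s => by
      rw [show v t 0 = 0 by ext <;> simp [v]]
      exact hasDerivWithinAt_const t s 0
  have hcont : ContinuousOn (fun t => (g t, g' t)) (Icc a b) :=
    fun t ht => (hsol t ht).continuousWithinAt
  have heq : (fun t => (g t, g' t)) t₀ = (fun _ => (0 : ℝ × ℝ)) t₀ := by simp [h0, h0']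
  suffices EqOn (fun t => (g t, g' t)) (fun _ => 0) (Icc a b) from
    fun t ht => congrArg Prod.fst (this ht)
  rw [← Icc_union_Icc_eq_Icc ht₀.1 ht₀.2]
  refine EqOn.union ?_ ?_
  · exact ODE_solution_unique_of_mem_Icc_left (s := fun _ => univ)
      (fun t ht => hv t ⟨ht.1.le, ht.2.trans ht₀.2⟩)
      (hcont.mono (Icc_subset_Icc_right ht₀.2))
      (fun t ht => (hsol t ⟨ht.1.le, ht.2.trans ht₀.2⟩).mono_of_mem_nhdsWithin
        (Icc_mem_nhdsLE_of_mem ⟨ht.1, ht.2.trans ht₀.2⟩))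
      (fun _ _ => mem_univ _) continuousOn_const (fun t _ => hzero t _)
      (fun _ _ => mem_univ _) heq
  · exact ODE_solution_unique_of_mem_Icc_right (s := fun _ => univ)
      (fun t ht => hv t ⟨ht₀.1.trans ht.1, ht.2.le⟩)
      (hcont.mono (Icc_subset_Icc_left ht₀.1))
      (fun t ht => (hsol t ⟨ht₀.1.trans ht.1, ht.2.le⟩).mono_of_mem_nhdsWithin
        (Icc_mem_nhdsGE_of_mem ⟨ht₀.1.trans ht.1, ht.2⟩))
      (fun _ _ => mem_univ _) continuousOn_const (fun t _ => hzero t _)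
      (fun _ _ => mem_univ _) heq

end LinearSecondOrder

theorem IsPreconnected.forall_pos_or_forall_neg {X : Type*} [TopologicalSpace X] {s : Set X}
    (hs : IsPreconnected s) {f : X → ℝ} (hf : ContinuousOn f s) (h0 : ∀ t ∈ s, f t ≠ 0) :
    (∀ t ∈ s, 0 < f t) ∨ ∀ t ∈ s, f t < 0 := by
  by_contra! ⟨⟨a, ha, hfa⟩, ⟨b, hb, hfb⟩⟩
  obtain ⟨c, hc, hfc⟩ := hs.intermediate_value ha hb hf ⟨hfa, hfb⟩
  exact h0 c hc hfc

theorem HasDerivAt.eq_zero_of_eqOn_zero {f : ℝ → ℝ} {f' t : ℝ} {s : Set ℝ}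
    (hf : HasDerivAt f f' t) (hs : s ∈ 𝓝 t) (h : EqOn f 0 s) : f' = 0 :=
  hf.unique ((hasDerivAt_const t 0).congr_of_eventuallyEq (eventually_of_mem hs h))

namespace TensionGreenFunction

variable {κ g g' : ℝ → ℝ} {x : ℝ}

theorem not_deriv_nonpos_and_nonneg_of_jump (hx : x ∈ Ioc (0:ℝ) 1)
    (hjump : ∃ L R : ℝ,
      Tendsto g' (𝓝[Ioo 0 x] x) (𝓝 L) ∧
      (x < 1 → Tendsto g' (𝓝[Ioo x 1] x) (𝓝 R) ∧ L - R = 1) ∧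
      (x = 1 → L = 1)) :
    ¬ ((∀ t ∈ Ioo 0 x, g' t ≤ 0) ∧ ∀ t ∈ Ioo x 1, 0 ≤ g' t) := by
  rintro ⟨hl, hr⟩
  obtain ⟨L, R, hL, hR, hL1⟩ := hjump
  have := right_nhdsWithin_Ioo_neBot hx.1
  have hL0 : L ≤ 0 := le_of_tendsto hL (eventually_mem_nhdsWithin.mono hl)
  rcases hx.2.lt_or_eq with hx1 | hx1
  · obtain ⟨hR, hLR⟩ := hR hx1
    have := left_nhdsWithin_Ioo_neBot hx1
    have hR0 : 0 ≤ R := ge_of_tendsto hR (eventually_mem_nhdsWithin.mono hr)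
    linarith
  · linarith [hL1 hx1]

theorem hasDerivAt_of_hasDerivWithinAt_Icc {f f' : ℝ → ℝ}
    (hf : ∀ s ∈ Icc (0:ℝ) 1, s ≠ x → HasDerivWithinAt f (f' s) (Icc 0 1) s)
    {s : ℝ} (hs : s ∈ Ioo (0:ℝ) 1) (hsx : s ≠ x) : HasDerivAt f (f' s) s :=
  (hf s (Ioo_subset_Icc_self hs) hsx).hasDerivAt (Icc_mem_nhds hs.1 hs.2)

variable (hd1 : ∀ s ∈ Icc (0:ℝ) 1, s ≠ x → HasDerivWithinAt g (g' s) (Icc 0 1) s)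
  (hd2 : ∀ s ∈ Icc (0:ℝ) 1, s ≠ x → HasDerivWithinAt g' (κ s ^ 2 * g s) (Icc 0 1) s)
include hd1 hd2

theorem monotoneOn_mul_deriv_of_subset (hgc : ContinuousOn g (Icc 0 1)) {D : Set ℝ}
    (hD : Convex ℝ D) (hsub : D ⊆ Icc 0 1 \ {x}) : MonotoneOn (fun t => g t * g' t) D := by
  have hint : ∀ t ∈ interior D, t ∈ Ioo 0 1 ∧ t ≠ x := fun t ht =>
    ⟨by simpa using interior_mono (hsub.trans sdiff_subset) ht, (hsub (interior_subset ht)).2⟩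
  refine monotoneOn_mul_deriv hD (fun t ht => ?_)
    (fun t ht => hasDerivAt_of_hasDerivWithinAt_Icc hd1 (hint t ht).1 (hint t ht).2)
    (fun t ht => hasDerivAt_of_hasDerivWithinAt_Icc hd2 (hint t ht).1 (hint t ht).2)
    (fun t _ => sq_nonneg (κ t))
  exact ((hgc _ (hsub ht).1).mul (hd2 t (hsub ht).1 (hsub ht).2).continuousWithinAt).mono
    (hsub.trans sdiff_subset)

theorem mul_deriv_nonneg_of_mem_Ico (hx1 : x ≤ 1) (hgc : ContinuousOn g (Icc 0 1))
    (hg0 : g 0 = 0) {t : ℝ} (ht : t ∈ Ico 0 x) : 0 ≤ g t * g' t := by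
  have hsub : Ico 0 x ⊆ Icc 0 1 \ {x} := fun s hs => ⟨⟨hs.1, hs.2.le.trans hx1⟩, hs.2.ne⟩
  simpa [hg0] using monotoneOn_mul_deriv_of_subset hd1 hd2 hgc (convex_Ico 0 x) hsub
    (left_mem_Ico.2 (ht.1.trans_lt ht.2)) ht ht.1

theorem mul_deriv_nonpos_of_mem_Ioc (hx0 : 0 ≤ x) (hgc : ContinuousOn g (Icc 0 1))
    (hbc : g' 1 = 0) {t : ℝ} (ht : t ∈ Ioc x 1) : g t * g' t ≤ 0 := by
  have hsub : Ioc x 1 ⊆ Icc 0 1 \ {x} := fun s hs => ⟨⟨hx0.trans hs.1.le, hs.2⟩, hs.1.ne'⟩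
  simpa [hbc] using monotoneOn_mul_deriv_of_subset hd1 hd2 hgc (convex_Ioc x 1) hsub
    ht (right_mem_Ioc.2 (ht.1.trans_le ht.2)) ht.2

theorem eqOn_zero_left_of_apply_eq_zero (hx : x ∈ Ioc (0:ℝ) 1) (hgc : ContinuousOn g (Icc 0 1))
    (hg0 : g 0 = 0) {t₀ : ℝ} (ht₀ : t₀ ∈ Icc 0 x) (h : g t₀ = 0) : EqOn g 0 (Icc 0 t₀) := by
  have hsq : MonotoneOn (fun t => g t ^ 2) (Icc 0 x) := by
    refine monotoneOn_sq_of_mul_deriv_nonneg (g' := g') (convex_Icc 0 x)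
      (hgc.mono (Icc_subset_Icc_right hx.2)) (fun t ht => ?_) (fun t ht => ?_) <;>
      rw [interior_Icc] at ht
    · exact hasDerivAt_of_hasDerivWithinAt_Icc hd1 ⟨ht.1, ht.2.trans_le hx.2⟩ ht.2.ne
    · exact mul_deriv_nonneg_of_mem_Ico hd1 hd2 hx.2 hgc hg0 (Ioo_subset_Ico_self ht)
  intro t ht
  simpa [h] using hsq ⟨ht.1, ht.2.trans ht₀.2⟩ ht₀ ht.2

theorem eqOn_zero_right_of_apply_eq_zero (hx : x ∈ Ioc (0:ℝ) 1) (hgc : ContinuousOn g (Icc 0 1))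
    (hbc : g' 1 = 0) {t₀ : ℝ} (ht₀ : t₀ ∈ Icc x 1) (h : g t₀ = 0) : EqOn g 0 (Icc t₀ 1) := by
  have hsq : AntitoneOn (fun t => g t ^ 2) (Icc x 1) := by
    refine antitoneOn_sq_of_mul_deriv_nonpos (g' := g') (convex_Icc x 1)
      (hgc.mono (Icc_subset_Icc_left hx.1.le)) (fun t ht => ?_) (fun t ht => ?_) <;>
      rw [interior_Icc] at ht
    · exact hasDerivAt_of_hasDerivWithinAt_Icc hd1 ⟨hx.1.trans ht.1, ht.2⟩ ht.1.ne'
    · exact mul_deriv_nonpos_of_mem_Ioc hd1 hd2 hx.1.le hgc hbc (Ioo_subset_Ioc_self ht)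
  intro t ht
  simpa [h] using hsq ht₀ ⟨ht₀.1.trans ht.1, ht.2⟩ ht.1

theorem eqOn_zero_of_apply_eq_zero_of_deriv_eq_zero (hκc : ContinuousOn κ (Icc 0 1))
    {a b t₀ : ℝ} (ha : 0 ≤ a) (hb : b ≤ 1) (hx : x ∉ Icc a b) (ht₀ : t₀ ∈ Icc a b)
    (h0 : g t₀ = 0) (h0' : g' t₀ = 0) : EqOn g 0 (Icc a b) :=
  have hsub : Icc a b ⊆ Icc 0 1 := Icc_subset_Icc ha hb
  eqOn_zero_of_hasDerivWithinAt_of_eq_zero ((hκc.pow 2).mono hsub)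
    (fun t ht => (hd1 t (hsub ht) (ne_of_mem_of_not_mem ht hx)).mono hsub)
    (fun t ht => (hd2 t (hsub ht) (ne_of_mem_of_not_mem ht hx)).mono hsub) ht₀ h0 h0'

theorem apply_ne_zero_of_jump (hx : x ∈ Ioc (0:ℝ) 1) (hgc : ContinuousOn g (Icc 0 1))
    (hg0 : g 0 = 0) (hbc : g' 1 = 0)
    (hjump : ¬ ((∀ t ∈ Ioo 0 x, g' t ≤ 0) ∧ ∀ t ∈ Ioo x 1, 0 ≤ g' t)) : g x ≠ 0 := by
  intro hgx
  have hzero : EqOn g 0 (Icc 0 1) := by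
    rw [← Icc_union_Icc_eq_Icc hx.1.le hx.2]
    exact (eqOn_zero_left_of_apply_eq_zero hd1 hd2 hx hgc hg0 (right_mem_Icc.2 hx.1.le)
      hgx).union (eqOn_zero_right_of_apply_eq_zero hd1 hd2 hx hgc hbc (left_mem_Icc.2 hx.2) hgx)
  have hderiv : ∀ t ∈ Ioo (0:ℝ) 1, t ≠ x → g' t = 0 := fun t ht htx =>
    (hasDerivAt_of_hasDerivWithinAt_Icc hd1 ht htx).eq_zero_of_eqOn_zero
      (Icc_mem_nhds ht.1 ht.2) hzero
  exact hjump ⟨fun t ht => (hderiv t ⟨ht.1, ht.2.trans_le hx.2⟩ ht.2.ne).le,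
    fun t ht => (hderiv t ⟨hx.1.trans ht.1, ht.2⟩ ht.1.ne').ge⟩

theorem apply_eq_zero_of_apply_eq_zero_left (hκc : ContinuousOn κ (Icc 0 1))
    (hx : x ∈ Ioc (0:ℝ) 1) (hgc : ContinuousOn g (Icc 0 1)) (hg0 : g 0 = 0) {t₀ : ℝ}
    (ht₀ : t₀ ∈ Ioo 0 x) (h : g t₀ = 0) : g x = 0 := by
  have hz := eqOn_zero_left_of_apply_eq_zero hd1 hd2 hx hgc hg0 (Ioo_subset_Icc_self ht₀) h
  have ht₁ : t₀ / 2 ∈ Ioo 0 t₀ := ⟨half_pos ht₀.1, half_lt_self ht₀.1⟩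
  have hlt : t₀ / 2 < x := ht₁.2.trans ht₀.2
  have hg't₁ : g' (t₀ / 2) = 0 :=
    (hasDerivAt_of_hasDerivWithinAt_Icc hd1 ⟨ht₁.1, hlt.trans_le hx.2⟩
      hlt.ne).eq_zero_of_eqOn_zero (Icc_mem_nhds ht₁.1 ht₁.2) hz
  have hIco : EqOn g 0 (Ico (t₀ / 2) x) := fun s hs =>
    eqOn_zero_of_apply_eq_zero_of_deriv_eq_zero hd1 hd2 hκc ht₁.1.le (hs.2.le.trans hx.2)
      (fun h => (hs.2.trans_le h.2).false) (left_mem_Icc.2 hs.1)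
      (hz (Ioo_subset_Icc_self ht₁)) hg't₁ (right_mem_Icc.2 hs.1)
  exact hIco.of_subset_closure (hgc.mono (Icc_subset_Icc ht₁.1.le hx.2)) continuousOn_const
    Ico_subset_Icc_self (closure_Ico hlt.ne).ge (right_mem_Icc.2 hlt.le)

theorem apply_eq_zero_of_apply_eq_zero_right (hκc : ContinuousOn κ (Icc 0 1))
    (hx : x ∈ Ioc (0:ℝ) 1) (hgc : ContinuousOn g (Icc 0 1)) (hbc : g' 1 = 0) {t₀ : ℝ}
    (ht₀ : t₀ ∈ Ioc x 1) (h : g t₀ = 0) : g x = 0 := by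
  have hz := eqOn_zero_right_of_apply_eq_zero hd1 hd2 hx hgc hbc (Ioc_subset_Icc_self ht₀) h
  have hIoc : EqOn g 0 (Ioc x 1) := fun s hs =>
    eqOn_zero_of_apply_eq_zero_of_deriv_eq_zero hd1 hd2 hκc (hx.1.trans hs.1).le le_rfl
      (fun h => (hs.1.trans_le h.1).false) (right_mem_Icc.2 hs.2)
      (hz (right_mem_Icc.2 ht₀.2)) hbc (left_mem_Icc.2 hs.2)
  have hlt : x < 1 := ht₀.1.trans_le ht₀.2
  exact hIoc.of_subset_closure (hgc.mono (Icc_subset_Icc_left hx.1.le)) continuousOn_const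
    Ioc_subset_Icc_self (closure_Ioc hlt.ne).ge (left_mem_Icc.2 hlt.le)

theorem apply_ne_zero_of_mem_Ioc (hκc : ContinuousOn κ (Icc 0 1)) (hx : x ∈ Ioc (0:ℝ) 1)
    (hgc : ContinuousOn g (Icc 0 1)) (hg0 : g 0 = 0) (hbc : g' 1 = 0)
    (hjump : ¬ ((∀ t ∈ Ioo 0 x, g' t ≤ 0) ∧ ∀ t ∈ Ioo x 1, 0 ≤ g' t))
    {t : ℝ} (ht : t ∈ Ioc (0:ℝ) 1) : g t ≠ 0 := by
  intro h
  refine apply_ne_zero_of_jump hd1 hd2 hx hgc hg0 hbc hjump ?_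
  rcases lt_trichotomy t x with htx | rfl | htx
  · exact apply_eq_zero_of_apply_eq_zero_left hd1 hd2 hκc hx hgc hg0 ⟨ht.1, htx⟩ h
  · exact h
  · exact apply_eq_zero_of_apply_eq_zero_right hd1 hd2 hκc hx hgc hbc ⟨htx, ht.2⟩ h

theorem deriv_pos_of_mem_Ioo (hx1 : x ≤ 1) (hgc : ContinuousOn g (Icc 0 1)) (hg0 : g 0 = 0)
    (hpos : ∀ s ∈ Ioc (0:ℝ) 1, 0 < g s) {t : ℝ} (ht : t ∈ Ioo 0 x) : 0 < g' t := by
  by_contra! ht'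
  have hsub : Icc 0 t ⊆ Icc 0 1 := Icc_subset_Icc_right (ht.2.le.trans hx1)
  have hsubx : ∀ s ∈ Ioo 0 t, s ∈ Ioo (0:ℝ) 1 ∧ s ≠ x := fun s hs =>
    ⟨⟨hs.1, hs.2.trans (ht.2.trans_le hx1)⟩, (hs.2.trans ht.2).ne⟩
  have hmono : MonotoneOn g' (Icc 0 t) := by
    refine monotoneOn_of_hasDerivWithinAt_nonneg (f' := fun s => κ s ^ 2 * g s)
      (convex_Icc 0 t)
      (fun s hs => ((hd2 s (hsub hs) (hs.2.trans_lt ht.2).ne).continuousWithinAt.mono hsub))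
      (fun s hs => ?_) (fun s hs => ?_) <;> rw [interior_Icc] at hs
    · exact (hasDerivAt_of_hasDerivWithinAt_Icc hd2 (hsubx s hs).1
        (hsubx s hs).2).hasDerivWithinAt
    · exact mul_nonneg (sq_nonneg _) (hpos s ⟨hs.1, (hsubx s hs).1.2.le⟩).le
  have hanti : AntitoneOn g (Icc 0 t) := by
    refine antitoneOn_of_hasDerivWithinAt_nonpos (f' := g') (convex_Icc 0 t) (hgc.mono hsub)
      (fun s hs => ?_) (fun s hs => ?_) <;> rw [interior_Icc] at hs
    · exact (hasDerivAt_of_hasDerivWithinAt_Icc hd1 (hsubx s hs).1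
        (hsubx s hs).2).hasDerivWithinAt
    · exact (hmono (Ioo_subset_Icc_self hs) (right_mem_Icc.2 ht.1.le) hs.2.le).trans ht'
  have := hanti (left_mem_Icc.2 ht.1.le) (right_mem_Icc.2 ht.1.le) ht.1.le
  linarith [hpos t ⟨ht.1, (ht.2.trans_le hx1).le⟩]

end TensionGreenFunction

open TensionGreenFunction

theorem stmt_9_general (κ : ℝ → ℝ) (hκc : ContinuousOn κ (Set.Icc 0 1))
    (x : ℝ) (hx : x ∈ Set.Ioc (0:ℝ) 1)
    (g g' : ℝ → ℝ)
    (hgc : ContinuousOn g (Set.Icc 0 1))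
    (hg0 : g 0 = 0)
    (hbc : g' 1 = 0)
    (hd1 : ∀ s ∈ Set.Icc (0:ℝ) 1, s ≠ x → HasDerivWithinAt g (g' s) (Set.Icc 0 1) s)
    (hd2 : ∀ s ∈ Set.Icc (0:ℝ) 1, s ≠ x →
      HasDerivWithinAt g' (κ s ^ 2 * g s) (Set.Icc 0 1) s)
    (hjump : ∃ L R : ℝ,
      Tendsto g' (nhdsWithin x (Set.Ioo 0 x)) (nhds L) ∧
      (x < 1 → Tendsto g' (nhdsWithin x (Set.Ioo x 1)) (nhds R) ∧ L - R = 1) ∧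
      (x = 1 → L = 1)) :
    (∀ s ∈ Set.Ioc (0:ℝ) 1, 0 < g s) ∧
    (x < 1 → (∀ s ∈ Set.Ioo (0:ℝ) x, 0 < g' s) ∧ ∀ s ∈ Set.Ioo x 1, g' s ≤ 0) := by
  have hjump' := not_deriv_nonpos_and_nonneg_of_jump hx hjump
  have hpos : ∀ t ∈ Ioc (0:ℝ) 1, 0 < g t := by
    refine (isPreconnected_Ioc.forall_pos_or_forall_neg (hgc.mono Ioc_subset_Icc_self)
      fun t ht => apply_ne_zero_of_mem_Ioc hd1 hd2 hκc hx hgc hg0 hbc hjump' ht).resolve_right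
      fun hneg => hjump' ⟨fun t ht => ?_, fun t ht => ?_⟩
    · exact nonpos_of_mul_nonneg_right
        (mul_deriv_nonneg_of_mem_Ico hd1 hd2 hx.2 hgc hg0 (Ioo_subset_Ico_self ht))
        (hneg t ⟨ht.1, (ht.2.trans_le hx.2).le⟩)
    · exact nonneg_of_mul_nonpos_right
        (mul_deriv_nonpos_of_mem_Ioc hd1 hd2 hx.1.le hgc hbc (Ioo_subset_Ioc_self ht))
        (hneg t ⟨hx.1.trans ht.1, ht.2.le⟩)
  refine ⟨hpos, fun _ => ⟨fun t ht => deriv_pos_of_mem_Ioo hd1 hd2 hx.2 hgc hg0 hpos ht,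
    fun t ht => ?_⟩⟩
  exact nonpos_of_mul_nonpos_right
    (mul_deriv_nonpos_of_mem_Ioc hd1 hd2 hx.1.le hgc hbc (Ioo_subset_Ioc_self ht))
    (hpos t ⟨hx.1.trans ht.1, ht.2.le⟩)

theorem stmt_9 (κ : ℝ → ℝ) (hκc : ContinuousOn κ (Set.Icc 0 1))
    (hκ0 : ∀ s ∈ Set.Icc (0:ℝ) 1, 0 ≤ κ s)
    (x : ℝ) (hx : x ∈ Set.Ioc (0:ℝ) 1)
    (g g' : ℝ → ℝ)
    (hgc : ContinuousOn g (Set.Icc 0 1))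
    (hg0 : g 0 = 0)
    (hbc : g' 1 = 0)
    (hd1 : ∀ s ∈ Set.Icc (0:ℝ) 1, s ≠ x → HasDerivWithinAt g (g' s) (Set.Icc 0 1) s)
    (hd2 : ∀ s ∈ Set.Icc (0:ℝ) 1, s ≠ x →
      HasDerivWithinAt g' (κ s ^ 2 * g s) (Set.Icc 0 1) s)
    (hjump : ∃ L R : ℝ,
      Tendsto g' (nhdsWithin x (Set.Ioo 0 x)) (nhds L) ∧
      (x < 1 → Tendsto g' (nhdsWithin x (Set.Ioo x 1)) (nhds R) ∧ L - R = 1) ∧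
      (x = 1 → L = 1)) :
    (∀ s ∈ Set.Ioc (0:ℝ) 1, 0 < g s) ∧
    (x < 1 → (∀ s ∈ Set.Ioo (0:ℝ) x, 0 < g' s) ∧ ∀ s ∈ Set.Ioo x 1, g' s ≤ 0) :=
  stmt_9_general κ hκc x hx g g' hgc hg0 hbc hd1 hd2 hjump
end

section
/- Let κ : [0,1] → ℝ be continuous and nonnegative, and let G be the Green function for σ ↦ σ'' − κ² σ with σ(0)=0, σ'(1)=0. Then |∂_s G(s,x)| ≤ 1 for all s, x (s ≠ x), and 0 ≤ G(s,x) ≤ s for all s, x ∈ [0,1]. -/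
/-!
The product `g g'` has derivative `g'² + q g² ≥ 0`, so it is monotone on each side of `x`; the
boundary conditions make it nonnegative on `[0, x)` and nonpositive on `(x, 1]`. Since `g'`
drops by `1` across `x`, `g g'` drops by `g x` there, hence `g x ≥ 0`. On each side `g²` is
monotone towards `x`, so a zero of `g` propagates away from `x`, and the intermediate value
theorem gives `g ≥ 0`. Then `g'' = q g ≥ 0`, so `g'` increases on both sides of `x`: it lies
between `g' 0 ≥ 0` and `g'(x⁻) = L ≤ 1` on the left, and between `g'(x⁺) = L - 1 ≥ -1` and
`g' 1 = 0` on the right. Finally `g' ≤ 1` makes `s - g s` nondecreasing, whence `g s ≤ s`.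
-/

open Filter Set Topology

lemma monotoneOn_of_hasDerivAt_nonneg {D : Set ℝ} {f f' : ℝ → ℝ} (hD : Convex ℝ D)
    (hf : ContinuousOn f D) (hf' : ∀ t ∈ interior D, HasDerivAt f (f' t) t)
    (hf'₀ : ∀ t ∈ interior D, 0 ≤ f' t) : MonotoneOn f D :=
  monotoneOn_of_hasDerivWithinAt_nonneg hD hf (fun t ht => (hf' t ht).hasDerivWithinAt) hf'₀

lemma antitoneOn_of_hasDerivAt_nonpos {D : Set ℝ} {f f' : ℝ → ℝ} (hD : Convex ℝ D)
    (hf : ContinuousOn f D) (hf' : ∀ t ∈ interior D, HasDerivAt f (f' t) t)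
    (hf'₀ : ∀ t ∈ interior D, f' t ≤ 0) : AntitoneOn f D :=
  antitoneOn_of_hasDerivWithinAt_nonpos hD hf (fun t ht => (hf' t ht).hasDerivWithinAt) hf'₀

lemma monotoneOn_mul_deriv_of_hasDerivAt {D : Set ℝ} {q g g' : ℝ → ℝ} (hD : Convex ℝ D)
    (hg : ContinuousOn g D) (hg' : ContinuousOn g' D)
    (hdg : ∀ t ∈ interior D, HasDerivAt g (g' t) t)
    (hdg' : ∀ t ∈ interior D, HasDerivAt g' (q t * g t) t)
    (hq : ∀ t ∈ interior D, 0 ≤ q t) :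
    MonotoneOn (fun t => g t * g' t) D :=
  monotoneOn_of_hasDerivAt_nonneg hD (hg.mul hg') (fun t ht => (hdg t ht).mul (hdg' t ht))
    fun t ht => by
      nlinarith [mul_self_nonneg (g' t), mul_nonneg (hq t ht) (mul_self_nonneg (g t))]

lemma nonneg_of_mul_deriv_nonneg {a b s : ℝ} {g g' : ℝ → ℝ} (hg : ContinuousOn g (Icc a b))
    (hdg : ∀ t ∈ Ioo a b, HasDerivAt g (g' t) t) (hgg' : ∀ t ∈ Ioo a b, 0 ≤ g t * g' t)
    (hb : 0 ≤ g b) (hs : s ∈ Icc a b) : 0 ≤ g s := by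
  have hsq : MonotoneOn (fun t => g t * g t) (Icc a b) :=
    monotoneOn_of_hasDerivAt_nonneg (f' := fun t => g' t * g t + g t * g' t) (convex_Icc a b)
      (hg.mul hg) (by rw [interior_Icc]; exact fun t ht => (hdg t ht).mul (hdg t ht))
      (by rw [interior_Icc]; exact fun t ht => by linarith [hgg' t ht])
  by_contra! hneg
  obtain ⟨z, hz, hz0⟩ := intermediate_value_Icc hs.2 (hg.mono (Icc_subset_Icc_left hs.1))
    ⟨hneg.le, hb⟩
  have := hsq hs ⟨hs.1.trans hz.1, hz.2⟩ hz.1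
  simp only [hz0, mul_zero] at this
  nlinarith

lemma nonneg_of_mul_deriv_nonpos {a b s : ℝ} {g g' : ℝ → ℝ} (hg : ContinuousOn g (Icc a b))
    (hdg : ∀ t ∈ Ioo a b, HasDerivAt g (g' t) t) (hgg' : ∀ t ∈ Ioo a b, g t * g' t ≤ 0)
    (ha : 0 ≤ g a) (hs : s ∈ Icc a b) : 0 ≤ g s := by
  have hsq : AntitoneOn (fun t => g t * g t) (Icc a b) :=
    antitoneOn_of_hasDerivAt_nonpos (f' := fun t => g' t * g t + g t * g' t) (convex_Icc a b)
      (hg.mul hg) (by rw [interior_Icc]; exact fun t ht => (hdg t ht).mul (hdg t ht))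
      (by rw [interior_Icc]; exact fun t ht => by linarith [hgg' t ht])
  by_contra! hneg
  obtain ⟨z, hz, hz0⟩ := intermediate_value_Icc' hs.1 (hg.mono (Icc_subset_Icc_right hs.2))
    ⟨hneg.le, ha⟩
  have := hsq ⟨hz.1, hz.2.trans hs.2⟩ hs hz.2
  simp only [hz0, mul_zero] at this
  nlinarith

lemma MonotoneOn.le_of_tendsto_nhdsLT {f : ℝ → ℝ} {a b L s : ℝ}
    (hf : MonotoneOn f (Ico a b))
    (hL : Tendsto f (𝓝[<] b) (𝓝 L)) (hs : s ∈ Ico a b) : f s ≤ L :=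
  ge_of_tendsto hL <| by
    filter_upwards [Ioo_mem_nhdsLT hs.2] with t ht
    exact hf hs ⟨hs.1.trans ht.1.le, ht.2⟩ ht.1.le

lemma MonotoneOn.ge_of_tendsto_nhdsGT {f : ℝ → ℝ} {a b L s : ℝ}
    (hf : MonotoneOn f (Ioc a b))
    (hL : Tendsto f (𝓝[>] a) (𝓝 L)) (hs : s ∈ Ioc a b) : L ≤ f s :=
  le_of_tendsto hL <| by
    filter_upwards [Ioo_mem_nhdsGT hs.1] with t ht
    exact hf ⟨ht.1, ht.2.le.trans hs.2⟩ hs ht.2.le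

/-- `g = G(·, x)` for `σ ↦ σ'' - q σ` with `σ 0 = 0`, `σ' 1 = 0`; `g'` is `∂ₛG` and `L` its
left limit at `x`. For `x = 1` the condition `L = 1` reads the right limit `L - 1` as `g' 1⁺ = 0`.
-/
structure IsTensionGreenFunction (q g g' : ℝ → ℝ) (x L : ℝ) : Prop where
  mem_Ioc : x ∈ Ioc (0 : ℝ) 1
  continuousOn : ContinuousOn g (Icc 0 1)
  hasDerivWithinAt : ∀ s ∈ Icc (0 : ℝ) 1, s ≠ x → HasDerivWithinAt g (g' s) (Icc 0 1) s
  hasDerivWithinAt_deriv :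
    ∀ s ∈ Icc (0 : ℝ) 1, s ≠ x → HasDerivWithinAt g' (q s * g s) (Icc 0 1) s
  apply_zero : g 0 = 0
  deriv_one : g' 1 = 0
  tendsto_nhdsLT : Tendsto g' (𝓝[<] x) (𝓝 L)
  tendsto_nhdsGT : x < 1 → Tendsto g' (𝓝[>] x) (𝓝 (L - 1))
  eq_one_of_eq_one : x = 1 → L = 1

namespace IsTensionGreenFunction

variable {q g g' : ℝ → ℝ} {x L s : ℝ}

lemma hasDerivAt (hG : IsTensionGreenFunction q g g' x L) (hs : s ∈ Ioo 0 1) (hsx : s ≠ x) :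
    HasDerivAt g (g' s) s :=
  (hG.hasDerivWithinAt s (Ioo_subset_Icc_self hs) hsx).hasDerivAt (Icc_mem_nhds hs.1 hs.2)

lemma hasDerivAt_deriv (hG : IsTensionGreenFunction q g g' x L) (hs : s ∈ Ioo 0 1)
    (hsx : s ≠ x) : HasDerivAt g' (q s * g s) s :=
  (hG.hasDerivWithinAt_deriv s (Ioo_subset_Icc_self hs) hsx).hasDerivAt (Icc_mem_nhds hs.1 hs.2)

lemma continuousOn_deriv (hG : IsTensionGreenFunction q g g' x L) {D : Set ℝ}
    (hD : D ⊆ Icc 0 1) (hxD : x ∉ D) : ContinuousOn g' D := fun s hs =>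
  (hG.hasDerivWithinAt_deriv s (hD hs) (ne_of_mem_of_not_mem hs hxD)).continuousWithinAt.mono hD

lemma Ico_subset_Icc (hG : IsTensionGreenFunction q g g' x L) : Ico 0 x ⊆ Icc (0 : ℝ) 1 :=
  Ico_subset_Icc_self.trans (Icc_subset_Icc_right hG.mem_Ioc.2)

lemma Ioc_subset_Icc (hG : IsTensionGreenFunction q g g' x L) : Ioc x 1 ⊆ Icc (0 : ℝ) 1 :=
  Ioc_subset_Icc_self.trans (Icc_subset_Icc_left hG.mem_Ioc.1.le)

lemma mul_deriv_nonneg (hG : IsTensionGreenFunction q g g' x L)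
    (hq : ∀ s ∈ Icc (0 : ℝ) 1, 0 ≤ q s) (hs : s ∈ Ico 0 x) : 0 ≤ g s * g' s := by
  have hmono : MonotoneOn (fun t => g t * g' t) (Ico 0 x) := by
    refine monotoneOn_mul_deriv_of_hasDerivAt (q := q) (convex_Ico 0 x)
      (hG.continuousOn.mono hG.Ico_subset_Icc)
      (hG.continuousOn_deriv hG.Ico_subset_Icc right_notMem_Ico) ?_ ?_ ?_ <;> rw [interior_Ico] <;>
      intro t ht
    · exact hG.hasDerivAt ⟨ht.1, ht.2.trans_le hG.mem_Ioc.2⟩ ht.2.ne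
    · exact hG.hasDerivAt_deriv ⟨ht.1, ht.2.trans_le hG.mem_Ioc.2⟩ ht.2.ne
    · exact hq t (hG.Ico_subset_Icc (Ioo_subset_Ico_self ht))
  simpa [hG.apply_zero] using hmono ⟨le_rfl, hG.mem_Ioc.1⟩ hs hs.1

lemma mul_deriv_nonpos (hG : IsTensionGreenFunction q g g' x L)
    (hq : ∀ s ∈ Icc (0 : ℝ) 1, 0 ≤ q s) (hs : s ∈ Ioc x 1) : g s * g' s ≤ 0 := by
  have hmono : MonotoneOn (fun t => g t * g' t) (Ioc x 1) := by
    refine monotoneOn_mul_deriv_of_hasDerivAt (q := q) (convex_Ioc x 1)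
      (hG.continuousOn.mono hG.Ioc_subset_Icc)
      (hG.continuousOn_deriv hG.Ioc_subset_Icc left_notMem_Ioc) ?_ ?_ ?_ <;> rw [interior_Ioc] <;>
      intro t ht
    · exact hG.hasDerivAt ⟨hG.mem_Ioc.1.trans ht.1, ht.2⟩ ht.1.ne'
    · exact hG.hasDerivAt_deriv ⟨hG.mem_Ioc.1.trans ht.1, ht.2⟩ ht.1.ne'
    · exact hq t (hG.Ioc_subset_Icc (Ioo_subset_Ioc_self ht))
  simpa [hG.deriv_one] using hmono hs ⟨hs.1.trans_le hs.2, le_rfl⟩ hs.2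

lemma tendsto_nhdsLT_apply (hG : IsTensionGreenFunction q g g' x L) :
    Tendsto g (𝓝[<] x) (𝓝 (g x)) :=
  (hG.continuousOn x (Ioc_subset_Icc_self hG.mem_Ioc)).mono_of_mem_nhdsWithin <|
    mem_of_superset (Ioo_mem_nhdsLT hG.mem_Ioc.1)
      (Ioo_subset_Icc_self.trans (Icc_subset_Icc_right hG.mem_Ioc.2))

lemma tendsto_nhdsGT_apply (hG : IsTensionGreenFunction q g g' x L) (hx : x < 1) :
    Tendsto g (𝓝[>] x) (𝓝 (g x)) :=
  (hG.continuousOn x (Ioc_subset_Icc_self hG.mem_Ioc)).mono_of_mem_nhdsWithin <|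
    mem_of_superset (Ioo_mem_nhdsGT hx)
      (Ioo_subset_Icc_self.trans (Icc_subset_Icc_left hG.mem_Ioc.1.le))

lemma apply_source_nonneg (hG : IsTensionGreenFunction q g g' x L)
    (hq : ∀ s ∈ Icc (0 : ℝ) 1, 0 ≤ q s) : 0 ≤ g x := by
  have hleft : 0 ≤ g x * L :=
    ge_of_tendsto (hG.tendsto_nhdsLT_apply.mul hG.tendsto_nhdsLT) <| by
      filter_upwards [Ioo_mem_nhdsLT hG.mem_Ioc.1] with t ht
      exact hG.mul_deriv_nonneg hq ⟨ht.1.le, ht.2⟩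
  have hright : g x * (L - 1) ≤ 0 := by
    rcases hG.mem_Ioc.2.lt_or_eq with hx | hx
    · refine le_of_tendsto ((hG.tendsto_nhdsGT_apply hx).mul (hG.tendsto_nhdsGT hx)) ?_
      filter_upwards [Ioo_mem_nhdsGT hx] with t ht
      exact hG.mul_deriv_nonpos hq ⟨ht.1, ht.2.le⟩
    · simp [hG.eq_one_of_eq_one hx]
  linarith

lemma nonneg (hG : IsTensionGreenFunction q g g' x L) (hq : ∀ s ∈ Icc (0 : ℝ) 1, 0 ≤ q s)
    (hs : s ∈ Icc 0 1) : 0 ≤ g s := by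
  obtain ⟨hx0, hx1⟩ := hG.mem_Ioc
  rcases le_total s x with hsx | hxs
  · exact nonneg_of_mul_deriv_nonneg (hG.continuousOn.mono (Icc_subset_Icc_right hx1))
      (fun t ht => hG.hasDerivAt ⟨ht.1, ht.2.trans_le hx1⟩ ht.2.ne)
      (fun t ht => hG.mul_deriv_nonneg hq (Ioo_subset_Ico_self ht)) (hG.apply_source_nonneg hq)
      ⟨hs.1, hsx⟩
  · exact nonneg_of_mul_deriv_nonpos (hG.continuousOn.mono (Icc_subset_Icc_left hx0.le))
      (fun t ht => hG.hasDerivAt ⟨hx0.trans ht.1, ht.2⟩ ht.1.ne')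
      (fun t ht => hG.mul_deriv_nonpos hq (Ioo_subset_Ioc_self ht)) (hG.apply_source_nonneg hq)
      ⟨hxs, hs.2⟩

lemma monotoneOn_deriv_Ico (hG : IsTensionGreenFunction q g g' x L)
    (hq : ∀ s ∈ Icc (0 : ℝ) 1, 0 ≤ q s) : MonotoneOn g' (Ico 0 x) := by
  refine monotoneOn_of_hasDerivAt_nonneg (f' := fun t => q t * g t) (convex_Ico 0 x)
    (hG.continuousOn_deriv hG.Ico_subset_Icc right_notMem_Ico) ?_ ?_ <;> rw [interior_Ico] <;>
    intro t ht
  · exact hG.hasDerivAt_deriv ⟨ht.1, ht.2.trans_le hG.mem_Ioc.2⟩ ht.2.ne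
  · have ht' := hG.Ico_subset_Icc (Ioo_subset_Ico_self ht)
    exact mul_nonneg (hq t ht') (hG.nonneg hq ht')

lemma monotoneOn_deriv_Ioc (hG : IsTensionGreenFunction q g g' x L)
    (hq : ∀ s ∈ Icc (0 : ℝ) 1, 0 ≤ q s) : MonotoneOn g' (Ioc x 1) := by
  refine monotoneOn_of_hasDerivAt_nonneg (f' := fun t => q t * g t) (convex_Ioc x 1)
    (hG.continuousOn_deriv hG.Ioc_subset_Icc left_notMem_Ioc) ?_ ?_ <;> rw [interior_Ioc] <;>
    intro t ht
  · exact hG.hasDerivAt_deriv ⟨hG.mem_Ioc.1.trans ht.1, ht.2⟩ ht.1.ne'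
  · have ht' := hG.Ioc_subset_Icc (Ioo_subset_Ioc_self ht)
    exact mul_nonneg (hq t ht') (hG.nonneg hq ht')

lemma deriv_nonpos_of_mem_Ioc (hG : IsTensionGreenFunction q g g' x L)
    (hq : ∀ s ∈ Icc (0 : ℝ) 1, 0 ≤ q s) (hs : s ∈ Ioc x 1) : g' s ≤ 0 :=
  hG.deriv_one ▸ hG.monotoneOn_deriv_Ioc hq hs ⟨hs.1.trans_le hs.2, le_rfl⟩ hs.2

lemma deriv_zero_nonneg (hG : IsTensionGreenFunction q g g' x L)
    (hq : ∀ s ∈ Icc (0 : ℝ) 1, 0 ≤ q s) : 0 ≤ g' 0 := by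
  have hmin : IsLocalMinOn g (Icc 0 1) 0 :=
    eventually_of_mem self_mem_nhdsWithin fun s hs => by
      rw [hG.apply_zero]
      exact hG.nonneg hq hs
  have hcone : (1 : ℝ) - 0 ∈ posTangentConeAt (Icc 0 1) (0 : ℝ) :=
    sub_mem_posTangentConeAt_of_segment_subset (segment_eq_Icc zero_le_one).subset
  simpa using hmin.hasFDerivWithinAt_nonneg
    (hG.hasDerivWithinAt 0 (left_mem_Icc.2 zero_le_one) hG.mem_Ioc.1.ne).hasFDerivWithinAt hcone

lemma deriv_nonneg_of_mem_Ico (hG : IsTensionGreenFunction q g g' x L)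
    (hq : ∀ s ∈ Icc (0 : ℝ) 1, 0 ≤ q s) (hs : s ∈ Ico 0 x) : 0 ≤ g' s :=
  (hG.deriv_zero_nonneg hq).trans <|
    hG.monotoneOn_deriv_Ico hq ⟨le_rfl, hG.mem_Ioc.1⟩ hs hs.1

lemma limit_nonneg (hG : IsTensionGreenFunction q g g' x L)
    (hq : ∀ s ∈ Icc (0 : ℝ) 1, 0 ≤ q s) : 0 ≤ L :=
  ge_of_tendsto hG.tendsto_nhdsLT <| by
    filter_upwards [Ioo_mem_nhdsLT hG.mem_Ioc.1] with t ht
    exact hG.deriv_nonneg_of_mem_Ico hq ⟨ht.1.le, ht.2⟩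

lemma limit_le_one (hG : IsTensionGreenFunction q g g' x L)
    (hq : ∀ s ∈ Icc (0 : ℝ) 1, 0 ≤ q s) : L ≤ 1 := by
  rcases hG.mem_Ioc.2.lt_or_eq with hx | hx
  · have : L - 1 ≤ 0 := le_of_tendsto (hG.tendsto_nhdsGT hx) <| by
      filter_upwards [Ioo_mem_nhdsGT hx] with t ht
      exact hG.deriv_nonpos_of_mem_Ioc hq ⟨ht.1, ht.2.le⟩
    linarith
  · exact (hG.eq_one_of_eq_one hx).le

lemma deriv_le_one_of_mem_Ico (hG : IsTensionGreenFunction q g g' x L)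
    (hq : ∀ s ∈ Icc (0 : ℝ) 1, 0 ≤ q s) (hs : s ∈ Ico 0 x) : g' s ≤ 1 :=
  ((hG.monotoneOn_deriv_Ico hq).le_of_tendsto_nhdsLT hG.tendsto_nhdsLT hs).trans
    (hG.limit_le_one hq)

lemma neg_one_le_deriv_of_mem_Ioc (hG : IsTensionGreenFunction q g g' x L)
    (hq : ∀ s ∈ Icc (0 : ℝ) 1, 0 ≤ q s) (hs : s ∈ Ioc x 1) : -1 ≤ g' s := by
  have := (hG.monotoneOn_deriv_Ioc hq).ge_of_tendsto_nhdsGT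
    (hG.tendsto_nhdsGT (hs.1.trans_le hs.2)) hs
  linarith [hG.limit_nonneg hq]

lemma abs_deriv_le_one (hG : IsTensionGreenFunction q g g' x L)
    (hq : ∀ s ∈ Icc (0 : ℝ) 1, 0 ≤ q s) (hs : s ∈ Icc 0 1) (hsx : s ≠ x) :
    |g' s| ≤ 1 := by
  rw [abs_le]
  rcases hsx.lt_or_gt with hsx | hxs
  · have hs' : s ∈ Ico 0 x := ⟨hs.1, hsx⟩
    exact ⟨by linarith [hG.deriv_nonneg_of_mem_Ico hq hs'], hG.deriv_le_one_of_mem_Ico hq hs'⟩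
  · have hs' : s ∈ Ioc x 1 := ⟨hxs, hs.2⟩
    exact ⟨hG.neg_one_le_deriv_of_mem_Ioc hq hs',
      by linarith [hG.deriv_nonpos_of_mem_Ioc hq hs']⟩

lemma apply_le_self (hG : IsTensionGreenFunction q g g' x L) (hq : ∀ s ∈ Icc (0 : ℝ) 1, 0 ≤ q s)
    (hs : s ∈ Icc 0 1) : g s ≤ s := by
  obtain ⟨hx0, hx1⟩ := hG.mem_Ioc
  have hmono : ∀ a b, 0 ≤ a → b ≤ 1 → (∀ t ∈ Ioo a b, t ≠ x ∧ g' t ≤ 1) →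
      MonotoneOn (fun t => t - g t) (Icc a b) := fun a b ha hb h =>
    monotoneOn_of_hasDerivAt_nonneg (f' := fun t => 1 - g' t) (convex_Icc a b)
      (continuousOn_id.sub (hG.continuousOn.mono (Icc_subset_Icc ha hb)))
      (by
        rw [interior_Icc]
        exact fun t ht => (hasDerivAt_id t).sub
          (hG.hasDerivAt ⟨ha.trans_lt ht.1, ht.2.trans_le hb⟩ (h t ht).1))
      (by
        rw [interior_Icc]
        exact fun t ht => sub_nonneg.2 (h t ht).2)
  have hleft := hmono 0 x le_rfl hx1 fun t ht =>
    ⟨ht.2.ne, hG.deriv_le_one_of_mem_Ico hq ⟨ht.1.le, ht.2⟩⟩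
  have hright := hmono x 1 hx0.le le_rfl fun t ht =>
    ⟨ht.1.ne', by linarith [hG.deriv_nonpos_of_mem_Ioc hq ⟨ht.1, ht.2.le⟩]⟩
  have hunion := hleft.union_right hright (isGreatest_Icc hx0.le) (isLeast_Icc hx1)
  rw [Icc_union_Icc_eq_Icc hx0.le hx1] at hunion
  simpa [hG.apply_zero] using hunion ⟨le_rfl, zero_le_one⟩ hs hs.1

end IsTensionGreenFunction

theorem stmt_10_general (κ : ℝ → ℝ)
    (x : ℝ) (hx : x ∈ Set.Ioc (0:ℝ) 1)
    (g g' : ℝ → ℝ)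
    (hgc : ContinuousOn g (Set.Icc 0 1))
    (hg0 : g 0 = 0)
    (hbc : g' 1 = 0)
    (hd1 : ∀ s ∈ Set.Icc (0:ℝ) 1, s ≠ x → HasDerivWithinAt g (g' s) (Set.Icc 0 1) s)
    (hd2 : ∀ s ∈ Set.Icc (0:ℝ) 1, s ≠ x →
      HasDerivWithinAt g' (κ s ^ 2 * g s) (Set.Icc 0 1) s)
    (hjump : ∃ L R : ℝ,
      Tendsto g' (nhdsWithin x (Set.Ioo 0 x)) (nhds L) ∧
      (x < 1 → Tendsto g' (nhdsWithin x (Set.Ioo x 1)) (nhds R) ∧ L - R = 1) ∧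
      (x = 1 → L = 1)) :
    (∀ s ∈ Set.Icc (0:ℝ) 1, s ≠ x → |g' s| ≤ 1) ∧
    (∀ s ∈ Set.Icc (0:ℝ) 1, 0 ≤ g s ∧ g s ≤ s) := by
  obtain ⟨L, R, hL, hR, hL1⟩ := hjump
  have hG : IsTensionGreenFunction (fun s => κ s ^ 2) g g' x L := by
    refine ⟨hx, hgc, hd1, hd2, hg0, hbc, ?_, fun hx1 => ?_, hL1⟩
    · rwa [← nhdsWithin_Ioo_eq_nhdsLT hx.1]
    · obtain ⟨hR, hLR⟩ := hR hx1
      rwa [← nhdsWithin_Ioo_eq_nhdsGT hx1, show L - 1 = R by linarith]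
  have hq : ∀ s ∈ Set.Icc (0:ℝ) 1, 0 ≤ κ s ^ 2 := fun s _ => sq_nonneg (κ s)
  exact ⟨fun s hs hsx => hG.abs_deriv_le_one hq hs hsx,
    fun s hs => ⟨hG.nonneg hq hs, hG.apply_le_self hq hs⟩⟩

theorem stmt_10 (κ : ℝ → ℝ) (hκc : ContinuousOn κ (Set.Icc 0 1))
    (hκ0 : ∀ s ∈ Set.Icc (0:ℝ) 1, 0 ≤ κ s)
    (x : ℝ) (hx : x ∈ Set.Ioc (0:ℝ) 1)
    (g g' : ℝ → ℝ)
    (hgc : ContinuousOn g (Set.Icc 0 1))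
    (hg0 : g 0 = 0)
    (hbc : g' 1 = 0)
    (hd1 : ∀ s ∈ Set.Icc (0:ℝ) 1, s ≠ x → HasDerivWithinAt g (g' s) (Set.Icc 0 1) s)
    (hd2 : ∀ s ∈ Set.Icc (0:ℝ) 1, s ≠ x →
      HasDerivWithinAt g' (κ s ^ 2 * g s) (Set.Icc 0 1) s)
    (hjump : ∃ L R : ℝ,
      Tendsto g' (nhdsWithin x (Set.Ioo 0 x)) (nhds L) ∧
      (x < 1 → Tendsto g' (nhdsWithin x (Set.Ioo x 1)) (nhds R) ∧ L - R = 1) ∧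
      (x = 1 → L = 1)) :
    (∀ s ∈ Set.Icc (0:ℝ) 1, s ≠ x → |g' s| ≤ 1) ∧
    (∀ s ∈ Set.Icc (0:ℝ) 1, 0 ≤ g s ∧ g s ≤ s) :=
  stmt_10_general κ x hx g g' hgc hg0 hbc hd1 hd2 hjump
end

section
/- Let κ : [0,1] → ℝ be continuous and nonnegative, and let G be the Green function for σ ↦ σ'' − κ² σ with σ(0)=0, σ'(1)=0. Then G(s,x) ≤ min{s,x} for all s,x ∈ [0,1], and consequently for each p ∈ [0,1], G(s,x) ≤ s^p x^{1-p}. -/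
/-!
Multiplying the equation by `g` gives `(g g')' = g'² + κ² g² ≥ 0` away from `x`, so `g g'` is
nondecreasing on each side of `x`: it is `≥ 0` on `[0, x)` because `g 0 = 0` and `≤ 0` on `(x, 1]`
because `g' 1 = 0`. Hence `g²` increases towards `x` from both sides, and the unit jump
`g'(x⁻) - g'(x⁺) = 1` forces `g x ≥ 0`; together this gives `g ≥ 0`. Now `g'' = κ² g ≥ 0`, so `g'`
is nondecreasing on each side of `x`: `g' ≤ g' 1 = 0` on `(x, 1]` and `g' ≤ g'(x⁻) ≤ 1` on `[0, x)`.
Thus `g s ≤ s` on `[0, x]` and `g` decreases on `[x, 1]`, which is `g s ≤ min s x`. Finally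
`min s x = (min s x)^p (min s x)^(1-p) ≤ s^p x^(1-p)`.
-/

open Filter Set Topology

theorem min_le_rpow_mul_rpow_one_sub {s x p : ℝ} (hs : 0 ≤ s) (hx : 0 ≤ x) (hp : p ∈ Icc (0:ℝ) 1) :
    min s x ≤ s ^ p * x ^ (1 - p) := by
  have hm : 0 ≤ min s x := le_min hs hx
  calc min s x = min s x ^ p * min s x ^ (1 - p) := by
        rw [← Real.rpow_add' hm (by norm_num), add_sub_cancel, Real.rpow_one]
    _ ≤ s ^ p * x ^ (1 - p) := by
        gcongr
        · exact hp.1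
        · exact min_le_left s x
        · linarith [hp.2]
        · exact min_le_right s x

theorem nonneg_of_monotoneOn_sq {f : ℝ → ℝ} {a b t : ℝ} (hf : ContinuousOn f (Icc a b))
    (hmono : MonotoneOn (fun t => f t ^ 2) (Icc a b)) (hb : 0 ≤ f b) (ht : t ∈ Icc a b) :
    0 ≤ f t := by
  by_contra! hneg
  obtain ⟨c, hc, hfc⟩ :=
    intermediate_value_Icc ht.2 (hf.mono (Icc_subset_Icc_left ht.1)) ⟨hneg.le, hb⟩
  have hsq : f t ^ 2 ≤ f c ^ 2 := hmono ht ⟨ht.1.trans hc.1, hc.2⟩ hc.1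
  rw [hfc] at hsq
  nlinarith

theorem nonneg_of_antitoneOn_sq {f : ℝ → ℝ} {a b t : ℝ} (hf : ContinuousOn f (Icc a b))
    (hanti : AntitoneOn (fun t => f t ^ 2) (Icc a b)) (ha : 0 ≤ f a) (ht : t ∈ Icc a b) :
    0 ≤ f t := by
  by_contra! hneg
  obtain ⟨c, hc, hfc⟩ :=
    intermediate_value_Icc' ht.1 (hf.mono (Icc_subset_Icc_right ht.2)) ⟨hneg.le, ha⟩
  have hsq : f t ^ 2 ≤ f c ^ 2 := hanti ⟨hc.1, hc.2.trans ht.2⟩ ht hc.2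
  rw [hfc] at hsq
  nlinarith

structure SolvesAwayFrom (κ : ℝ → ℝ) (x : ℝ) (g g' : ℝ → ℝ) : Prop where
  continuousOn : ContinuousOn g (Icc 0 1)
  hasDerivWithinAt : ∀ s ∈ Icc (0:ℝ) 1, s ≠ x → HasDerivWithinAt g (g' s) (Icc 0 1) s
  hasDerivWithinAt_deriv :
    ∀ s ∈ Icc (0:ℝ) 1, s ≠ x → HasDerivWithinAt g' (κ s ^ 2 * g s) (Icc 0 1) s

namespace SolvesAwayFrom

variable {κ g g' : ℝ → ℝ} {x : ℝ} {D : Set ℝ}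

theorem hasDerivWithinAt_interior (h : SolvesAwayFrom κ x g g') (hD : D ⊆ Icc 0 1)
    (hxD : x ∉ interior D) : ∀ t ∈ interior D, HasDerivWithinAt g (g' t) (interior D) t :=
  fun t ht => (h.hasDerivWithinAt t (hD (interior_subset ht)) (ne_of_mem_of_not_mem ht hxD)).mono
    (interior_subset.trans hD)

theorem hasDerivWithinAt_deriv_interior (h : SolvesAwayFrom κ x g g') (hD : D ⊆ Icc 0 1)
    (hxD : x ∉ interior D) :
    ∀ t ∈ interior D, HasDerivWithinAt g' (κ t ^ 2 * g t) (interior D) t :=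
  fun t ht => (h.hasDerivWithinAt_deriv t (hD (interior_subset ht))
    (ne_of_mem_of_not_mem ht hxD)).mono (interior_subset.trans hD)

theorem continuousOn_deriv (h : SolvesAwayFrom κ x g g') (hD : D ⊆ Icc 0 1) (hxD : x ∉ D) :
    ContinuousOn g' D :=
  fun t ht => (h.hasDerivWithinAt_deriv t (hD ht)
    (ne_of_mem_of_not_mem ht hxD)).continuousWithinAt.mono hD

theorem monotoneOn_mul_deriv (h : SolvesAwayFrom κ x g g') (hDc : Convex ℝ D)
    (hD : D ⊆ Icc 0 1) (hxD : x ∉ D) : MonotoneOn (fun t => g t * g' t) D := by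
  have hxD' : x ∉ interior D := fun hx => hxD (interior_subset hx)
  refine monotoneOn_of_hasDerivWithinAt_nonneg hDc
    ((h.continuousOn.mono hD).mul (h.continuousOn_deriv hD hxD))
    (fun t ht => (h.hasDerivWithinAt_interior hD hxD' t ht).mul
      (h.hasDerivWithinAt_deriv_interior hD hxD' t ht)) (fun t _ => ?_)
  nlinarith [sq_nonneg (g' t), sq_nonneg (κ t * g t)]

theorem mul_deriv_nonneg_of_lt (h : SolvesAwayFrom κ x g g') (hg0 : g 0 = 0) (hx1 : x ≤ 1)
    {t : ℝ} (ht : t ∈ Ico 0 x) : 0 ≤ g t * g' t := by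
  have hmono := h.monotoneOn_mul_deriv (convex_Ico 0 x)
    (Ico_subset_Icc_self.trans (Icc_subset_Icc_right hx1)) (fun hx => lt_irrefl x hx.2)
  simpa [hg0] using hmono ⟨le_rfl, ht.1.trans_lt ht.2⟩ ht ht.1

theorem mul_deriv_nonpos_of_gt (h : SolvesAwayFrom κ x g g') (hg'1 : g' 1 = 0) (hx0 : 0 ≤ x)
    {t : ℝ} (ht : t ∈ Ioc x 1) : g t * g' t ≤ 0 := by
  have hmono := h.monotoneOn_mul_deriv (convex_Ioc x 1)
    (Ioc_subset_Icc_self.trans (Icc_subset_Icc_left hx0)) (fun hx => lt_irrefl x hx.1)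
  simpa [hg'1] using hmono ht ⟨ht.1.trans_le ht.2, le_rfl⟩ ht.2

theorem monotoneOn_sq (h : SolvesAwayFrom κ x g g') (hg0 : g 0 = 0) (hx1 : x ≤ 1) :
    MonotoneOn (fun t => g t ^ 2) (Icc 0 x) := by
  have hD : Icc 0 x ⊆ Icc 0 1 := Icc_subset_Icc_right hx1
  have hxD : x ∉ interior (Icc 0 x) := by simp [interior_Icc]
  refine monotoneOn_of_hasDerivWithinAt_nonneg (convex_Icc 0 x) ((h.continuousOn.mono hD).pow 2)
    (fun t ht => (h.hasDerivWithinAt_interior hD hxD t ht).pow 2) (fun t ht => ?_)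
  rw [interior_Icc] at ht
  simpa [mul_assoc] using
    mul_nonneg zero_le_two (h.mul_deriv_nonneg_of_lt hg0 hx1 (Ioo_subset_Ico_self ht))

theorem antitoneOn_sq (h : SolvesAwayFrom κ x g g') (hg'1 : g' 1 = 0) (hx0 : 0 ≤ x) :
    AntitoneOn (fun t => g t ^ 2) (Icc x 1) := by
  have hD : Icc x 1 ⊆ Icc 0 1 := Icc_subset_Icc_left hx0
  have hxD : x ∉ interior (Icc x 1) := by simp [interior_Icc]
  refine antitoneOn_of_hasDerivWithinAt_nonpos (convex_Icc x 1) ((h.continuousOn.mono hD).pow 2)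
    (fun t ht => (h.hasDerivWithinAt_interior hD hxD t ht).pow 2) (fun t ht => ?_)
  rw [interior_Icc] at ht
  simpa [mul_assoc] using
    mul_nonpos_of_nonneg_of_nonpos zero_le_two
      (h.mul_deriv_nonpos_of_gt hg'1 hx0 (Ioo_subset_Ioc_self ht))

theorem nonneg_apply_self (h : SolvesAwayFrom κ x g g') (hg0 : g 0 = 0) (hg'1 : g' 1 = 0)
    (hx : x ∈ Ioc 0 1) {L R : ℝ} (hL : Tendsto g' (𝓝[Ioo 0 x] x) (𝓝 L))
    (hR : x < 1 → Tendsto g' (𝓝[Ioo x 1] x) (𝓝 R) ∧ L - R = 1) (hL1 : x = 1 → L = 1) :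
    0 ≤ g x := by
  have hgx : ContinuousWithinAt g (Icc 0 1) x := h.continuousOn x ⟨hx.1.le, hx.2⟩
  have hleft : 0 ≤ g x * L := by
    have := right_nhdsWithin_Ioo_neBot hx.1
    refine ge_of_tendsto
      ((hgx.mono (Ioo_subset_Icc_self.trans (Icc_subset_Icc_right hx.2))).tendsto.mul hL)
      (eventually_nhdsWithin_of_forall fun t ht => ?_)
    exact h.mul_deriv_nonneg_of_lt hg0 hx.2 (Ioo_subset_Ico_self ht)
  rcases hx.2.eq_or_lt with hx1 | hx1
  · simpa [hL1 hx1] using hleft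
  obtain ⟨hR, hLR⟩ := hR hx1
  have hright : g x * R ≤ 0 := by
    have := left_nhdsWithin_Ioo_neBot hx1
    refine le_of_tendsto
      ((hgx.mono (Ioo_subset_Icc_self.trans (Icc_subset_Icc_left hx.1.le))).tendsto.mul hR)
      (eventually_nhdsWithin_of_forall fun t ht => ?_)
    exact h.mul_deriv_nonpos_of_gt hg'1 hx.1.le (Ioo_subset_Ioc_self ht)
  calc 0 ≤ g x * L - g x * R := by linarith
    _ = g x := by rw [← mul_sub, hLR, mul_one]

theorem nonneg (h : SolvesAwayFrom κ x g g') (hg0 : g 0 = 0) (hg'1 : g' 1 = 0)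
    (hx : x ∈ Icc 0 1) (hgx : 0 ≤ g x) {t : ℝ} (ht : t ∈ Icc 0 1) : 0 ≤ g t := by
  rcases le_total t x with htx | hxt
  · exact nonneg_of_monotoneOn_sq (h.continuousOn.mono (Icc_subset_Icc_right hx.2))
      (h.monotoneOn_sq hg0 hx.2) hgx ⟨ht.1, htx⟩
  · exact nonneg_of_antitoneOn_sq (h.continuousOn.mono (Icc_subset_Icc_left hx.1))
      (h.antitoneOn_sq hg'1 hx.1) hgx ⟨hxt, ht.2⟩

theorem monotoneOn_deriv (h : SolvesAwayFrom κ x g g') (hg : ∀ t ∈ Icc 0 1, 0 ≤ g t)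
    (hDc : Convex ℝ D) (hD : D ⊆ Icc 0 1) (hxD : x ∉ D) : MonotoneOn g' D :=
  monotoneOn_of_hasDerivWithinAt_nonneg hDc (h.continuousOn_deriv hD hxD)
    (h.hasDerivWithinAt_deriv_interior hD fun hx => hxD (interior_subset hx))
    fun t ht => mul_nonneg (sq_nonneg _) (hg t (hD (interior_subset ht)))

theorem deriv_nonpos_of_gt (h : SolvesAwayFrom κ x g g') (hg : ∀ t ∈ Icc 0 1, 0 ≤ g t)
    (hg'1 : g' 1 = 0) (hx0 : 0 ≤ x) {t : ℝ} (ht : t ∈ Ioc x 1) : g' t ≤ 0 := by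
  have hmono := h.monotoneOn_deriv hg (convex_Ioc x 1)
    (Ioc_subset_Icc_self.trans (Icc_subset_Icc_left hx0)) (fun hx => lt_irrefl x hx.1)
  simpa [hg'1] using hmono ht ⟨ht.1.trans_le ht.2, le_rfl⟩ ht.2

theorem deriv_le_of_lt (h : SolvesAwayFrom κ x g g') (hg : ∀ t ∈ Icc 0 1, 0 ≤ g t)
    (hx1 : x ≤ 1) {L : ℝ} (hL : Tendsto g' (𝓝[Ioo 0 x] x) (𝓝 L)) {t : ℝ} (ht : t ∈ Ico 0 x) :
    g' t ≤ L := by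
  have hmono := h.monotoneOn_deriv hg (convex_Ico 0 x)
    (Ico_subset_Icc_self.trans (Icc_subset_Icc_right hx1)) (fun hx => lt_irrefl x hx.2)
  have := right_nhdsWithin_Ioo_neBot ht.2
  exact ge_of_tendsto (hL.mono_left (nhdsWithin_mono _ (Ioo_subset_Ioo_left ht.1)))
    (eventually_nhdsWithin_of_forall fun c hc =>
      hmono ht ⟨ht.1.trans hc.1.le, hc.2⟩ hc.1.le)

theorem left_limit_le_one (h : SolvesAwayFrom κ x g g') (hg : ∀ t ∈ Icc 0 1, 0 ≤ g t)
    (hg'1 : g' 1 = 0) (hx : x ∈ Icc 0 1) {L R : ℝ}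
    (hR : x < 1 → Tendsto g' (𝓝[Ioo x 1] x) (𝓝 R) ∧ L - R = 1) (hL1 : x = 1 → L = 1) :
    L ≤ 1 := by
  rcases hx.2.eq_or_lt with hx1 | hx1
  · exact (hL1 hx1).le
  obtain ⟨hR, hLR⟩ := hR hx1
  have := left_nhdsWithin_Ioo_neBot hx1
  have hR0 : R ≤ 0 := le_of_tendsto hR (eventually_nhdsWithin_of_forall fun t ht =>
    h.deriv_nonpos_of_gt hg hg'1 hx.1 (Ioo_subset_Ioc_self ht))
  linarith

theorem le_self_of_deriv_le_one (h : SolvesAwayFrom κ x g g') (hg0 : g 0 = 0) (hx1 : x ≤ 1)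
    (hg' : ∀ t ∈ Ico 0 x, g' t ≤ 1) {t : ℝ} (ht : t ∈ Icc 0 x) : g t ≤ t := by
  have hD : Icc 0 x ⊆ Icc 0 1 := Icc_subset_Icc_right hx1
  have hxD : x ∉ interior (Icc 0 x) := by simp [interior_Icc]
  have hmono : MonotoneOn (fun t => t - g t) (Icc 0 x) := by
    refine monotoneOn_of_hasDerivWithinAt_nonneg (convex_Icc 0 x)
      (continuousOn_id.sub (h.continuousOn.mono hD))
      (fun t ht => (hasDerivWithinAt_id t _).sub (h.hasDerivWithinAt_interior hD hxD t ht))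
      (fun t ht => ?_)
    rw [interior_Icc] at ht
    linarith [hg' t (Ioo_subset_Ico_self ht)]
  simpa [hg0] using hmono ⟨le_rfl, ht.1.trans ht.2⟩ ht ht.1

theorem antitoneOn_of_deriv_nonpos (h : SolvesAwayFrom κ x g g') (hx0 : 0 ≤ x)
    (hg' : ∀ t ∈ Ioc x 1, g' t ≤ 0) : AntitoneOn g (Icc x 1) := by
  have hD : Icc x 1 ⊆ Icc 0 1 := Icc_subset_Icc_left hx0
  have hxD : x ∉ interior (Icc x 1) := by simp [interior_Icc]
  refine antitoneOn_of_hasDerivWithinAt_nonpos (convex_Icc x 1) (h.continuousOn.mono hD)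
    (h.hasDerivWithinAt_interior hD hxD) (fun t ht => ?_)
  rw [interior_Icc] at ht
  exact hg' t (Ioo_subset_Ioc_self ht)

end SolvesAwayFrom

theorem stmt_11_general (κ : ℝ → ℝ)
    (x : ℝ) (hx : x ∈ Set.Ioc (0:ℝ) 1)
    (g g' : ℝ → ℝ)
    (hgc : ContinuousOn g (Set.Icc 0 1))
    (hg0 : g 0 = 0)
    (hbc : g' 1 = 0)
    (hd1 : ∀ s ∈ Set.Icc (0:ℝ) 1, s ≠ x → HasDerivWithinAt g (g' s) (Set.Icc 0 1) s)
    (hd2 : ∀ s ∈ Set.Icc (0:ℝ) 1, s ≠ x →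
      HasDerivWithinAt g' (κ s ^ 2 * g s) (Set.Icc 0 1) s)
    (hjump : ∃ L R : ℝ,
      Tendsto g' (nhdsWithin x (Set.Ioo 0 x)) (nhds L) ∧
      (x < 1 → Tendsto g' (nhdsWithin x (Set.Ioo x 1)) (nhds R) ∧ L - R = 1) ∧
      (x = 1 → L = 1)) :
    ∀ s ∈ Set.Icc (0:ℝ) 1,
      g s ≤ min s x ∧ ∀ p ∈ Set.Icc (0:ℝ) 1, g s ≤ s ^ p * x ^ (1 - p) := by
  intro s hs
  obtain ⟨L, R, hL, hR, hL1⟩ := hjump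
  have h : SolvesAwayFrom κ x g g' := ⟨hgc, hd1, hd2⟩
  have hx' : x ∈ Icc 0 1 := Ioc_subset_Icc_self hx
  have hg : ∀ t ∈ Icc 0 1, 0 ≤ g t :=
    fun t => h.nonneg hg0 hbc hx' (h.nonneg_apply_self hg0 hbc hx hL hR hL1)
  have hleft : ∀ t ∈ Icc 0 x, g t ≤ t := fun t => h.le_self_of_deriv_le_one hg0 hx.2
    fun u hu => (h.deriv_le_of_lt hg hx.2 hL hu).trans (h.left_limit_le_one hg hbc hx' hR hL1)
  have hright : AntitoneOn g (Icc x 1) :=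
    h.antitoneOn_of_deriv_nonpos hx.1.le fun t => h.deriv_nonpos_of_gt hg hbc hx.1.le
  have hmin : g s ≤ min s x := by
    rcases le_total s x with hsx | hxs
    · rw [min_eq_left hsx]
      exact hleft s ⟨hs.1, hsx⟩
    · rw [min_eq_right hxs]
      exact (hright ⟨le_rfl, hx.2⟩ ⟨hxs, hs.2⟩ hxs).trans (hleft x ⟨hx.1.le, le_rfl⟩)
  exact ⟨hmin, fun p hp => hmin.trans (min_le_rpow_mul_rpow_one_sub hs.1 hx.1.le hp)⟩

theorem stmt_11 (κ : ℝ → ℝ) (hκc : ContinuousOn κ (Set.Icc 0 1))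
    (hκ0 : ∀ s ∈ Set.Icc (0:ℝ) 1, 0 ≤ κ s)
    (x : ℝ) (hx : x ∈ Set.Ioc (0:ℝ) 1)
    (g g' : ℝ → ℝ)
    (hgc : ContinuousOn g (Set.Icc 0 1))
    (hg0 : g 0 = 0)
    (hbc : g' 1 = 0)
    (hd1 : ∀ s ∈ Set.Icc (0:ℝ) 1, s ≠ x → HasDerivWithinAt g (g' s) (Set.Icc 0 1) s)
    (hd2 : ∀ s ∈ Set.Icc (0:ℝ) 1, s ≠ x →
      HasDerivWithinAt g' (κ s ^ 2 * g s) (Set.Icc 0 1) s)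
    (hjump : ∃ L R : ℝ,
      Tendsto g' (nhdsWithin x (Set.Ioo 0 x)) (nhds L) ∧
      (x < 1 → Tendsto g' (nhdsWithin x (Set.Ioo x 1)) (nhds R) ∧ L - R = 1) ∧
      (x = 1 → L = 1)) :
    ∀ s ∈ Set.Icc (0:ℝ) 1,
      g s ≤ min s x ∧ ∀ p ∈ Set.Icc (0:ℝ) 1, g s ≤ s ^ p * x ^ (1 - p) :=
  stmt_11_general κ x hx g g' hgc hg0 hbc hd1 hd2 hjump
end

section
/- Let κ : [0,1] → ℝ be continuous with ϱ = ∫₀¹ s κ(s)² ds < ∞, and let G be the Green function for σ ↦ σ'' − κ² σ with σ(0)=0, σ'(1)=0. Then inf_{0<s,x≤1} G(s,x)/(s x) ≥ e^{-ϱ}/(1+ϱ). -/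
/-!
Write `ϱ = ∫₀¹ u κ(u)² du`. Since `g'' = κ² g` and `g'` jumps down by `1` at the pole `x`, a
minimum principle gives `g ≥ 0`. Hence `g` is convex on `[0, x]` and on `[x, 1]`; with `g 0 = 0`
and `g' 1 = 0` this makes `g t / t` nondecreasing on `(0, x]`, `g` nonincreasing on `[x, 1]`, and
`g u ≤ (g x / x) u` everywhere. Integrating `g''` across the jump gives
`1 = g' 0 + ∫₀¹ κ² g ≤ (g x / x) (1 + ϱ)`. Two Grönwall estimates then lose at most `e^{-ϱ}`:
on `(0, x)` because `t g' - g = ∫₀ᵗ u κ² g ≤ (g t / t) ∫₀ᵗ u² κ²`, and on `(x, 1)` because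
`g' t = -∫ₜ¹ κ² g ≥ -g t ∫ₜ¹ κ²`.
-/

open Filter MeasureTheory intervalIntegral Set Topology

theorem hasDerivAt_integral_of_continuousOn {f : ℝ → ℝ} {a b c t : ℝ}
    (hf : ContinuousOn f (Icc a b)) (hc : c ∈ Icc a b) (ht : t ∈ Ioo a b) :
    HasDerivAt (fun s => ∫ u in c..s, f u) (f t) t :=
  integral_hasDerivAt_right
    (hf.mono (uIcc_subset_Icc hc (Ioo_subset_Icc_self ht))).intervalIntegrable
    ((hf.mono Ioo_subset_Icc_self).stronglyMeasurableAtFilter isOpen_Ioo t ht)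
    ((hf t (Ioo_subset_Icc_self ht)).continuousAt (Icc_mem_nhds ht.1 ht.2))

theorem continuousOn_integral_of_continuousOn {f : ℝ → ℝ} {a b c : ℝ}
    (hf : ContinuousOn f (Icc a b)) (hc : c ∈ Icc a b) :
    ContinuousOn (fun s => ∫ u in c..s, f u) (Icc a b) := by
  have hab : a ≤ b := hc.1.trans hc.2
  rw [← uIcc_of_le hab] at hf hc ⊢
  exact continuousOn_primitive_interval' hf.intervalIntegrable hc

theorem mul_exp_sub_le_of_mul_le_deriv {f f' W w : ℝ → ℝ} {a b : ℝ} (hab : a ≤ b)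
    (hf : ContinuousOn f (Icc a b)) (hW : ContinuousOn W (Icc a b))
    (hf' : ∀ t ∈ Ioo a b, HasDerivAt f (f' t) t) (hW' : ∀ t ∈ Ioo a b, HasDerivAt W (w t) t)
    (h : ∀ t ∈ Ioo a b, w t * f t ≤ f' t) :
    f a * Real.exp (W b - W a) ≤ f b := by
  have hmono : MonotoneOn (fun t => f t * Real.exp (-W t)) (Icc a b) := by
    refine monotoneOn_of_hasDerivWithinAt_nonneg (convex_Icc a b) (hf.mul hW.neg.rexp)
      (f' := fun t => (f' t - w t * f t) * Real.exp (-W t)) ?_ ?_ <;> rw [interior_Icc]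
    · intro t ht
      refine (((hf' t ht).mul (hW' t ht).neg.exp).congr_deriv ?_).hasDerivWithinAt
      simp only [Pi.neg_apply]
      ring
    · intro t ht
      exact mul_nonneg (sub_nonneg.2 (h t ht)) (Real.exp_nonneg _)
  have := hmono (left_mem_Icc.2 hab) (right_mem_Icc.2 hab) hab
  calc f a * Real.exp (W b - W a) = f a * Real.exp (-W a) * Real.exp (W b) := by
        rw [mul_assoc, ← Real.exp_add, neg_add_eq_sub]
    _ ≤ f b * Real.exp (-W b) * Real.exp (W b) := by gcongr
    _ = f b := by rw [mul_assoc, ← Real.exp_add, neg_add_cancel, Real.exp_zero, mul_one]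

theorem le_mul_exp_sub_of_deriv_le_mul {f f' W w : ℝ → ℝ} {a b : ℝ} (hab : a ≤ b)
    (hf : ContinuousOn f (Icc a b)) (hW : ContinuousOn W (Icc a b))
    (hf' : ∀ t ∈ Ioo a b, HasDerivAt f (f' t) t) (hW' : ∀ t ∈ Ioo a b, HasDerivAt W (w t) t)
    (h : ∀ t ∈ Ioo a b, f' t ≤ w t * f t) :
    f b ≤ f a * Real.exp (W b - W a) := by
  have := mul_exp_sub_le_of_mul_le_deriv (f := -f) (f' := -f') hab hf.neg hW
    (fun t ht => (hf' t ht).neg) hW' (fun t ht => by simpa using h t ht)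
  simpa using this

theorem nonpos_of_isMinOn_right_of_tendsto_deriv {f f' : ℝ → ℝ} {a b L : ℝ}
    (hmin : IsMinOn f (Icc a b) b) (hab : a < b) (hf : ContinuousOn f (Icc a b))
    (hf' : ∀ t ∈ Ioo a b, HasDerivAt f (f' t) t) (hL : Tendsto f' (𝓝[<] b) (𝓝 L)) :
    L ≤ 0 := by
  by_contra! hL0
  obtain ⟨c, hcb, hc⟩ := mem_nhdsLT_iff_exists_Ioo_subset.1
    ((hL.eventually (lt_mem_nhds hL0)).and (Ioo_mem_nhdsLT hab))
  have hc' : max a c < b := max_lt hab hcb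
  have hsub : Ioo (max a c) b ⊆ Ioo c b := Ioo_subset_Ioo_left (le_max_right a c)
  have hmono : StrictMonoOn f (Icc (max a c) b) := by
    refine strictMonoOn_of_hasDerivWithinAt_pos (f' := f') (convex_Icc _ _)
      (hf.mono (Icc_subset_Icc_left (le_max_left a c))) ?_ ?_ <;> rw [interior_Icc]
    · exact fun t ht => (hf' t (hc (hsub ht)).2).hasDerivWithinAt
    · exact fun t ht => (hc (hsub ht)).1
  exact (hmono (left_mem_Icc.2 hc'.le) (right_mem_Icc.2 hc'.le) hc').not_ge
    (hmin ⟨le_max_left a c, hc'.le⟩)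

theorem nonneg_of_isMinOn_left_of_tendsto_deriv {f f' : ℝ → ℝ} {a b R : ℝ}
    (hmin : IsMinOn f (Icc a b) a) (hab : a < b) (hf : ContinuousOn f (Icc a b))
    (hf' : ∀ t ∈ Ioo a b, HasDerivAt f (f' t) t) (hR : Tendsto f' (𝓝[>] a) (𝓝 R)) :
    0 ≤ R := by
  by_contra! hR0
  obtain ⟨c, hac, hc⟩ := mem_nhdsGT_iff_exists_Ioo_subset.1
    ((hR.eventually (gt_mem_nhds hR0)).and (Ioo_mem_nhdsGT hab))
  have hc' : a < min b c := lt_min hab hac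
  have hsub : Ioo a (min b c) ⊆ Ioo a c := Ioo_subset_Ioo_right (min_le_right b c)
  have hanti : StrictAntiOn f (Icc a (min b c)) := by
    refine strictAntiOn_of_hasDerivWithinAt_neg (f' := f') (convex_Icc _ _)
      (hf.mono (Icc_subset_Icc_right (min_le_left b c))) ?_ ?_ <;> rw [interior_Icc]
    · exact fun t ht => (hf' t (hc (hsub ht)).2).hasDerivWithinAt
    · exact fun t ht => (hc (hsub ht)).1
  exact (hanti (left_mem_Icc.2 hc'.le) (right_mem_Icc.2 hc'.le) hc').not_ge
    (hmin ⟨hc'.le, min_le_left b c⟩)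

-- The exponents of the two Grönwall estimates: `weightBelow κ t = ∫₀ᵗ u (1 - u / t) κ(u)² du`
-- and `weightAbove κ t = -∫ₜ¹ (u - t) κ(u)² du`.
noncomputable def weightBelow (κ : ℝ → ℝ) (t : ℝ) : ℝ :=
  (∫ u in (0:ℝ)..t, u * κ u ^ 2) - (∫ u in (0:ℝ)..t, u ^ 2 * κ u ^ 2) / t

noncomputable def weightAbove (κ : ℝ → ℝ) (t : ℝ) : ℝ :=
  t * (∫ u in (1:ℝ)..t, κ u ^ 2) - ∫ u in (1:ℝ)..t, u * κ u ^ 2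

section Weights

variable {κ : ℝ → ℝ}

theorem integral_mul_sq_le_integral (hκ : ContinuousOn κ (Icc 0 1)) {a b : ℝ} (ha : 0 ≤ a)
    (hab : a ≤ b) (hb : b ≤ 1) :
    ∫ u in a..b, u * κ u ^ 2 ≤ ∫ u in (0:ℝ)..1, u * κ u ^ 2 :=
  integral_mono_interval ha hab hb
    (ae_restrict_of_forall_mem measurableSet_Ioc fun _ hu => mul_nonneg hu.1.le (sq_nonneg _))
    ((continuousOn_id.mul (hκ.pow 2)).intervalIntegrable_of_Icc zero_le_one)

theorem integral_sq_mul_sq_le (hκ : ContinuousOn κ (Icc 0 1)) {t : ℝ} (ht0 : 0 ≤ t)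
    (ht1 : t ≤ 1) :
    ∫ u in (0:ℝ)..t, u ^ 2 * κ u ^ 2 ≤ t * ∫ u in (0:ℝ)..t, u * κ u ^ 2 := by
  have hsub : Icc 0 t ⊆ Icc 0 1 := Icc_subset_Icc_right ht1
  rw [← intervalIntegral.integral_const_mul]
  refine integral_mono_on ht0
    ((((continuousOn_id.pow 2).mul (hκ.pow 2)).mono hsub).intervalIntegrable_of_Icc ht0)
    (((continuousOn_const.mul (continuousOn_id.mul (hκ.pow 2))).mono hsub).intervalIntegrable_of_Icc
      ht0) fun u hu => ?_
  calc u ^ 2 * κ u ^ 2 = u * (u * κ u ^ 2) := by ring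
    _ ≤ t * (u * κ u ^ 2) := by gcongr; exacts [mul_nonneg hu.1 (sq_nonneg _), hu.2]

theorem hasDerivAt_weightBelow (hκ : ContinuousOn κ (Icc 0 1)) {t : ℝ} (ht : t ∈ Ioo 0 1) :
    HasDerivAt (weightBelow κ) ((∫ u in (0:ℝ)..t, u ^ 2 * κ u ^ 2) / t ^ 2) t := by
  have h0 : (0:ℝ) ∈ Icc 0 1 := left_mem_Icc.2 zero_le_one
  refine ((hasDerivAt_integral_of_continuousOn (f := fun u => u * κ u ^ 2)
    (continuousOn_id.mul (hκ.pow 2)) h0 ht).sub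
    ((hasDerivAt_integral_of_continuousOn (f := fun u => u ^ 2 * κ u ^ 2)
      ((continuousOn_id.pow 2).mul (hκ.pow 2)) h0 ht).div (hasDerivAt_id' t)
        ht.1.ne')).congr_deriv ?_
  field_simp
  ring

theorem continuousOn_weightBelow (hκ : ContinuousOn κ (Icc 0 1)) {a : ℝ} (ha : 0 < a) :
    ContinuousOn (weightBelow κ) (Icc a 1) := by
  have h0 : (0:ℝ) ∈ Icc 0 1 := left_mem_Icc.2 zero_le_one
  have hsub : Icc a 1 ⊆ Icc 0 1 := Icc_subset_Icc_left ha.le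
  exact ((continuousOn_integral_of_continuousOn (continuousOn_id.mul (hκ.pow 2)) h0).mono hsub).sub
    (((continuousOn_integral_of_continuousOn ((continuousOn_id.pow 2).mul (hκ.pow 2)) h0).mono
      hsub).div continuousOn_id fun t ht => (ha.trans_le ht.1).ne')

theorem weightBelow_nonneg (hκ : ContinuousOn κ (Icc 0 1)) {t : ℝ} (ht0 : 0 < t) (ht1 : t ≤ 1) :
    0 ≤ weightBelow κ t := by
  rw [weightBelow, sub_nonneg, div_le_iff₀ ht0, mul_comm]
  exact integral_sq_mul_sq_le hκ ht0.le ht1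

theorem weightBelow_le (hκ : ContinuousOn κ (Icc 0 1)) {t : ℝ} (ht0 : 0 ≤ t) (ht1 : t ≤ 1) :
    weightBelow κ t ≤ ∫ u in (0:ℝ)..1, u * κ u ^ 2 := by
  have := integral_mul_sq_le_integral hκ le_rfl ht0 ht1
  have : 0 ≤ (∫ u in (0:ℝ)..t, u ^ 2 * κ u ^ 2) / t :=
    div_nonneg (integral_nonneg ht0 fun u _ => by positivity) ht0
  rw [weightBelow]
  linarith

theorem hasDerivAt_weightAbove (hκ : ContinuousOn κ (Icc 0 1)) {t : ℝ} (ht : t ∈ Ioo 0 1) :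
    HasDerivAt (weightAbove κ) (∫ u in (1:ℝ)..t, κ u ^ 2) t := by
  have h1 : (1:ℝ) ∈ Icc 0 1 := right_mem_Icc.2 zero_le_one
  refine (((hasDerivAt_id' t).mul
    (hasDerivAt_integral_of_continuousOn (f := fun u => κ u ^ 2) (hκ.pow 2) h1 ht)).sub
    (hasDerivAt_integral_of_continuousOn (f := fun u => u * κ u ^ 2)
      (continuousOn_id.mul (hκ.pow 2)) h1 ht)).congr_deriv ?_
  ring

theorem continuousOn_weightAbove (hκ : ContinuousOn κ (Icc 0 1)) :
    ContinuousOn (weightAbove κ) (Icc 0 1) := by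
  have h1 : (1:ℝ) ∈ Icc 0 1 := right_mem_Icc.2 zero_le_one
  exact (continuousOn_id.mul (continuousOn_integral_of_continuousOn (hκ.pow 2) h1)).sub
    (continuousOn_integral_of_continuousOn (continuousOn_id.mul (hκ.pow 2)) h1)

theorem weightAbove_one : weightAbove κ 1 = 0 := by
  simp [weightAbove]

theorem weightAbove_le (hκ : ContinuousOn κ (Icc 0 1)) {t : ℝ} (ht0 : 0 ≤ t) (ht1 : t ≤ 1) :
    weightAbove κ t ≤ ∫ u in (0:ℝ)..1, u * κ u ^ 2 := by
  have := integral_mul_sq_le_integral hκ ht0 ht1 le_rfl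
  have : 0 ≤ ∫ u in t..1, κ u ^ 2 := integral_nonneg ht1 fun u _ => sq_nonneg _
  rw [weightAbove, integral_symm t 1, integral_symm t 1]
  nlinarith

end Weights

/-- `g = G(·, x)` is the Green function of `σ ↦ σ'' - κ² σ` with `σ 0 = 0`, `σ' 1 = 0`, and `g'` is
its derivative away from the pole; `jump` says `g'(x⁻) - g'(x⁺) = 1` (`g'(1⁻) = 1` if `x = 1`). -/
structure IsTensionGreen (κ : ℝ → ℝ) (x : ℝ) (g g' : ℝ → ℝ) : Prop where
  continuousOn_coeff : ContinuousOn κ (Icc 0 1)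
  mem_Ioc : x ∈ Ioc (0:ℝ) 1
  continuousOn : ContinuousOn g (Icc 0 1)
  apply_zero : g 0 = 0
  deriv_one : g' 1 = 0
  hasDerivWithinAt : ∀ s ∈ Icc (0:ℝ) 1, s ≠ x → HasDerivWithinAt g (g' s) (Icc 0 1) s
  hasDerivWithinAt_deriv :
    ∀ s ∈ Icc (0:ℝ) 1, s ≠ x → HasDerivWithinAt g' (κ s ^ 2 * g s) (Icc 0 1) s
  jump : ∃ L R : ℝ, Tendsto g' (𝓝[Ioo 0 x] x) (𝓝 L) ∧
    (x < 1 → Tendsto g' (𝓝[Ioo x 1] x) (𝓝 R) ∧ L - R = 1) ∧ (x = 1 → L = 1)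

namespace IsTensionGreen

variable {κ g g' : ℝ → ℝ} {x : ℝ}

theorem hasDerivAt (hG : IsTensionGreen κ x g g') {t : ℝ} (ht : t ∈ Ioo 0 1) (htx : t ≠ x) :
    HasDerivAt g (g' t) t :=
  (hG.hasDerivWithinAt t (Ioo_subset_Icc_self ht) htx).hasDerivAt (Icc_mem_nhds ht.1 ht.2)

theorem hasDerivAt_deriv (hG : IsTensionGreen κ x g g') {t : ℝ} (ht : t ∈ Ioo 0 1)
    (htx : t ≠ x) : HasDerivAt g' (κ t ^ 2 * g t) t :=
  (hG.hasDerivWithinAt_deriv t (Ioo_subset_Icc_self ht) htx).hasDerivAt (Icc_mem_nhds ht.1 ht.2)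

theorem continuousOn_deriv (hG : IsTensionGreen κ x g g') {s : Set ℝ} (hs : s ⊆ Icc 0 1)
    (hxs : x ∉ s) : ContinuousOn g' s := fun t ht =>
  (hG.hasDerivWithinAt_deriv t (hs ht) (ne_of_mem_of_not_mem ht hxs)).continuousWithinAt.mono hs

theorem continuousOn_sq_mul (hG : IsTensionGreen κ x g g') :
    ContinuousOn (fun t => κ t ^ 2 * g t) (Icc 0 1) :=
  (hG.continuousOn_coeff.pow 2).mul hG.continuousOn

theorem deriv_zero_add_integral_eq_one (hG : IsTensionGreen κ x g g') :
    g' 0 + ∫ t in (0:ℝ)..1, κ t ^ 2 * g t = 1 := by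
  obtain ⟨L, R, hL, hR, hL1⟩ := hG.jump
  obtain ⟨hx0, hx1⟩ := hG.mem_Ioc
  have hK := hG.continuousOn_sq_mul
  have hlim0 : Tendsto g' (𝓝[>] 0) (𝓝 (g' 0)) := by
    rw [← nhdsWithin_Ioo_eq_nhdsGT zero_lt_one]
    exact ((hG.hasDerivWithinAt_deriv 0 (left_mem_Icc.2 zero_le_one)
      hx0.ne).continuousWithinAt.mono Ioo_subset_Icc_self).tendsto
  have hleft : ∫ t in (0:ℝ)..x, κ t ^ 2 * g t = L - g' 0 :=
    integral_eq_sub_of_hasDerivAt_of_tendsto hx0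
      (fun t ht => hG.hasDerivAt_deriv ⟨ht.1, ht.2.trans_le hx1⟩ ht.2.ne)
      ((hK.mono (Icc_subset_Icc_right hx1)).intervalIntegrable_of_Icc hx0.le) hlim0
      (by rwa [← nhdsWithin_Ioo_eq_nhdsLT hx0])
  rcases hx1.lt_or_eq with hx1 | rfl
  · obtain ⟨hR, hLR⟩ := hR hx1
    have hlim1 : Tendsto g' (𝓝[<] 1) (𝓝 (g' 1)) := by
      rw [← nhdsWithin_Ioo_eq_nhdsLT zero_lt_one]
      exact ((hG.hasDerivWithinAt_deriv 1 (right_mem_Icc.2 zero_le_one)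
        hx1.ne').continuousWithinAt.mono Ioo_subset_Icc_self).tendsto
    have hright : ∫ t in x..1, κ t ^ 2 * g t = g' 1 - R :=
      integral_eq_sub_of_hasDerivAt_of_tendsto hx1
        (fun t ht => hG.hasDerivAt_deriv ⟨hx0.trans ht.1, ht.2⟩ ht.1.ne')
        ((hK.mono (Icc_subset_Icc_left hx0.le)).intervalIntegrable_of_Icc hx1.le)
        (by rwa [← nhdsWithin_Ioo_eq_nhdsGT hx1]) hlim1
    rw [← integral_add_adjacent_intervals
      ((hK.mono (Icc_subset_Icc_right hx1.le)).intervalIntegrable_of_Icc hx0.le)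
      ((hK.mono (Icc_subset_Icc_left hx0.le)).intervalIntegrable_of_Icc hx1.le),
      hleft, hright, hG.deriv_one]
    linarith
  · rw [hleft, hL1 rfl]
    ring

theorem not_isMinOn (hG : IsTensionGreen κ x g g') : ¬ IsMinOn g (Icc 0 1) x := by
  intro hmin
  obtain ⟨L, R, hL, hR, hL1⟩ := hG.jump
  obtain ⟨hx0, hx1⟩ := hG.mem_Ioc
  have hL0 : L ≤ 0 :=
    nonpos_of_isMinOn_right_of_tendsto_deriv (hmin.on_subset (Icc_subset_Icc_right hx1)) hx0
      (hG.continuousOn.mono (Icc_subset_Icc_right hx1))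
      (fun t ht => hG.hasDerivAt ⟨ht.1, ht.2.trans_le hx1⟩ ht.2.ne)
      (by rwa [← nhdsWithin_Ioo_eq_nhdsLT hx0])
  rcases hx1.lt_or_eq with hx1 | rfl
  · obtain ⟨hR, hLR⟩ := hR hx1
    have hR0 : 0 ≤ R :=
      nonneg_of_isMinOn_left_of_tendsto_deriv (hmin.on_subset (Icc_subset_Icc_left hx0.le)) hx1
        (hG.continuousOn.mono (Icc_subset_Icc_left hx0.le))
        (fun t ht => hG.hasDerivAt ⟨hx0.trans ht.1, ht.2⟩ ht.1.ne')
        (by rwa [← nhdsWithin_Ioo_eq_nhdsGT hx1])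
    linarith
  · linarith [hL1 rfl]

theorem apply_le_of_neg_on_Ioc (hG : IsTensionGreen κ x g g') {c s : ℝ} (hc : 0 ≤ c)
    (hcs : c < s) (hs : s ≤ 1) (hneg : ∀ u ∈ Ioc c s, g u < 0 ∧ u ≠ x) (hderiv : 0 ≤ g' s) :
    g c ≤ g s := by
  have hsub : Icc c s ⊆ Icc 0 1 := Icc_subset_Icc hc hs
  have hconc : ConcaveOn ℝ (Icc c s) g := by
    refine concaveOn_of_hasDerivWithinAt2_nonpos (f' := g') (f'' := fun u => κ u ^ 2 * g u)
      (convex_Icc c s) (hG.continuousOn.mono hsub) ?_ ?_ ?_ <;> rw [interior_Icc] <;>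
      intro u hu <;> have hu' : u ∈ Ioo 0 1 := ⟨hc.trans_lt hu.1, hu.2.trans_le hs⟩
    · exact (hG.hasDerivAt hu' (hneg u (Ioo_subset_Ioc_self hu)).2).hasDerivWithinAt
    · exact (hG.hasDerivAt_deriv hu' (hneg u (Ioo_subset_Ioc_self hu)).2).hasDerivWithinAt
    · exact mul_nonpos_of_nonneg_of_nonpos (sq_nonneg _) (hneg u (Ioo_subset_Ioc_self hu)).1.le
  have hslope := hconc.le_slope_of_hasDerivWithinAt (left_mem_Icc.2 hcs.le)
    (right_mem_Icc.2 hcs.le) hcs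
    ((hG.hasDerivWithinAt s (hsub (right_mem_Icc.2 hcs.le)) (hneg s ⟨hcs, le_rfl⟩).2).mono hsub)
  rw [slope_def_field, le_div_iff₀ (sub_pos.2 hcs)] at hslope
  linarith [mul_nonneg hderiv (sub_pos.2 hcs).le]

theorem nonneg (hG : IsTensionGreen κ x g g') {t : ℝ} (ht : t ∈ Icc 0 1) : 0 ≤ g t := by
  by_contra! hgt
  obtain ⟨s, hs, hmin⟩ := isCompact_Icc.exists_isMinOn ⟨t, ht⟩ hG.continuousOn
  have hgs : g s < 0 := (hmin ht).trans_lt hgt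
  have hgsx : g s < g x := (hmin (Ioc_subset_Icc_self hG.mem_Ioc)).lt_of_ne fun h =>
    hG.not_isMinOn fun u hu => (h ▸ hmin hu : g x ≤ g u)
  -- `c` is the last point before the minimiser `s` where `g ≥ 0` or where the pole sits;
  -- `g` is concave on `[c, s]`
  set S := Icc 0 s ∩ g ⁻¹' Ici 0 ∪ Icc 0 s ∩ {x}
  have hS : IsClosed S :=
    ((hG.continuousOn.mono (Icc_subset_Icc_right hs.2)).preimage_isClosed_of_isClosed
      isClosed_Icc isClosed_Ici).union (isClosed_Icc.inter isClosed_singleton)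
  obtain ⟨c, hcS, hcmax⟩ := (isCompact_Icc.of_isClosed_subset hS
    (union_subset inter_subset_left inter_subset_left)).exists_isGreatest
    ⟨0, Or.inl ⟨left_mem_Icc.2 hs.1, by simp [hG.apply_zero]⟩⟩
  obtain ⟨hc, hgc⟩ : c ∈ Icc 0 s ∧ g s < g c := by
    rcases hcS with ⟨hc, hgc⟩ | ⟨hc, rfl⟩
    exacts [⟨hc, hgs.trans_le hgc⟩, ⟨hc, hgsx⟩]
  have hcs : c < s := hc.2.lt_of_ne (by rintro rfl; exact lt_irrefl _ hgc)
  have hafter : ∀ u ∈ Ioc c s, g u < 0 ∧ u ≠ x := fun u hu => by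
    have hu' : u ∈ Icc 0 s := ⟨hc.1.trans hu.1.le, hu.2⟩
    have huS : u ∉ S := fun huS => (hcmax huS).not_gt hu.1
    exact ⟨not_le.1 fun h => huS (Or.inl ⟨hu', h⟩), fun h => huS (Or.inr ⟨hu', h⟩)⟩
  have hsx : s ≠ x := (hafter s ⟨hcs, le_rfl⟩).2
  have hderiv_s : g' s = 0 := by
    rcases hs.2.lt_or_eq with hs1 | rfl
    · have hs0 : 0 < s := hc.1.trans_lt hcs
      exact (hmin.isLocalMin (Icc_mem_nhds hs0 hs1)).hasDerivAt_eq_zero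
        (hG.hasDerivAt ⟨hs0, hs1⟩ hsx)
    · exact hG.deriv_one
  linarith [hG.apply_le_of_neg_on_Ioc hc.1 hcs hs.2 hafter hderiv_s.ge]

theorem pole_pos (hG : IsTensionGreen κ x g g') : 0 < g x :=
  (hG.nonneg (Ioc_subset_Icc_self hG.mem_Ioc)).lt_of_ne fun h =>
    hG.not_isMinOn fun u hu => (h ▸ hG.nonneg hu : g x ≤ g u)

theorem convexOn_Icc_zero (hG : IsTensionGreen κ x g g') : ConvexOn ℝ (Icc 0 x) g := by
  obtain ⟨hx0, hx1⟩ := hG.mem_Ioc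
  refine convexOn_of_hasDerivWithinAt2_nonneg (f' := g') (f'' := fun u => κ u ^ 2 * g u)
    (convex_Icc 0 x) (hG.continuousOn.mono (Icc_subset_Icc_right hx1)) ?_ ?_ ?_ <;>
    rw [interior_Icc] <;> intro u hu <;> have hu' : u ∈ Ioo 0 1 := ⟨hu.1, hu.2.trans_le hx1⟩
  · exact (hG.hasDerivAt hu' hu.2.ne).hasDerivWithinAt
  · exact (hG.hasDerivAt_deriv hu' hu.2.ne).hasDerivWithinAt
  · exact mul_nonneg (sq_nonneg _) (hG.nonneg (Ioo_subset_Icc_self hu'))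

theorem apply_le_div_mul (hG : IsTensionGreen κ x g g') {u t : ℝ} (hu : 0 ≤ u) (hut : u ≤ t)
    (htx : t ≤ x) : g u ≤ g t / t * u := by
  rcases hu.eq_or_lt with rfl | hu0
  · simp [hG.apply_zero]
  have := hG.convexOn_Icc_zero.secant_mono (left_mem_Icc.2 hG.mem_Ioc.1.le)
    ⟨hu, hut.trans htx⟩ ⟨hu.trans hut, htx⟩ hu0.ne' (hu0.trans_le hut).ne' hut
  simp only [hG.apply_zero, sub_zero] at this
  rwa [div_le_iff₀ hu0] at this

theorem deriv_zero_le (hG : IsTensionGreen κ x g g') : g' 0 ≤ g x / x := by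
  obtain ⟨hx0, hx1⟩ := hG.mem_Ioc
  have := hG.convexOn_Icc_zero.le_slope_of_hasDerivWithinAt (left_mem_Icc.2 hx0.le)
    (right_mem_Icc.2 hx0.le) hx0
    ((hG.hasDerivWithinAt 0 (left_mem_Icc.2 zero_le_one) hx0.ne).mono (Icc_subset_Icc_right hx1))
  rwa [slope_def_field, hG.apply_zero, sub_zero, sub_zero] at this

theorem antitoneOn_Icc_one (hG : IsTensionGreen κ x g g') : AntitoneOn g (Icc x 1) := by
  obtain ⟨hx0, hx1⟩ := hG.mem_Ioc
  have hmono : MonotoneOn g' (Ioc x 1) := by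
    refine monotoneOn_of_hasDerivWithinAt_nonneg (f' := fun t => κ t ^ 2 * g t) (convex_Ioc x 1)
      (hG.continuousOn_deriv (Ioc_subset_Icc_self.trans (Icc_subset_Icc_left hx0.le))
        (lt_irrefl x ·.1)) ?_ ?_ <;> rw [interior_Ioc] <;> intro t ht <;>
      have ht' : t ∈ Ioo 0 1 := ⟨hx0.trans ht.1, ht.2⟩
    · exact (hG.hasDerivAt_deriv ht' ht.1.ne').hasDerivWithinAt
    · exact mul_nonneg (sq_nonneg _) (hG.nonneg (Ioo_subset_Icc_self ht'))
  refine antitoneOn_of_hasDerivWithinAt_nonpos (f' := g') (convex_Icc x 1)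
    (hG.continuousOn.mono (Icc_subset_Icc_left hx0.le)) ?_ ?_ <;> rw [interior_Icc] <;>
    intro t ht
  · exact (hG.hasDerivAt ⟨hx0.trans ht.1, ht.2⟩ ht.1.ne').hasDerivWithinAt
  · exact (hmono (Ioo_subset_Ioc_self ht) ⟨ht.1.trans ht.2, le_rfl⟩ ht.2.le).trans_eq hG.deriv_one

theorem apply_le_slope_mul (hG : IsTensionGreen κ x g g') {u : ℝ} (hu : u ∈ Icc 0 1) :
    g u ≤ g x / x * u := by
  obtain ⟨hx0, hx1⟩ := hG.mem_Ioc
  rcases le_total u x with hux | hxu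
  · exact hG.apply_le_div_mul hu.1 hux le_rfl
  · calc g u ≤ g x := hG.antitoneOn_Icc_one ⟨le_rfl, hx1⟩ ⟨hxu, hu.2⟩ hxu
      _ = g x / x * x := by field_simp
      _ ≤ g x / x * u := by have := hG.pole_pos; gcongr

theorem one_div_one_add_le_slope (hG : IsTensionGreen κ x g g') :
    1 / (1 + ∫ u in (0:ℝ)..1, u * κ u ^ 2) ≤ g x / x := by
  have hϱ : 0 ≤ ∫ u in (0:ℝ)..1, u * κ u ^ 2 :=
    integral_nonneg zero_le_one fun u hu => mul_nonneg hu.1 (sq_nonneg _)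
  have hint : ∫ u in (0:ℝ)..1, κ u ^ 2 * g u ≤ g x / x * ∫ u in (0:ℝ)..1, u * κ u ^ 2 := by
    rw [← intervalIntegral.integral_const_mul]
    refine integral_mono_on zero_le_one
      (hG.continuousOn_sq_mul.intervalIntegrable_of_Icc zero_le_one)
      ((continuousOn_const.mul (continuousOn_id.mul
        (hG.continuousOn_coeff.pow 2))).intervalIntegrable_of_Icc zero_le_one) fun u hu => ?_
    calc κ u ^ 2 * g u ≤ κ u ^ 2 * (g x / x * u) := by gcongr; exact hG.apply_le_slope_mul hu
      _ = g x / x * (u * κ u ^ 2) := by ring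
  rw [div_le_iff₀ (by positivity)]
  linarith [hG.deriv_zero_add_integral_eq_one, hG.deriv_zero_le]

theorem mul_deriv_sub_eq_integral (hG : IsTensionGreen κ x g g') {t : ℝ} (ht0 : 0 ≤ t)
    (htx : t < x) : t * g' t - g t = ∫ u in (0:ℝ)..t, u * (κ u ^ 2 * g u) := by
  have hsub : Icc 0 t ⊆ Icc 0 1 := Icc_subset_Icc_right (htx.le.trans hG.mem_Ioc.2)
  rw [integral_eq_sub_of_hasDerivAt_of_le (f' := fun u => u * (κ u ^ 2 * g u)) ht0
    ((continuousOn_id.mul (hG.continuousOn_deriv hsub fun h => htx.not_ge h.2)).sub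
      (hG.continuousOn.mono hsub))
    (fun u hu => ?_)
    (((continuousOn_id.mul hG.continuousOn_sq_mul).mono hsub).intervalIntegrable_of_Icc ht0)]
  · simp [hG.apply_zero]
  · have hu' : u ∈ Ioo 0 1 := ⟨hu.1, hu.2.trans_le (hsub (right_mem_Icc.2 ht0)).2⟩
    have hux : u ≠ x := (hu.2.trans htx).ne
    refine (((hasDerivAt_id' u).mul (hG.hasDerivAt_deriv hu' hux)).sub
      (hG.hasDerivAt hu' hux)).congr_deriv ?_
    ring

theorem mul_deriv_sub_le (hG : IsTensionGreen κ x g g') {t : ℝ} (ht0 : 0 ≤ t) (htx : t < x) :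
    t * g' t - g t ≤ g t / t * ∫ u in (0:ℝ)..t, u ^ 2 * κ u ^ 2 := by
  have hsub : Icc 0 t ⊆ Icc 0 1 := Icc_subset_Icc_right (htx.le.trans hG.mem_Ioc.2)
  rw [hG.mul_deriv_sub_eq_integral ht0 htx, ← intervalIntegral.integral_const_mul]
  refine integral_mono_on ht0
    (((continuousOn_id.mul hG.continuousOn_sq_mul).mono hsub).intervalIntegrable_of_Icc ht0)
    (((continuousOn_const.mul ((continuousOn_id.pow 2).mul (hG.continuousOn_coeff.pow 2))).mono
      hsub).intervalIntegrable_of_Icc ht0) fun u hu => ?_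
  calc u * (κ u ^ 2 * g u) ≤ u * (κ u ^ 2 * (g t / t * u)) := by
        gcongr
        exacts [hu.1, hG.apply_le_div_mul hu.1 hu.2 htx.le]
    _ = g t / t * (u ^ 2 * κ u ^ 2) := by ring

theorem slope_mul_exp_neg_le (hG : IsTensionGreen κ x g g') {s : ℝ} (hs : s ∈ Ioc 0 x) :
    g x / x * Real.exp (-∫ u in (0:ℝ)..1, u * κ u ^ 2) ≤ g s / s := by
  obtain ⟨hx0, hx1⟩ := hG.mem_Ioc
  have hκ := hG.continuousOn_coeff
  have key := le_mul_exp_sub_of_deriv_le_mul (f := fun t => g t / t)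
    (f' := fun t => (g' t * t - g t * 1) / t ^ 2) hs.2
    ((hG.continuousOn.mono (Icc_subset_Icc hs.1.le hx1)).div continuousOn_id
      fun t ht => (hs.1.trans_le ht.1).ne')
    ((continuousOn_weightBelow hκ hs.1).mono (Icc_subset_Icc_right hx1))
    (fun t ht => (hG.hasDerivAt ⟨hs.1.trans ht.1, ht.2.trans_le hx1⟩ ht.2.ne).div
      (hasDerivAt_id' t) (hs.1.trans ht.1).ne')
    (fun t ht => hasDerivAt_weightBelow hκ ⟨hs.1.trans ht.1, ht.2.trans_le hx1⟩)
    (fun t ht => by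
      have := hG.mul_deriv_sub_le (hs.1.trans ht.1).le ht.2
      rw [show (∫ u in (0:ℝ)..t, u ^ 2 * κ u ^ 2) / t ^ 2 * (g t / t) =
        g t / t * (∫ u in (0:ℝ)..t, u ^ 2 * κ u ^ 2) / t ^ 2 by ring]
      gcongr
      linarith)
  have hW := weightBelow_le hκ hx0.le hx1
  have hWs := weightBelow_nonneg hκ hs.1 (hs.2.trans hx1)
  have hgs : 0 ≤ g s / s := div_nonneg (hG.nonneg ⟨hs.1.le, hs.2.trans hx1⟩) hs.1.le
  calc g x / x * Real.exp (-∫ u in (0:ℝ)..1, u * κ u ^ 2)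
      ≤ g s / s * Real.exp (weightBelow κ x - weightBelow κ s) *
          Real.exp (-∫ u in (0:ℝ)..1, u * κ u ^ 2) := by
        gcongr
    _ ≤ g s / s * Real.exp (∫ u in (0:ℝ)..1, u * κ u ^ 2) *
          Real.exp (-∫ u in (0:ℝ)..1, u * κ u ^ 2) := by
        gcongr
        linarith
    _ = g s / s := by rw [mul_assoc, ← Real.exp_add, add_neg_cancel, Real.exp_zero, mul_one]

theorem deriv_eq_neg_integral (hG : IsTensionGreen κ x g g') {t : ℝ} (hxt : x < t)
    (ht1 : t ≤ 1) : g' t = -∫ u in t..1, κ u ^ 2 * g u := by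
  have hx0 := hG.mem_Ioc.1
  have hsub : Icc t 1 ⊆ Icc 0 1 := Icc_subset_Icc_left (hx0.le.trans hxt.le)
  rw [integral_eq_sub_of_hasDerivAt_of_le ht1 (hG.continuousOn_deriv hsub fun h => hxt.not_ge h.1)
    (fun u hu => hG.hasDerivAt_deriv ⟨hx0.trans (hxt.trans hu.1), hu.2⟩ (hxt.trans hu.1).ne')
    ((hG.continuousOn_sq_mul.mono hsub).intervalIntegrable_of_Icc ht1), hG.deriv_one]
  ring

theorem integral_mul_le_deriv (hG : IsTensionGreen κ x g g') {t : ℝ} (hxt : x < t)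
    (ht1 : t ≤ 1) : (∫ u in (1:ℝ)..t, κ u ^ 2) * g t ≤ g' t := by
  have hsub : Icc t 1 ⊆ Icc 0 1 := Icc_subset_Icc_left (hG.mem_Ioc.1.le.trans hxt.le)
  rw [hG.deriv_eq_neg_integral hxt ht1, integral_symm, neg_mul, neg_le_neg_iff,
    ← intervalIntegral.integral_mul_const]
  refine integral_mono_on ht1
    ((hG.continuousOn_sq_mul.mono hsub).intervalIntegrable_of_Icc ht1)
    ((((hG.continuousOn_coeff.pow 2).mul continuousOn_const).mono hsub).intervalIntegrable_of_Icc
      ht1) fun u hu => ?_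
  exact mul_le_mul_of_nonneg_left
    (hG.antitoneOn_Icc_one ⟨hxt.le, ht1⟩ ⟨hxt.le.trans hu.1, hu.2⟩ hu.1) (sq_nonneg _)

theorem mul_exp_neg_le_apply_one (hG : IsTensionGreen κ x g g') :
    g x * Real.exp (-∫ u in (0:ℝ)..1, u * κ u ^ 2) ≤ g 1 := by
  obtain ⟨hx0, hx1⟩ := hG.mem_Ioc
  have hκ := hG.continuousOn_coeff
  have key := mul_exp_sub_le_of_mul_le_deriv hx1
    (hG.continuousOn.mono (Icc_subset_Icc_left hx0.le))
    ((continuousOn_weightAbove hκ).mono (Icc_subset_Icc_left hx0.le))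
    (fun t ht => hG.hasDerivAt ⟨hx0.trans ht.1, ht.2⟩ ht.1.ne')
    (fun t ht => hasDerivAt_weightAbove hκ ⟨hx0.trans ht.1, ht.2⟩)
    (fun t ht => hG.integral_mul_le_deriv ht.1 ht.2.le)
  have hW := weightAbove_le hκ hx0.le hx1
  calc g x * Real.exp (-∫ u in (0:ℝ)..1, u * κ u ^ 2)
      ≤ g x * Real.exp (weightAbove κ 1 - weightAbove κ x) := by
        have := hG.pole_pos
        gcongr
        rw [weightAbove_one]
        linarith
    _ ≤ g 1 := key

theorem exp_neg_div_one_add_le (hG : IsTensionGreen κ x g g') {s : ℝ} (hs : s ∈ Ioc 0 1) :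
    Real.exp (-∫ u in (0:ℝ)..1, u * κ u ^ 2) / (1 + ∫ u in (0:ℝ)..1, u * κ u ^ 2) ≤
      g s / (s * x) := by
  obtain ⟨hx0, hx1⟩ := hG.mem_Ioc
  have hgs : 0 ≤ g s := hG.nonneg (Ioc_subset_Icc_self hs)
  have hpole : Real.exp (-∫ u in (0:ℝ)..1, u * κ u ^ 2) / (1 + ∫ u in (0:ℝ)..1, u * κ u ^ 2) ≤
      g x / x * Real.exp (-∫ u in (0:ℝ)..1, u * κ u ^ 2) := by
    rw [div_eq_inv_mul, ← one_div]
    exact mul_le_mul_of_nonneg_right hG.one_div_one_add_le_slope (Real.exp_nonneg _)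
  rcases le_or_gt s x with hsx | hxs
  · calc _ ≤ g x / x * Real.exp (-∫ u in (0:ℝ)..1, u * κ u ^ 2) := hpole
      _ ≤ g s / s := hG.slope_mul_exp_neg_le ⟨hs.1, hsx⟩
      _ ≤ g s / (s * x) :=
        div_le_div_of_nonneg_left hgs (mul_pos hs.1 hx0) (mul_le_of_le_one_right hs.1.le hx1)
  · calc _ ≤ g x / x * Real.exp (-∫ u in (0:ℝ)..1, u * κ u ^ 2) := hpole
      _ = g x * Real.exp (-∫ u in (0:ℝ)..1, u * κ u ^ 2) / x := by ring
      _ ≤ g 1 / x := by gcongr; exact hG.mul_exp_neg_le_apply_one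
      _ ≤ g s / x := by gcongr; exact hG.antitoneOn_Icc_one ⟨hxs.le, hs.2⟩ ⟨hx1, le_rfl⟩ hs.2
      _ ≤ g s / (s * x) :=
        div_le_div_of_nonneg_left hgs (mul_pos hs.1 hx0) (mul_le_of_le_one_left hx0.le hs.2)

end IsTensionGreen

theorem stmt_12 (κ : ℝ → ℝ) (hκc : ContinuousOn κ (Set.Icc 0 1))
    (x : ℝ) (hx : x ∈ Set.Ioc (0:ℝ) 1)
    (g g' : ℝ → ℝ)
    (hgc : ContinuousOn g (Set.Icc 0 1))
    (hg0 : g 0 = 0)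
    (hbc : g' 1 = 0)
    (hd1 : ∀ s ∈ Set.Icc (0:ℝ) 1, s ≠ x → HasDerivWithinAt g (g' s) (Set.Icc 0 1) s)
    (hd2 : ∀ s ∈ Set.Icc (0:ℝ) 1, s ≠ x →
      HasDerivWithinAt g' (κ s ^ 2 * g s) (Set.Icc 0 1) s)
    (hjump : ∃ L R : ℝ,
      Tendsto g' (nhdsWithin x (Set.Ioo 0 x)) (nhds L) ∧
      (x < 1 → Tendsto g' (nhdsWithin x (Set.Ioo x 1)) (nhds R) ∧ L - R = 1) ∧
      (x = 1 → L = 1)) :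
    ∀ s ∈ Set.Ioc (0:ℝ) 1,
      Real.exp (-(∫ u in (0:ℝ)..1, u * κ u ^ 2)) / (1 + ∫ u in (0:ℝ)..1, u * κ u ^ 2) ≤
        g s / (s * x) := fun _ hs =>
  IsTensionGreen.exp_neg_div_one_add_le ⟨hκc, hx, hgc, hg0, hbc, hd1, hd2, hjump⟩ hs
end

section
/- Let J : [0,1] → ℝ solve J''(s) = κ(s)² J(s) with J(0) = 0, J'(1) = 1, J(s) > 0 for s ∈ (0,1], where κ is continuous. Set ϱ = ∫₀¹ s κ(s)² ds. Then J'(0) ≥ e^{-ϱ}/(1+ϱ). -/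
open MeasureTheory intervalIntegral Set Filter Topology

/-!
The Wronskian `W(s) = s J'(s) - J(s)` of `J` with the solution `s` of `y'' = 0` vanishes at `0`
and has `W' = s κ² J ≥ 0`, so `W ≥ 0` and `J(s)/s` is nondecreasing. Inserting `J(t) ≤ (J(s)/s) t`
into `W(s) = ∫₀ˢ t κ² J` gives `W(s) ≤ (J(s)/s) K(s)` with `K(s) = ∫₀ˢ t² κ²`. At `s = 1` this is
`1 - J(1) ≤ J(1) K(1) ≤ J(1) ϱ`, i.e. `J(1) ≥ 1/(1+ϱ)`.

For `s > 0`, `(J/s)' = W/s² ≤ (J/s) K/s² = (J/s) G'`, where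
`G(s) = ∫₀ˢ t κ² - K(s)/s = ∫₀ˢ t(1 - t/s) κ²` satisfies `G ≥ 0` and `G(1) ≤ ϱ`. Hence
`(J(s)/s) e^{-G(s)}` is nonincreasing on `(0, 1]`, so `J(s)/s ≥ e^{-G(1)} J(1) ≥ e^{-ϱ} J(1)`,
and letting `s → 0⁺` gives `J'(0) ≥ e^{-ϱ} J(1)`.
-/

theorem HasDerivWithinAt.hasDerivAt_of_mem_Ioo {f : ℝ → ℝ} {f' a b s : ℝ}
    (hf : HasDerivWithinAt f f' (Icc a b) s) (hs : s ∈ Ioo a b) : HasDerivAt f f' s :=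
  hf.hasDerivAt (Icc_mem_nhds hs.1 hs.2)

theorem ContinuousOn.continuousOn_primitive_Icc {f : ℝ → ℝ} {a b : ℝ}
    (hf : ContinuousOn f (Icc a b)) (hab : a ≤ b) :
    ContinuousOn (fun x => ∫ t in a..x, f t) (Icc a b) := by
  have := continuousOn_primitive_interval (μ := volume) (f := f) (a := a) (b := b)
    (by rw [uIcc_of_le hab]; exact hf.integrableOn_Icc)
  rwa [uIcc_of_le hab] at this

theorem ContinuousOn.hasDerivAt_primitive {f : ℝ → ℝ} {a b s : ℝ}
    (hf : ContinuousOn f (Icc a b)) (hs : s ∈ Ioo a b) :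
    HasDerivAt (fun x => ∫ t in a..x, f t) (f s) s :=
  integral_hasDerivAt_right
    ((hf.mono (Icc_subset_Icc le_rfl hs.2.le)).intervalIntegrable_of_Icc hs.1.le)
    ((hf.mono Ioo_subset_Icc_self).stronglyMeasurableAtFilter isOpen_Ioo s hs)
    (hf.continuousAt (Icc_mem_nhds hs.1 hs.2))

theorem le_of_hasDerivWithinAt_of_le_div_self {J : ℝ → ℝ} {b c d : ℝ} (hb : 0 < b)
    (hJ : HasDerivWithinAt J d (Icc 0 b) 0) (hJ0 : J 0 = 0)
    (h : ∀ s ∈ Ioc 0 b, c ≤ J s / s) : c ≤ d := by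
  have hslope : Tendsto (fun s => J s / s) (𝓝[>] 0) (𝓝 d) :=
    ((hasDerivWithinAt_iff_tendsto_slope' (lt_irrefl 0)).1
      (hJ.mono_of_mem_nhdsWithin (Icc_mem_nhdsGT hb))).congr fun s => by
        rw [slope_def_field, hJ0, sub_zero, sub_zero]
  exact ge_of_tendsto hslope (eventually_of_mem (Ioc_mem_nhdsGT hb) h)

theorem monotoneOn_div_self {f f' : ℝ → ℝ} {b : ℝ} (hf : ContinuousOn f (Ioc 0 b))
    (hf' : ∀ s ∈ Ioo 0 b, HasDerivAt f (f' s) s) (h : ∀ s ∈ Ioo 0 b, f s ≤ s * f' s) :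
    MonotoneOn (fun s => f s / s) (Ioc 0 b) := by
  refine monotoneOn_of_hasDerivWithinAt_nonneg (convex_Ioc 0 b)
    (hf.div continuousOn_id fun s hs => hs.1.ne') (f' := fun s => (f' s * s - f s * 1) / s ^ 2)
    (fun s hs => ?_) (fun s hs => ?_) <;> rw [interior_Ioc] at hs
  · rw [interior_Ioc]
    exact ((hf' s hs).div (hasDerivAt_id s) hs.1.ne').hasDerivWithinAt
  · have := h s hs
    exact div_nonneg (by linarith) (sq_nonneg s)

noncomputable def firstMoment (κ : ℝ → ℝ) (s : ℝ) : ℝ := ∫ t in (0:ℝ)..s, t * κ t ^ 2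

noncomputable def secondMoment (κ : ℝ → ℝ) (s : ℝ) : ℝ := ∫ t in (0:ℝ)..s, t ^ 2 * κ t ^ 2

noncomputable def momentGap (κ : ℝ → ℝ) (s : ℝ) : ℝ := firstMoment κ s - secondMoment κ s / s

section Moments

variable {κ : ℝ → ℝ} {b : ℝ}

theorem secondMoment_nonneg {s : ℝ} (hs : 0 ≤ s) : 0 ≤ secondMoment κ s :=
  integral_nonneg hs fun t _ => by positivity

theorem secondMoment_le_mul_firstMoment {s : ℝ} (hκ : ContinuousOn κ (Icc 0 s)) (hs : 0 ≤ s) :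
    secondMoment κ s ≤ s * firstMoment κ s := by
  rw [firstMoment, ← intervalIntegral.integral_const_mul]
  refine integral_mono_on hs
    (ContinuousOn.intervalIntegrable_of_Icc hs (by fun_prop))
    (ContinuousOn.intervalIntegrable_of_Icc hs (by fun_prop)) fun t ht => ?_
  calc t ^ 2 * κ t ^ 2 = t * (t * κ t ^ 2) := by ring
    _ ≤ s * (t * κ t ^ 2) := mul_le_mul_of_nonneg_right ht.2 (mul_nonneg ht.1 (sq_nonneg _))

theorem momentGap_nonneg {s : ℝ} (hκ : ContinuousOn κ (Icc 0 s)) (hs : 0 < s) :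
    0 ≤ momentGap κ s := by
  rw [momentGap, sub_nonneg, div_le_iff₀' hs]
  exact secondMoment_le_mul_firstMoment hκ hs.le

theorem momentGap_le_firstMoment {s : ℝ} (hs : 0 ≤ s) : momentGap κ s ≤ firstMoment κ s :=
  sub_le_self _ (div_nonneg (secondMoment_nonneg hs) hs)

theorem continuousOn_momentGap (hκ : ContinuousOn κ (Icc 0 b)) (hb : 0 ≤ b) :
    ContinuousOn (momentGap κ) (Ioc 0 b) := by
  have h₁ : ContinuousOn (firstMoment κ) (Icc 0 b) :=
    ContinuousOn.continuousOn_primitive_Icc (f := fun t => t * κ t ^ 2) (by fun_prop) hb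
  have h₂ : ContinuousOn (secondMoment κ) (Icc 0 b) :=
    ContinuousOn.continuousOn_primitive_Icc (f := fun t => t ^ 2 * κ t ^ 2) (by fun_prop) hb
  exact (h₁.mono Ioc_subset_Icc_self).sub
    ((h₂.mono Ioc_subset_Icc_self).div continuousOn_id fun s hs => hs.1.ne')

theorem hasDerivAt_momentGap (hκ : ContinuousOn κ (Icc 0 b)) {s : ℝ} (hs : s ∈ Ioo 0 b) :
    HasDerivAt (momentGap κ) (secondMoment κ s / s ^ 2) s := by
  have h₁ : HasDerivAt (firstMoment κ) (s * κ s ^ 2) s :=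
    ContinuousOn.hasDerivAt_primitive (f := fun t => t * κ t ^ 2) (by fun_prop) hs
  have h₂ : HasDerivAt (secondMoment κ) (s ^ 2 * κ s ^ 2) s :=
    ContinuousOn.hasDerivAt_primitive (f := fun t => t ^ 2 * κ t ^ 2) (by fun_prop) hs
  refine (h₁.sub (h₂.div (hasDerivAt_id' s) hs.1.ne')).congr_deriv ?_
  field_simp
  ring

end Moments

section JacobiEquation

variable {κ J J' : ℝ → ℝ}

theorem wronskian_eq_integral (hκ : ContinuousOn κ (Icc 0 1))
    (hJ : ∀ s ∈ Icc (0:ℝ) 1, HasDerivWithinAt J (J' s) (Icc 0 1) s)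
    (hJ' : ∀ s ∈ Icc (0:ℝ) 1, HasDerivWithinAt J' (κ s ^ 2 * J s) (Icc 0 1) s)
    (hJ0 : J 0 = 0) {s : ℝ} (hs : s ∈ Icc (0:ℝ) 1) :
    s * J' s - J s = ∫ t in (0:ℝ)..s, t * (κ t ^ 2 * J t) := by
  have hsub : Icc 0 s ⊆ Icc (0:ℝ) 1 := Icc_subset_Icc le_rfl hs.2
  have hJc : ContinuousOn J (Icc 0 1) := fun t ht => (hJ t ht).continuousWithinAt
  have hJ'c : ContinuousOn J' (Icc 0 1) := fun t ht => (hJ' t ht).continuousWithinAt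
  rw [integral_eq_sub_of_hasDerivAt_of_le hs.1 (f := fun t => t * J' t - J t)
    (ContinuousOn.mono (by fun_prop) hsub) (fun t ht => ?_)
    (ContinuousOn.intervalIntegrable_of_Icc hs.1 (ContinuousOn.mono (by fun_prop) hsub))]
  · simp [hJ0]
  · have ht' : t ∈ Ioo (0:ℝ) 1 := ⟨ht.1, ht.2.trans_le hs.2⟩
    have hJt := (hJ t (Ioo_subset_Icc_self ht')).hasDerivAt_of_mem_Ioo ht'
    have hJ't := (hJ' t (Ioo_subset_Icc_self ht')).hasDerivAt_of_mem_Ioo ht'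
    exact (((hasDerivAt_id' t).mul hJ't).sub hJt).congr_deriv (by ring)

theorem wronskian_nonneg (hκ : ContinuousOn κ (Icc 0 1))
    (hJ : ∀ s ∈ Icc (0:ℝ) 1, HasDerivWithinAt J (J' s) (Icc 0 1) s)
    (hJ' : ∀ s ∈ Icc (0:ℝ) 1, HasDerivWithinAt J' (κ s ^ 2 * J s) (Icc 0 1) s)
    (hJ0 : J 0 = 0) (hJpos : ∀ s ∈ Ioc (0:ℝ) 1, 0 < J s) {s : ℝ} (hs : s ∈ Icc (0:ℝ) 1) :
    0 ≤ s * J' s - J s := by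
  rw [wronskian_eq_integral hκ hJ hJ' hJ0 hs]
  refine integral_nonneg hs.1 fun t ht => mul_nonneg ht.1 (mul_nonneg (sq_nonneg _) ?_)
  rcases ht.1.eq_or_lt with rfl | ht₀
  · exact hJ0.ge
  · exact (hJpos t ⟨ht₀, ht.2.trans hs.2⟩).le

theorem monotoneOn_div_self_of_jacobi (hκ : ContinuousOn κ (Icc 0 1))
    (hJ : ∀ s ∈ Icc (0:ℝ) 1, HasDerivWithinAt J (J' s) (Icc 0 1) s)
    (hJ' : ∀ s ∈ Icc (0:ℝ) 1, HasDerivWithinAt J' (κ s ^ 2 * J s) (Icc 0 1) s)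
    (hJ0 : J 0 = 0) (hJpos : ∀ s ∈ Ioc (0:ℝ) 1, 0 < J s) :
    MonotoneOn (fun s => J s / s) (Ioc 0 1) :=
  monotoneOn_div_self (fun t ht => (hJ t (Ioc_subset_Icc_self ht)).continuousWithinAt.mono
      Ioc_subset_Icc_self)
    (fun t ht => (hJ t (Ioo_subset_Icc_self ht)).hasDerivAt_of_mem_Ioo ht)
    fun _ ht => sub_nonneg.1 (wronskian_nonneg hκ hJ hJ' hJ0 hJpos (Ioo_subset_Icc_self ht))

theorem wronskian_le_secondMoment (hκ : ContinuousOn κ (Icc 0 1))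
    (hJ : ∀ s ∈ Icc (0:ℝ) 1, HasDerivWithinAt J (J' s) (Icc 0 1) s)
    (hJ' : ∀ s ∈ Icc (0:ℝ) 1, HasDerivWithinAt J' (κ s ^ 2 * J s) (Icc 0 1) s)
    (hJ0 : J 0 = 0) (hJpos : ∀ s ∈ Ioc (0:ℝ) 1, 0 < J s) {s : ℝ} (hs : s ∈ Ioc (0:ℝ) 1) :
    s * J' s - J s ≤ J s / s * secondMoment κ s := by
  have hsub : Icc 0 s ⊆ Icc (0:ℝ) 1 := Icc_subset_Icc le_rfl hs.2
  have hJc : ContinuousOn J (Icc 0 1) := fun t ht => (hJ t ht).continuousWithinAt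
  rw [wronskian_eq_integral hκ hJ hJ' hJ0 (Ioc_subset_Icc_self hs), secondMoment,
    ← intervalIntegral.integral_const_mul]
  refine integral_mono_on hs.1.le
    (ContinuousOn.intervalIntegrable_of_Icc hs.1.le (ContinuousOn.mono (by fun_prop) hsub))
    (ContinuousOn.intervalIntegrable_of_Icc hs.1.le (ContinuousOn.mono (by fun_prop) hsub))
    fun t ht => ?_
  have hJt : J t ≤ J s / s * t := by
    rcases ht.1.eq_or_lt with rfl | ht₀
    · simp [hJ0]
    · have := monotoneOn_div_self_of_jacobi hκ hJ hJ' hJ0 hJpos ⟨ht₀, ht.2.trans hs.2⟩ hs ht.2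
      rwa [div_le_iff₀ ht₀] at this
  have ht₀ : 0 ≤ t := ht.1
  calc t * (κ t ^ 2 * J t) ≤ t * (κ t ^ 2 * (J s / s * t)) := by gcongr
    _ = J s / s * (t ^ 2 * κ t ^ 2) := by ring

theorem one_div_one_add_firstMoment_le (hκ : ContinuousOn κ (Icc 0 1))
    (hJ : ∀ s ∈ Icc (0:ℝ) 1, HasDerivWithinAt J (J' s) (Icc 0 1) s)
    (hJ' : ∀ s ∈ Icc (0:ℝ) 1, HasDerivWithinAt J' (κ s ^ 2 * J s) (Icc 0 1) s)
    (hJ0 : J 0 = 0) (hJ'1 : J' 1 = 1) (hJpos : ∀ s ∈ Ioc (0:ℝ) 1, 0 < J s) :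
    1 / (1 + firstMoment κ 1) ≤ J 1 := by
  have hW := wronskian_le_secondMoment hκ hJ hJ' hJ0 hJpos (s := 1) ⟨one_pos, le_rfl⟩
  have hK := secondMoment_le_mul_firstMoment hκ zero_le_one
  have hK₀ := secondMoment_nonneg (κ := κ) zero_le_one
  have hJ1 := hJpos 1 ⟨one_pos, le_rfl⟩
  rw [hJ'1, one_mul, div_one] at hW
  rw [one_mul] at hK
  rw [div_le_iff₀ (by linarith)]
  nlinarith

theorem antitoneOn_div_self_mul_exp_neg_momentGap (hκ : ContinuousOn κ (Icc 0 1))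
    (hJ : ∀ s ∈ Icc (0:ℝ) 1, HasDerivWithinAt J (J' s) (Icc 0 1) s)
    (hJ' : ∀ s ∈ Icc (0:ℝ) 1, HasDerivWithinAt J' (κ s ^ 2 * J s) (Icc 0 1) s)
    (hJ0 : J 0 = 0) (hJpos : ∀ s ∈ Ioc (0:ℝ) 1, 0 < J s) :
    AntitoneOn (fun s => J s / s * Real.exp (-momentGap κ s)) (Ioc 0 1) := by
  have hJc : ContinuousOn J (Ioc 0 1) := fun t ht =>
    (hJ t (Ioc_subset_Icc_self ht)).continuousWithinAt.mono Ioc_subset_Icc_self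
  refine antitoneOn_of_hasDerivWithinAt_nonpos (convex_Ioc 0 1)
    ((hJc.div continuousOn_id fun s hs => hs.1.ne').mul
      (continuousOn_momentGap hκ zero_le_one).neg.rexp)
    (f' := fun s => Real.exp (-momentGap κ s) / s ^ 2 *
      ((s * J' s - J s) - J s / s * secondMoment κ s))
    (fun s hs => ?_) (fun s hs => ?_) <;> rw [interior_Ioc] at hs
  · rw [interior_Ioc]
    refine ((((hJ s (Ioo_subset_Icc_self hs)).hasDerivAt_of_mem_Ioo hs).div (hasDerivAt_id' s)
      hs.1.ne').mul (hasDerivAt_momentGap hκ hs).neg.exp).hasDerivWithinAt.congr_deriv ?_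
    simp only [Pi.neg_apply, Pi.div_apply]
    have := hs.1.ne'
    field_simp
    ring
  · exact mul_nonpos_of_nonneg_of_nonpos (by positivity) (sub_nonpos.2
      (wronskian_le_secondMoment hκ hJ hJ' hJ0 hJpos (Ioo_subset_Ioc_self hs)))

theorem exp_neg_firstMoment_mul_le_div_self (hκ : ContinuousOn κ (Icc 0 1))
    (hJ : ∀ s ∈ Icc (0:ℝ) 1, HasDerivWithinAt J (J' s) (Icc 0 1) s)
    (hJ' : ∀ s ∈ Icc (0:ℝ) 1, HasDerivWithinAt J' (κ s ^ 2 * J s) (Icc 0 1) s)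
    (hJ0 : J 0 = 0) (hJpos : ∀ s ∈ Ioc (0:ℝ) 1, 0 < J s) {s : ℝ} (hs : s ∈ Ioc (0:ℝ) 1) :
    Real.exp (-firstMoment κ 1) * J 1 ≤ J s / s := by
  have hJs := hJpos s hs
  calc Real.exp (-firstMoment κ 1) * J 1 ≤ J 1 / 1 * Real.exp (-momentGap κ 1) := by
        rw [div_one, mul_comm]
        gcongr
        · exact (hJpos 1 ⟨one_pos, le_rfl⟩).le
        · exact momentGap_le_firstMoment zero_le_one
    _ ≤ J s / s * Real.exp (-momentGap κ s) :=
        antitoneOn_div_self_mul_exp_neg_momentGap hκ hJ hJ' hJ0 hJpos hs ⟨one_pos, le_rfl⟩ hs.2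
    _ ≤ J s / s := mul_le_of_le_one_right (div_nonneg hJs.le hs.1.le)
        (Real.exp_le_one_iff.2 (neg_nonpos.2
          (momentGap_nonneg (hκ.mono (Icc_subset_Icc le_rfl hs.2)) hs.1)))

end JacobiEquation

theorem stmt_13 (κ J J' : ℝ → ℝ)
    (hκc : ContinuousOn κ (Set.Icc 0 1))
    (hd1 : ∀ s ∈ Set.Icc (0:ℝ) 1, HasDerivWithinAt J (J' s) (Set.Icc 0 1) s)
    (hd2 : ∀ s ∈ Set.Icc (0:ℝ) 1, HasDerivWithinAt J' (κ s ^ 2 * J s) (Set.Icc 0 1) s)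
    (hJ0 : J 0 = 0) (hJ'1 : J' 1 = 1)
    (hJpos : ∀ s ∈ Set.Ioc (0:ℝ) 1, 0 < J s) :
    Real.exp (-(∫ s in (0:ℝ)..1, s * κ s ^ 2)) / (1 + ∫ s in (0:ℝ)..1, s * κ s ^ 2) ≤ J' 0 := by
  have hJ1 : 1 / (1 + firstMoment κ 1) ≤ J 1 :=
    one_div_one_add_firstMoment_le hκc hd1 hd2 hJ0 hJ'1 hJpos
  have hslope : Real.exp (-firstMoment κ 1) * J 1 ≤ J' 0 :=
    le_of_hasDerivWithinAt_of_le_div_self one_pos (hd1 0 ⟨le_rfl, zero_le_one⟩) hJ0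
      fun s hs => exp_neg_firstMoment_mul_le_div_self hκc hd1 hd2 hJ0 hJpos hs
  calc Real.exp (-firstMoment κ 1) / (1 + firstMoment κ 1)
      = Real.exp (-firstMoment κ 1) * (1 / (1 + firstMoment κ 1)) := by ring
    _ ≤ Real.exp (-firstMoment κ 1) * J 1 := by gcongr
    _ ≤ J' 0 := hslope
end

section
/- Let n ≥ 1 and suppose a chain configuration satisfies αᵢ = ⟨∇₊ηᵢ, ∇₊η_{i+1}⟩ > 0 for all 1 ≤ i ≤ n−1, with |∇₊ηᵢ| = 1 for all i. Define β_n = 1, βᵢ = 2 − αᵢ²/β_{i+1}, p_{ij} = ∏_{m=i}^{j-1} (α_m/β_{m+1}), and G_{kj} = (1/n) ∑_{i=1}^{min{j,k}} p_{ij} p_{ik}/βᵢ. Then G_{kj} > 0 for all 1 ≤ j, k ≤ n. -/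
/-! The continued-fraction recursion `βᵢ = 2 - αᵢ² / βᵢ₊₁` started at `βₙ = 1` keeps every `βᵢ ≥ 1`
as long as `αᵢ² ≤ 1`, which holds by Cauchy–Schwarz since the links are unit vectors. Hence all
`βᵢ` are positive, the products `p i j` of the positive factors `αₘ / βₘ₊₁` are positive, and so
is every summand of `G k j`; the sum is nonempty because it contains the term `i = 1`. -/

lemma sq_inner_le_one_of_norm_eq_one {E : Type*} [NormedAddCommGroup E] [InnerProductSpace ℝ E]
    {x y : E} (hx : ‖x‖ = 1) (hy : ‖y‖ = 1) : inner ℝ x y ^ 2 ≤ 1 := by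
  have h := abs_real_inner_le_norm x y
  rw [hx, hy, mul_one] at h
  exact sq_le_one_iff_abs_le_one _ |>.mpr h

lemma one_le_of_eq_two_sub_div {β a : ℕ → ℝ} {m n : ℕ} (hβn : 1 ≤ β n)
    (ha : ∀ i, m ≤ i → i < n → a i ≤ 1)
    (hβ : ∀ i, m ≤ i → i < n → β i = 2 - a i / β (i + 1)) :
    ∀ i, m ≤ i → i ≤ n → 1 ≤ β i := by
  intro i hmi hin
  induction hin using Nat.decreasingInduction with
  | self => exact hβn
  | of_succ i hin ih =>
    have hpos : 0 < β (i + 1) := by linarith [ih (by omega)]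
    have hdiv : a i / β (i + 1) ≤ 1 := by
      rw [div_le_one hpos]
      linarith [ha i hmi hin, ih (by omega)]
    rw [hβ i hmi hin]
    linarith

theorem stmt_15_general (n d : ℕ)
    (v : ℕ → EuclideanSpace ℝ (Fin d))
    (hv : ∀ i, 1 ≤ i → i ≤ n → ‖v i‖ = 1)
    (α : ℕ → ℝ)
    (hα : ∀ i, α i = (inner ℝ (v i) (v (i + 1)) : ℝ))
    (hαpos : ∀ i, 1 ≤ i → i ≤ n - 1 → 0 < α i)
    (β : ℕ → ℝ) (hβn : β n = 1)
    (hβ : ∀ i, 1 ≤ i → i ≤ n - 1 → β i = 2 - (α i)^2 / β (i + 1))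
    (p : ℕ → ℕ → ℝ)
    (hp : ∀ i j, p i j = ∏ m ∈ Finset.Ico i j, α m / β (m + 1))
    (G : ℕ → ℕ → ℝ)
    (hG : ∀ k j, G k j = (1 / (n : ℝ)) * ∑ i ∈ Finset.Icc 1 (min j k), p i j * p i k / β i) :
    ∀ j k, 1 ≤ j → j ≤ n → 1 ≤ k → k ≤ n → 0 < G k j := by
  have hβ_one_le : ∀ i, 1 ≤ i → i ≤ n → 1 ≤ β i :=
    one_le_of_eq_two_sub_div (a := fun i ↦ α i ^ 2) hβn.ge
      (fun i hi hin ↦ hα i ▸ sq_inner_le_one_of_norm_eq_one (hv i hi hin.le) (hv (i + 1) (by omega) hin))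
      (fun i hi hin ↦ hβ i hi (by omega))
  have hβ_pos : ∀ i, 1 ≤ i → i ≤ n → 0 < β i := fun i hi hin ↦
    zero_lt_one.trans_le (hβ_one_le i hi hin)
  have hp_pos : ∀ i j, 1 ≤ i → j ≤ n → 0 < p i j := by
    intro i j hi hj
    rw [hp]
    refine Finset.prod_pos fun m hm ↦ ?_
    rw [Finset.mem_Ico] at hm
    exact div_pos (hαpos m (by omega) (by omega)) (hβ_pos (m + 1) (by omega) (by omega))
  intro j k hj1 hjn hk1 hkn
  have hn : (0 : ℝ) < n := by exact_mod_cast (by omega : 0 < n)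
  rw [hG]
  refine mul_pos (one_div_pos.mpr hn) (Finset.sum_pos (fun i hi ↦ ?_) ⟨1, by simp [hj1, hk1]⟩)
  rw [Finset.mem_Icc] at hi
  exact div_pos (mul_pos (hp_pos i j hi.1 hjn) (hp_pos i k hi.1 hkn)) (hβ_pos i hi.1 (by omega))

theorem stmt_15 (n d : ℕ) (hn : 1 ≤ n)
    (v : ℕ → EuclideanSpace ℝ (Fin d))
    (hv : ∀ i, 1 ≤ i → i ≤ n → ‖v i‖ = 1)
    (α : ℕ → ℝ)
    (hα : ∀ i, α i = (inner ℝ (v i) (v (i + 1)) : ℝ))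
    (hαpos : ∀ i, 1 ≤ i → i ≤ n - 1 → 0 < α i)
    (β : ℕ → ℝ) (hβn : β n = 1)
    (hβ : ∀ i, 1 ≤ i → i ≤ n - 1 → β i = 2 - (α i)^2 / β (i + 1))
    (p : ℕ → ℕ → ℝ)
    (hp : ∀ i j, p i j = ∏ m ∈ Finset.Ico i j, α m / β (m + 1))
    (G : ℕ → ℕ → ℝ)
    (hG : ∀ k j, G k j = (1 / (n : ℝ)) * ∑ i ∈ Finset.Icc 1 (min j k), p i j * p i k / β i) :
    ∀ j k, 1 ≤ j → j ≤ n → 1 ≤ k → k ≤ n → 0 < G k j :=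
  stmt_15_general n d v hv α hα hαpos β hβn hβ p hp G hG
end
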